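/- arXiv:1509.01177 — 9 statements merged into one kernel-verified Lean document; each statement's English description precedes it below -/
import Mathlib

section
/- For all integers i, j one has ∫_{ℚ_p} φ_i(x)·φ_j(x)·u(x) dμ(x) = 1 if i = j and = 0 if i ≠ j; that is, the family (φ_i)_{i∈ℤ} is orthonormal in L²(ℚ_p, u(x)dμ(x)). -/
open MeasureTheory

/-- `Ω(r) = 1` for `r ≤ 1` and `Ω(r) = 0` for `r > 1`. -/
noncomputable def Omega (r : ℝ) : ℝ := if r ≤ 1 then 1 else 0

lemma Omega_nonneg (r : ℝ) : 0 ≤ Omega r := by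
  unfold Omega; split <;> norm_num

lemma Omega_eq (p : ℕ) [Fact p.Prime] (a : ℤ) (x : ℚ_[p]) :
    Omega (‖x‖ * (p : ℝ) ^ (-a)) = if ‖x‖ ≤ (p : ℝ) ^ a then 1 else 0 := by
  have hp : (1 : ℝ) < p := by exact_mod_cast (Fact.out : p.Prime).one_lt
  have hpa : (0 : ℝ) < (p : ℝ) ^ a := zpow_pos (by linarith) a
  unfold Omega
  rw [zpow_neg, ← div_eq_mul_inv]
  simp only [div_le_one hpa]

lemma Omega_mul (p : ℕ) [Fact p.Prime] {a b : ℤ} (hab : a ≤ b) (x : ℚ_[p]) :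
    Omega (‖x‖ * (p : ℝ) ^ (-a)) * Omega (‖x‖ * (p : ℝ) ^ (-b))
      = Omega (‖x‖ * (p : ℝ) ^ (-a)) := by
  have hp : (1 : ℝ) < p := by exact_mod_cast (Fact.out : p.Prime).one_lt
  simp only [Omega_eq]
  have hmono : (p : ℝ) ^ a ≤ (p : ℝ) ^ b := zpow_le_zpow_right₀ hp.le hab
  by_cases h1 : ‖x‖ ≤ (p : ℝ) ^ a
  · rw [if_pos h1, if_pos (h1.trans hmono)]; ring
  · rw [if_neg h1]; ring

/-- the family `(φ_i)_{i∈ℤ}` is orthonormal in `L²(ℚ_p, u(x)dμ(x))`. -/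
theorem padic_basis_orthonormal
    (p : ℕ) [Fact p.Prime]
    [MeasurableSpace ℚ_[p]] [BorelSpace ℚ_[p]]
    (μ : Measure ℚ_[p]) [μ.IsAddHaarMeasure]
    (hμ : μ (Metric.closedBall 0 1) = 1)
    (u : ℚ_[p] → ℝ) (hu_pos : ∀ x : ℚ_[p], 0 < u x)
    (hu_loc : LocallyIntegrable u μ)
    (V : ℤ → ℝ)
    (hVint : ∀ i : ℤ, Integrable (fun y : ℚ_[p] => u y * Omega (‖y‖ * (p : ℝ) ^ (-i))) μ)
    (hV : ∀ i : ℤ, V i = ∫ y : ℚ_[p], u y * Omega (‖y‖ * (p : ℝ) ^ (-i)) ∂μ)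
    (hVmono : ∀ i : ℤ, V (i - 1) < V i)
    (φ : ℤ → ℚ_[p] → ℝ)
    (hφ : ∀ (i : ℤ) (x : ℚ_[p]), φ i x =
      (V (i - 1) * (1 - V (i - 1) / V i)) ^ (-(1 / 2 : ℝ)) *
        (Omega (‖x‖ * (p : ℝ) ^ (-i + 1)) - V (i - 1) / V i * Omega (‖x‖ * (p : ℝ) ^ (-i)))) :
    ∀ i j : ℤ,
      ∫ x : ℚ_[p], φ i x * φ j x * u x ∂μ = if i = j then 1 else 0 := by
  have hVpos : ∀ a : ℤ, 0 < V a := by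
    intro a
    have h0 : 0 ≤ V (a - 1) := by
      rw [hV]
      exact integral_nonneg fun y => mul_nonneg (hu_pos y).le (Omega_nonneg _)
    linarith [hVmono a]
  have hint : ∀ (A B : ℝ) (a b : ℤ),
      (∫ x : ℚ_[p], (A * (u x * Omega (‖x‖ * (p : ℝ) ^ (-a)))
          + B * (u x * Omega (‖x‖ * (p : ℝ) ^ (-b)))) ∂μ) = A * V a + B * V b := by
    intro A B a b
    rw [integral_add ((hVint a).const_mul A) ((hVint b).const_mul B),
      integral_const_mul, integral_const_mul, ← hV a, ← hV b]
  have key : ∀ i j : ℤ, i ≤ j →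
      (∫ x : ℚ_[p], φ i x * φ j x * u x ∂μ) = if i = j then 1 else 0 := by
    intro i j hij
    rcases eq_or_lt_of_le hij with heq | hlt
    · subst heq
      rw [if_pos rfl]
      set c := (V (i - 1) * (1 - V (i - 1) / V i)) ^ (-(1 / 2 : ℝ)) with hc
      set r := V (i - 1) / V i with hr
      have hpt : ∀ x : ℚ_[p], φ i x * φ i x * u x
          = (c * c * (1 - 2 * r)) * (u x * Omega (‖x‖ * (p : ℝ) ^ (-(i - 1))))
            + (c * c * (r * r)) * (u x * Omega (‖x‖ * (p : ℝ) ^ (-i))) := by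
        intro x
        rw [hφ i x, show (-i + 1 : ℤ) = -(i - 1) by ring]
        have m1 := Omega_mul p (le_refl (i - 1)) x
        have m2 := Omega_mul p (show i - 1 ≤ i by omega) x
        have m3 := Omega_mul p (le_refl i) x
        set X := Omega (‖x‖ * (p : ℝ) ^ (-(i - 1)))
        set Y := Omega (‖x‖ * (p : ℝ) ^ (-i))
        linear_combination (c * c * u x) * m1 - (2 * r * c * c * u x) * m2
          + (r * r * c * c * u x) * m3
      simp only [hpt]
      rw [hint]
      have hr1 : r < 1 := (div_lt_one (hVpos i)).mpr (hVmono i)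
      have hA : 0 < V (i - 1) * (1 - r) := mul_pos (hVpos (i - 1)) (by linarith)
      have hcc : c * c = (V (i - 1) * (1 - r))⁻¹ := by
        rw [hc, ← Real.rpow_add hA,
          show (-(1 / 2 : ℝ)) + -(1 / 2) = -(1 : ℝ) by norm_num,
          Real.rpow_neg hA.le, Real.rpow_one]
      have h1 : V i ≠ 0 := (hVpos i).ne'
      have hsum : (1 - 2 * r) * V (i - 1) + (r * r) * V i = V (i - 1) * (1 - r) := by
        rw [hr]; field_simp; ring
      calc c * c * (1 - 2 * r) * V (i - 1) + c * c * (r * r) * V i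
          = c * c * ((1 - 2 * r) * V (i - 1) + (r * r) * V i) := by ring
        _ = (V (i - 1) * (1 - r))⁻¹ * (V (i - 1) * (1 - r)) := by rw [hsum, hcc]
        _ = 1 := inv_mul_cancel₀ hA.ne'
    · rw [if_neg hlt.ne]
      set ci := (V (i - 1) * (1 - V (i - 1) / V i)) ^ (-(1 / 2 : ℝ)) with hci
      set cj := (V (j - 1) * (1 - V (j - 1) / V j)) ^ (-(1 / 2 : ℝ)) with hcj
      set ri := V (i - 1) / V i with hri
      set rj := V (j - 1) / V j with hrj
      have hpt : ∀ x : ℚ_[p], φ i x * φ j x * u x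
          = (ci * cj * (1 - rj)) * (u x * Omega (‖x‖ * (p : ℝ) ^ (-(i - 1))))
            + (ci * cj * (ri * rj - ri)) * (u x * Omega (‖x‖ * (p : ℝ) ^ (-i))) := by
        intro x
        rw [hφ i x, hφ j x, show (-i + 1 : ℤ) = -(i - 1) by ring,
          show (-j + 1 : ℤ) = -(j - 1) by ring]
        have mXZ := Omega_mul p (show i - 1 ≤ j - 1 by omega) x
        have mXW := Omega_mul p (show i - 1 ≤ j by omega) x
        have mYZ := Omega_mul p (show i ≤ j - 1 by omega) x
        have mYW := Omega_mul p (show i ≤ j by omega) x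
        set X := Omega (‖x‖ * (p : ℝ) ^ (-(i - 1)))
        set Y := Omega (‖x‖ * (p : ℝ) ^ (-i))
        set Z := Omega (‖x‖ * (p : ℝ) ^ (-(j - 1)))
        set W := Omega (‖x‖ * (p : ℝ) ^ (-j))
        linear_combination (ci * cj * u x) * mXZ - (rj * ci * cj * u x) * mXW
          - (ri * ci * cj * u x) * mYZ + (ri * rj * ci * cj * u x) * mYW
      simp only [hpt]
      rw [hint]
      have h1 : V i ≠ 0 := (hVpos i).ne'
      have h2 : V j ≠ 0 := (hVpos j).ne'
      have hsum : (1 - rj) * V (i - 1) + (ri * rj - ri) * V i = 0 := by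
        rw [hri, hrj]; field_simp; ring
      calc ci * cj * (1 - rj) * V (i - 1) + ci * cj * (ri * rj - ri) * V i
          = ci * cj * ((1 - rj) * V (i - 1) + (ri * rj - ri) * V i) := by ring
        _ = 0 := by rw [hsum]; ring
  intro i j
  rcases le_total i j with h | h
  · exact key i j h
  · have hcomm : ∀ x : ℚ_[p], φ i x * φ j x * u x = φ j x * φ i x * u x := fun x => by ring
    simp only [hcomm]
    rw [key j i h]
    by_cases hji : i = j
    · simp [hji]
    · rw [if_neg (fun hh => hji hh.symm), if_neg hji]
end

section
/- Assume additionally that u is radial (u(x) depends only on |x|_p), that α > 0, and that Σ_{j=i}^{∞} p^{−j(α+1)}·V_j < ∞ for every i ∈ ℤ. Then for every i ∈ ℤ and every x ∈ ℚ_p the function y ↦ u(y)·(φ_i(y) − φ_i(x))/|x − y|_p^{α+1} is μ-integrable on ℚ_p and ∫_{ℚ_p} u(y)·(φ_i(y) − φ_i(x))/|x − y|_p^{α+1} dμ(y) = κ_i·φ_i(x), where κ_i = −(1 − p^{−(α+1)})·Σ_{j=i}^{∞} p^{−j(α+1)}·V_j; that is, the functions φ_i are eigenfunctions of the Vladimirov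 operator with measure u(y)dμ(y), with eigenvalues κ_i. -/
/-!
Write `B_m` for the ball `‖y‖ ≤ p ^ m` and `β = α + 1`. Up to the factor
`(V_{i-1} (1 - V_{i-1}/V_i))^{-1/2}`, `φ_i = 1_{B_{i-1}} - (V_{i-1}/V_i) 1_{B_i}`, so by linearity
it suffices to integrate against `u` the Vladimirov difference quotient of a ball indicator
`1_{B_m}`. All triangles are isosceles, so `‖x - y‖ = max ‖x‖ ‖y‖` whenever `x` and `y` lie on
different sides of the boundary of `B_m`. For `x ∉ B_m` the integral is therefore `V_m / ‖x‖^β`.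
For `x ∈ B_m` it is `-∫_{‖y‖ > p^m} u(y) ‖y‖^{-β}`; splitting this region into the spheres
`‖y‖ = p^j`, `j > m`, and summing by parts gives `κ_m + p^{-mβ} V_m`. In the combination the terms
`p^{-iβ} V_{i-1}` cancel, because `φ_i` has `u`-mean zero: `V_{i-1} - (V_{i-1}/V_i) V_i = 0`.
-/

open MeasureTheory

open Metric

lemma Omega_norm_mul_zpow_neg {E : Type*} [SeminormedAddCommGroup E] {b : ℝ} (hb : 0 < b)
    (x : E) (j : ℤ) : Omega (‖x‖ * b ^ (-j)) = (closedBall (0 : E) (b ^ j)).indicator 1 x := by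
  simp [Omega, Set.indicator, zpow_neg, ← div_eq_mul_inv, div_le_one (zpow_pos hb j)]

lemma mul_Omega_norm_mul_zpow_neg {E : Type*} [SeminormedAddCommGroup E] {b : ℝ} (hb : 0 < b)
    (u : E → ℝ) (j : ℤ) :
    (fun y => u y * Omega (‖y‖ * b ^ (-j))) = (closedBall (0 : E) (b ^ j)).indicator u := by
  ext y
  rw [Omega_norm_mul_zpow_neg hb]
  by_cases hy : y ∈ closedBall (0 : E) (b ^ j) <;> simp [hy]

noncomputable def vladimirovIntegrand {E : Type*} [Norm E] [Sub E] (u : E → ℝ) (β : ℝ)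
    (f : E → ℝ) (x y : E) : ℝ :=
  u y * (f y - f x) / ‖x - y‖ ^ β

lemma vladimirovIntegrand_const_mul_sub {E : Type*} [Norm E] [Sub E] (u : E → ℝ) (β c r : ℝ)
    (f g : E → ℝ) (x : E) :
    vladimirovIntegrand u β (fun y => c * (f y - r * g y)) x =
      fun y => c * (vladimirovIntegrand u β f x y - r * vladimirovIntegrand u β g x y) := by
  ext y
  simp only [vladimirovIntegrand]
  ring

section Ultrametric

variable {E : Type*} [NormedAddCommGroup E] [IsUltrametricDist E] {u : E → ℝ} {β r : ℝ} {x : E}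

lemma IsUltrametricDist.norm_sub_eq_max_of_norm_ne_norm {x y : E} (h : ‖x‖ ≠ ‖y‖) :
    ‖x - y‖ = max ‖x‖ ‖y‖ := by
  simpa [sub_eq_add_neg] using
    norm_add_eq_max_of_norm_ne_norm (x := x) (y := -y) (by simpa using h)

lemma vladimirovIntegrand_indicator_closedBall_of_notMem (hx : x ∉ closedBall 0 r) :
    vladimirovIntegrand u β ((closedBall 0 r).indicator 1) x =
      fun y => (‖x‖ ^ β)⁻¹ * (closedBall 0 r).indicator u y := by
  ext y
  rw [mem_closedBall_zero_iff, not_le] at hx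
  by_cases hy : y ∈ closedBall 0 r
  · have hyx : ‖y‖ < ‖x‖ := (mem_closedBall_zero_iff.mp hy).trans_lt hx
    rw [vladimirovIntegrand, IsUltrametricDist.norm_sub_eq_max_of_norm_ne_norm hyx.ne',
      max_eq_left hyx.le]
    simp [Set.indicator_of_mem hy, mem_closedBall_zero_iff.not.mpr hx.not_ge, div_eq_inv_mul]
  · simp [vladimirovIntegrand, Set.indicator_of_notMem hy,
      mem_closedBall_zero_iff.not.mpr hx.not_ge]

lemma vladimirovIntegrand_indicator_closedBall_of_mem (hx : x ∈ closedBall 0 r) :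
    vladimirovIntegrand u β ((closedBall 0 r).indicator 1) x =
      fun y => -(closedBall 0 r)ᶜ.indicator (fun y => u y / ‖y‖ ^ β) y := by
  ext y
  by_cases hy : y ∈ closedBall 0 r
  · simp [vladimirovIntegrand, Set.indicator_of_mem hx, hy]
  · have hxy : ‖x‖ < ‖y‖ :=
      (mem_closedBall_zero_iff.mp hx).trans_lt (not_le.mp (mem_closedBall_zero_iff.not.mp hy))
    rw [vladimirovIntegrand, IsUltrametricDist.norm_sub_eq_max_of_norm_ne_norm hxy.ne,
      max_eq_right hxy.le]
    simp [Set.indicator_of_mem hx, hy, neg_div]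

variable [MeasurableSpace E] [OpensMeasurableSpace E] {μ : Measure E}

theorem integrable_vladimirovIntegrand_indicator_closedBall_of_notMem
    (hu : IntegrableOn u (closedBall 0 r) μ) (hx : x ∉ closedBall 0 r) :
    Integrable (vladimirovIntegrand u β ((closedBall 0 r).indicator 1) x) μ ∧
      ∫ y, vladimirovIntegrand u β ((closedBall 0 r).indicator 1) x y ∂μ =
        (∫ y in closedBall 0 r, u y ∂μ) / ‖x‖ ^ β := by
  rw [vladimirovIntegrand_indicator_closedBall_of_notMem hx]
  refine ⟨((integrable_indicator_iff measurableSet_closedBall).mpr hu).const_mul _, ?_⟩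
  rw [integral_const_mul, integral_indicator measurableSet_closedBall, inv_mul_eq_div]

theorem integrable_vladimirovIntegrand_indicator_closedBall_of_mem
    (hu : IntegrableOn (fun y => u y / ‖y‖ ^ β) (closedBall 0 r)ᶜ μ) (hx : x ∈ closedBall 0 r) :
    Integrable (vladimirovIntegrand u β ((closedBall 0 r).indicator 1) x) μ ∧
      ∫ y, vladimirovIntegrand u β ((closedBall 0 r).indicator 1) x y ∂μ =
        -∫ y in (closedBall 0 r)ᶜ, u y / ‖y‖ ^ β ∂μ := by
  rw [vladimirovIntegrand_indicator_closedBall_of_mem hx]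
  refine ⟨((integrable_indicator_iff measurableSet_closedBall.compl).mpr hu).neg, ?_⟩
  rw [integral_neg, integral_indicator measurableSet_closedBall.compl]

end Ultrametric

/-- The eigenvalue `κ_m` of the paper is `-(1 - p^{-β}) * weightedTail p β V m`. -/
noncomputable def weightedTail (b β : ℝ) (V : ℤ → ℝ) (m : ℤ) : ℝ :=
  ∑' n : ℕ, b ^ (-((m + n : ℤ) : ℝ) * β) * V (m + n)

section WeightedTail

variable {b β : ℝ} {V : ℤ → ℝ}

lemma rpow_neg_intCast_mul_of_eq_add_one (hb : 0 < b) {j k : ℤ} (h : j = k + 1) :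
    b ^ (-(j : ℝ) * β) = b ^ (-β) * b ^ (-(k : ℝ) * β) := by
  rw [← Real.rpow_add hb, h]
  push_cast
  ring_nf

lemma weightedTail_eq_add {m : ℤ}
    (h : Summable fun n : ℕ => b ^ (-((m + n : ℤ) : ℝ) * β) * V (m + n)) :
    weightedTail b β V m = b ^ (-(m : ℝ) * β) * V m + weightedTail b β V (m + 1) := by
  rw [weightedTail, h.tsum_eq_zero_add, weightedTail]
  congr 1
  · simp
  · congr! 4 <;> push_cast <;> ring

lemma hasSum_shell_weightedTail (hb : 0 < b)
    (h : ∀ j : ℤ, Summable fun n : ℕ => b ^ (-((j + n : ℤ) : ℝ) * β) * V (j + n)) (m : ℤ) :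
    HasSum (fun n : ℕ => b ^ (-((m + 1 + n : ℤ) : ℝ) * β) * (V (m + 1 + n) - V (m + n)))
      ((1 - b ^ (-β)) * weightedTail b β V m - b ^ (-(m : ℝ) * β) * V m) := by
  have hsum := (h (m + 1)).hasSum.sub ((h m).hasSum.mul_left (b ^ (-β)))
  rw [← weightedTail, ← weightedTail] at hsum
  have hval : (1 - b ^ (-β)) * weightedTail b β V m - b ^ (-(m : ℝ) * β) * V m =
      weightedTail b β V (m + 1) - b ^ (-β) * weightedTail b β V m := by
    rw [weightedTail_eq_add (h m)]
    ring
  rw [hval]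
  refine hsum.congr_fun fun n => ?_
  rw [rpow_neg_intCast_mul_of_eq_add_one hb (j := m + 1 + n) (k := m + n) (by ring)]
  ring

end WeightedTail

namespace Padic

variable {p : ℕ} [Fact p.Prime]

lemma sphere_zpow_eq_closedBall_diff (j : ℤ) :
    sphere (0 : ℚ_[p]) ((p : ℝ) ^ j) =
      closedBall 0 ((p : ℝ) ^ j) \ closedBall 0 ((p : ℝ) ^ (j - 1)) := by
  ext y
  simp only [mem_sphere_zero_iff_norm, Set.mem_sdiff, mem_closedBall_zero_iff,
    ← norm_lt_pow_iff_norm_le_pow_sub_one, not_lt]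
  exact ⟨fun h => ⟨h.le, h.ge⟩, fun h => le_antisymm h.1 h.2⟩

lemma iUnion_sphere_zpow_eq_compl_closedBall (m : ℤ) :
    ⋃ n : ℕ, sphere (0 : ℚ_[p]) ((p : ℝ) ^ (m + 1 + n)) = (closedBall 0 ((p : ℝ) ^ m))ᶜ := by
  have hp : (1 : ℝ) < p := Nat.one_lt_cast.mpr (Fact.out : p.Prime).one_lt
  ext y
  simp only [Set.mem_iUnion, mem_sphere_zero_iff_norm, Set.mem_compl_iff, mem_closedBall_zero_iff,
    not_le]
  constructor
  · rintro ⟨n, hn⟩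
    rw [hn]
    exact zpow_lt_zpow_right₀ hp (by omega)
  · intro hy
    have hy0 : y ≠ 0 := by
      rintro rfl
      exact (norm_zero (E := ℚ_[p]) ▸ hy).not_ge (zpow_pos (by linarith) m).le
    rw [norm_eq_zpow_neg_valuation hy0] at hy ⊢
    have := (zpow_lt_zpow_iff_right₀ hp).mp hy
    exact ⟨(-y.valuation - m - 1).toNat, by congr 1; omega⟩

lemma div_norm_rpow_of_mem_sphere {j : ℤ} {y : ℚ_[p]} (hy : y ∈ sphere 0 ((p : ℝ) ^ j))
    (a β : ℝ) : a / ‖y‖ ^ β = (p : ℝ) ^ (-(j : ℝ) * β) * a := by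
  rw [mem_sphere_zero_iff_norm.mp hy, ← Real.rpow_intCast, ← Real.rpow_mul (Nat.cast_nonneg p),
    neg_mul, Real.rpow_neg (Nat.cast_nonneg p), div_eq_inv_mul]

variable [MeasurableSpace ℚ_[p]] [BorelSpace ℚ_[p]] {μ : Measure ℚ_[p]} {u : ℚ_[p] → ℝ} {β : ℝ}
  {V : ℤ → ℝ}

lemma integrableOn_sphere_zpow (hu : ∀ j : ℤ, IntegrableOn u (closedBall 0 ((p : ℝ) ^ j)) μ)
    (hV : ∀ j : ℤ, ∫ y in closedBall 0 ((p : ℝ) ^ j), u y ∂μ = V j) (j : ℤ) :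
    IntegrableOn (fun y => u y / ‖y‖ ^ β) (sphere 0 ((p : ℝ) ^ j)) μ ∧
      ∫ y in sphere 0 ((p : ℝ) ^ j), u y / ‖y‖ ^ β ∂μ =
        (p : ℝ) ^ (-(j : ℝ) * β) * (V j - V (j - 1)) := by
  have hu_sphere : IntegrableOn u (sphere 0 ((p : ℝ) ^ j)) μ :=
    (hu j).mono_set sphere_subset_closedBall
  have heq : Set.EqOn (fun y => u y / ‖y‖ ^ β) (fun y => (p : ℝ) ^ (-(j : ℝ) * β) * u y)
      (sphere 0 ((p : ℝ) ^ j)) := fun y hy => div_norm_rpow_of_mem_sphere hy _ _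
  refine ⟨IntegrableOn.congr_fun (hu_sphere.const_mul _) heq.symm isClosed_sphere.measurableSet,
    ?_⟩
  have hball : closedBall (0 : ℚ_[p]) ((p : ℝ) ^ (j - 1)) ⊆ closedBall 0 ((p : ℝ) ^ j) :=
    closedBall_subset_closedBall
      (zpow_le_zpow_right₀ (Nat.one_le_cast.mpr (Fact.out : p.Prime).one_le) (by omega))
  rw [setIntegral_congr_fun isClosed_sphere.measurableSet heq, integral_const_mul,
    sphere_zpow_eq_closedBall_diff, setIntegral_sdiff measurableSet_closedBall (hu j) hball, hV,
    hV]

theorem integrableOn_compl_closedBall_zpow (hu0 : 0 ≤ u)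
    (hu : ∀ j : ℤ, IntegrableOn u (closedBall 0 ((p : ℝ) ^ j)) μ)
    (hV : ∀ j : ℤ, ∫ y in closedBall 0 ((p : ℝ) ^ j), u y ∂μ = V j) {m : ℤ}
    (hsum : Summable fun n : ℕ =>
      (p : ℝ) ^ (-((m + 1 + n : ℤ) : ℝ) * β) * (V (m + 1 + n) - V (m + n))) :
    IntegrableOn (fun y => u y / ‖y‖ ^ β) (closedBall 0 ((p : ℝ) ^ m))ᶜ μ ∧
      HasSum (fun n : ℕ => (p : ℝ) ^ (-((m + 1 + n : ℤ) : ℝ) * β) * (V (m + 1 + n) - V (m + n)))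
        (∫ y in (closedBall 0 ((p : ℝ) ^ m))ᶜ, u y / ‖y‖ ^ β ∂μ) := by
  set S : ℕ → Set ℚ_[p] := fun n => sphere 0 ((p : ℝ) ^ (m + 1 + n))
  have hS : ∀ n : ℕ, IntegrableOn (fun y => u y / ‖y‖ ^ β) (S n) μ ∧
      ∫ y in S n, u y / ‖y‖ ^ β ∂μ =
        (p : ℝ) ^ (-((m + 1 + n : ℤ) : ℝ) * β) * (V (m + 1 + n) - V (m + n)) := fun n => by
    simpa only [show m + 1 + (n : ℤ) - 1 = m + n by ring] using
      integrableOn_sphere_zpow hu hV (m + 1 + n)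
  have hnorm : ∀ n, ∫ y in S n, ‖u y / ‖y‖ ^ β‖ ∂μ = ∫ y in S n, u y / ‖y‖ ^ β ∂μ := fun n =>
    integral_congr_ae (Filter.Eventually.of_forall fun y =>
      Real.norm_of_nonneg (div_nonneg (hu0 y) (Real.rpow_nonneg (norm_nonneg y) β)))
  have hdisj : Pairwise (Function.onFun Disjoint S) := fun a b hab =>
    Set.disjoint_left.mpr fun y hya hyb => hab <| by
      have := zpow_right_injective₀ (Nat.cast_pos.mpr (Fact.out : p.Prime).pos)
        (Nat.one_lt_cast.mpr (Fact.out : p.Prime).one_lt).ne'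
        ((mem_sphere_zero_iff_norm.mp hya).symm.trans (mem_sphere_zero_iff_norm.mp hyb))
      omega
  have hint : IntegrableOn (fun y => u y / ‖y‖ ^ β) (⋃ n, S n) μ :=
    integrableOn_iUnion_of_summable_integral_norm (fun n => (hS n).1)
      (by simpa only [hnorm, (hS _).2] using hsum)
  rw [← iUnion_sphere_zpow_eq_compl_closedBall]
  exact ⟨hint, (hasSum_integral_iUnion (fun _ => isClosed_sphere.measurableSet) hdisj
    hint).congr_fun fun n => (hS n).2.symm⟩

open scoped Classical in
theorem integrable_vladimirovIntegrand_indicator_closedBall_zpow (hu0 : 0 ≤ u)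
    (hu : ∀ j : ℤ, IntegrableOn u (closedBall 0 ((p : ℝ) ^ j)) μ)
    (hV : ∀ j : ℤ, ∫ y in closedBall 0 ((p : ℝ) ^ j), u y ∂μ = V j)
    (hVsum : ∀ j : ℤ, Summable fun n : ℕ => (p : ℝ) ^ (-((j + n : ℤ) : ℝ) * β) * V (j + n))
    (m : ℤ) (x : ℚ_[p]) :
    Integrable (vladimirovIntegrand u β ((closedBall 0 ((p : ℝ) ^ m)).indicator 1) x) μ ∧
      ∫ y, vladimirovIntegrand u β ((closedBall 0 ((p : ℝ) ^ m)).indicator 1) x y ∂μ =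
        if x ∈ closedBall 0 ((p : ℝ) ^ m) then
          -(1 - (p : ℝ) ^ (-β)) * weightedTail p β V m + (p : ℝ) ^ (-(m : ℝ) * β) * V m
        else V m / ‖x‖ ^ β := by
  split_ifs with hx
  · have hshell := hasSum_shell_weightedTail (Nat.cast_pos.mpr (Fact.out : p.Prime).pos) hVsum m
    obtain ⟨hint, hsum⟩ := integrableOn_compl_closedBall_zpow hu0 hu hV hshell.summable
    obtain ⟨hI, hval⟩ := integrable_vladimirovIntegrand_indicator_closedBall_of_mem hint hx
    refine ⟨hI, ?_⟩
    rw [hval, hsum.unique hshell]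
    ring
  · rw [← hV m]
    exact integrable_vladimirovIntegrand_indicator_closedBall_of_notMem (hu m) hx

theorem integrable_vladimirovIntegrand_basis (hu0 : 0 ≤ u)
    (hu : ∀ j : ℤ, IntegrableOn u (closedBall 0 ((p : ℝ) ^ j)) μ)
    (hV : ∀ j : ℤ, ∫ y in closedBall 0 ((p : ℝ) ^ j), u y ∂μ = V j)
    (hVsum : ∀ j : ℤ, Summable fun n : ℕ => (p : ℝ) ^ (-((j + n : ℤ) : ℝ) * β) * V (j + n))
    {i : ℤ} (hVi : V i ≠ 0) {c : ℝ} {f : ℚ_[p] → ℝ}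
    (hf : ∀ y, f y = c * ((closedBall 0 ((p : ℝ) ^ (i - 1))).indicator 1 y -
      V (i - 1) / V i * (closedBall 0 ((p : ℝ) ^ i)).indicator 1 y)) (x : ℚ_[p]) :
    Integrable (vladimirovIntegrand u β f x) μ ∧
      ∫ y, vladimirovIntegrand u β f x y ∂μ =
        (-(1 - (p : ℝ) ^ (-β)) * weightedTail p β V i) * f x := by
  have hp : (0 : ℝ) < p := Nat.cast_pos.mpr (Fact.out : p.Prime).pos
  obtain ⟨h₁, hI₁⟩ :=
    integrable_vladimirovIntegrand_indicator_closedBall_zpow hu0 hu hV hVsum (i - 1) x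
  obtain ⟨h₂, hI₂⟩ := integrable_vladimirovIntegrand_indicator_closedBall_zpow hu0 hu hV hVsum i x
  set r := V (i - 1) / V i
  rw [funext hf, vladimirovIntegrand_const_mul_sub]
  refine ⟨(h₁.sub (h₂.const_mul r)).const_mul c, ?_⟩
  rw [integral_const_mul, integral_sub h₁ (h₂.const_mul r), integral_const_mul, hI₁, hI₂]
  beta_reduce
  have hrV : r * V i = V (i - 1) := div_mul_cancel₀ _ hVi
  have hW := weightedTail_eq_add (hVsum (i - 1))
  rw [sub_add_cancel] at hW
  have hq := rpow_neg_intCast_mul_of_eq_add_one hp (β := β) (j := i) (k := i - 1) (by ring)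
  by_cases hx₁ : x ∈ closedBall 0 ((p : ℝ) ^ (i - 1))
  · have hx₂ : x ∈ closedBall 0 ((p : ℝ) ^ i) := closedBall_subset_closedBall
      (zpow_le_zpow_right₀ (Nat.one_le_cast.mpr (Fact.out : p.Prime).one_le) (by omega)) hx₁
    rw [if_pos hx₁, if_pos hx₂, Set.indicator_of_mem hx₁, Set.indicator_of_mem hx₂,
      Pi.one_apply]
    linear_combination -(c * (1 - (p : ℝ) ^ (-β))) * hW - c * V (i - 1) * hq -
      c * (p : ℝ) ^ (-(i : ℝ) * β) * hrV
  by_cases hx₂ : x ∈ closedBall 0 ((p : ℝ) ^ i)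
  · have hx : x ∈ sphere 0 ((p : ℝ) ^ i) := by
      rw [sphere_zpow_eq_closedBall_diff]
      exact ⟨hx₂, hx₁⟩
    rw [if_neg hx₁, if_pos hx₂, Set.indicator_of_notMem hx₁, Set.indicator_of_mem hx₂,
      Pi.one_apply, div_norm_rpow_of_mem_sphere hx]
    linear_combination -(c * (p : ℝ) ^ (-(i : ℝ) * β)) * hrV
  · rw [if_neg hx₁, if_neg hx₂, Set.indicator_of_notMem hx₁, Set.indicator_of_notMem hx₂]
    linear_combination -(c / ‖x‖ ^ β) * hrV

end Padic

theorem padic_basis_eigenfunctions_general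
    (p : ℕ) [Fact p.Prime]
    [MeasurableSpace ℚ_[p]] [BorelSpace ℚ_[p]]
    (μ : Measure ℚ_[p])
    (u : ℚ_[p] → ℝ) (hu_pos : ∀ x : ℚ_[p], 0 < u x)
    (α : ℝ)
    (V : ℤ → ℝ)
    (hVint : ∀ i : ℤ, Integrable (fun y : ℚ_[p] => u y * Omega (‖y‖ * (p : ℝ) ^ (-i))) μ)
    (hV : ∀ i : ℤ, V i = ∫ y : ℚ_[p], u y * Omega (‖y‖ * (p : ℝ) ^ (-i)) ∂μ)
    (hVmono : ∀ i : ℤ, V (i - 1) < V i)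
    (hVsum : ∀ i : ℤ, Summable (fun n : ℕ =>
      (p : ℝ) ^ (-(((i + n : ℤ) : ℝ)) * (α + 1)) * V (i + n)))
    (φ : ℤ → ℚ_[p] → ℝ)
    (hφ : ∀ (i : ℤ) (x : ℚ_[p]), φ i x =
      (V (i - 1) * (1 - V (i - 1) / V i)) ^ (-(1 / 2 : ℝ)) *
        (Omega (‖x‖ * (p : ℝ) ^ (-i + 1)) - V (i - 1) / V i * Omega (‖x‖ * (p : ℝ) ^ (-i)))) :
    ∀ (i : ℤ) (x : ℚ_[p]),
      Integrable (fun y : ℚ_[p] => u y * (φ i y - φ i x) / ‖x - y‖ ^ (α + 1)) μ ∧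
      ∫ y : ℚ_[p], u y * (φ i y - φ i x) / ‖x - y‖ ^ (α + 1) ∂μ =
        (-(1 - (p : ℝ) ^ (-(α + 1))) *
          ∑' n : ℕ, (p : ℝ) ^ (-(((i + n : ℤ) : ℝ)) * (α + 1)) * V (i + n)) * φ i x := by
  intro i x
  have hp : (0 : ℝ) < p := Nat.cast_pos.mpr (Fact.out : p.Prime).pos
  have hu : ∀ j : ℤ, IntegrableOn u (closedBall 0 ((p : ℝ) ^ j)) μ := fun j =>
    (integrable_indicator_iff measurableSet_closedBall).mp
      (mul_Omega_norm_mul_zpow_neg hp u j ▸ hVint j)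
  have hVball : ∀ j : ℤ, ∫ y in closedBall 0 ((p : ℝ) ^ j), u y ∂μ = V j := fun j => by
    rw [hV, mul_Omega_norm_mul_zpow_neg hp, integral_indicator measurableSet_closedBall]
  have hVi : V i ≠ 0 := ((hVball (i - 1)).symm ▸ setIntegral_nonneg measurableSet_closedBall
    fun y _ => (hu_pos y).le).trans_lt (hVmono i) |>.ne'
  have hφi : ∀ y, φ i y = _ * ((closedBall 0 ((p : ℝ) ^ (i - 1))).indicator 1 y -
      V (i - 1) / V i * (closedBall 0 ((p : ℝ) ^ i)).indicator 1 y) := fun y => by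
    rw [hφ, show -i + 1 = -(i - 1) by ring, Omega_norm_mul_zpow_neg hp,
      Omega_norm_mul_zpow_neg hp]
  exact Padic.integrable_vladimirovIntegrand_basis (fun y => (hu_pos y).le) hu hVball hVsum hVi
    hφi x

/-- for radial `u`, the functions `φ_i` are eigenfunctions of the Vladimirov
operator with measure `u(y)dμ(y)`, with eigenvalues
`κ_i = -(1 - p^{-(α+1)}) Σ_{j=i}^∞ p^{-j(α+1)} V_j`. -/
theorem padic_basis_eigenfunctions
    (p : ℕ) [Fact p.Prime]
    [MeasurableSpace ℚ_[p]] [BorelSpace ℚ_[p]]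
    (μ : Measure ℚ_[p]) [μ.IsAddHaarMeasure]
    (hμ : μ (Metric.closedBall 0 1) = 1)
    (u : ℚ_[p] → ℝ) (hu_pos : ∀ x : ℚ_[p], 0 < u x)
    (hu_loc : LocallyIntegrable u μ)
    (hu_radial : ∀ x y : ℚ_[p], ‖x‖ = ‖y‖ → u x = u y)
    (α : ℝ) (hα : 0 < α)
    (V : ℤ → ℝ)
    (hVint : ∀ i : ℤ, Integrable (fun y : ℚ_[p] => u y * Omega (‖y‖ * (p : ℝ) ^ (-i))) μ)
    (hV : ∀ i : ℤ, V i = ∫ y : ℚ_[p], u y * Omega (‖y‖ * (p : ℝ) ^ (-i)) ∂μ)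
    (hVmono : ∀ i : ℤ, V (i - 1) < V i)
    (hVsum : ∀ i : ℤ, Summable (fun n : ℕ =>
      (p : ℝ) ^ (-(((i + n : ℤ) : ℝ)) * (α + 1)) * V (i + n)))
    (φ : ℤ → ℚ_[p] → ℝ)
    (hφ : ∀ (i : ℤ) (x : ℚ_[p]), φ i x =
      (V (i - 1) * (1 - V (i - 1) / V i)) ^ (-(1 / 2 : ℝ)) *
        (Omega (‖x‖ * (p : ℝ) ^ (-i + 1)) - V (i - 1) / V i * Omega (‖x‖ * (p : ℝ) ^ (-i)))) :
    ∀ (i : ℤ) (x : ℚ_[p]),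
      Integrable (fun y : ℚ_[p] => u y * (φ i y - φ i x) / ‖x - y‖ ^ (α + 1)) μ ∧
      ∫ y : ℚ_[p], u y * (φ i y - φ i x) / ‖x - y‖ ^ (α + 1) ∂μ =
        (-(1 - (p : ℝ) ^ (-(α + 1))) *
          ∑' n : ℕ, (p : ℝ) ^ (-(((i + n : ℤ) : ℝ)) * (α + 1)) * V (i + n)) * φ i x :=
  padic_basis_eigenfunctions_general p μ u hu_pos α V hVint hV hVmono hVsum φ hφ
end

section
/- For all integers i, j, k one has ∫_{ℚ_p} φ_i(x)·φ_j(x)·φ_k(x)·u(x) dμ(x) = δ_{ij}δ_{jk}·V_{k−1}^{−1/2}(1 − V_{k−1}/V_k)^{−3/2}(1 − 3V_{k−1}/V_k + 2V_{k−1}²/V_k²) + δ_{ij}·[i<k]·V_{k−1}^{−1/2}(1 − V_{k−1}/V_k)^{1/2} + δ_{ik}·[i<j]·V_{j−1}^{−1/2}(1 − V_{j−1}/V_j)^{1/2} + δ_{jk}·[j<i]·V_{i−1}^{−1/2}(1 − V_{i−1}/V_i)^{1/2}, where δ is the Kronecker delta and [i<k] equals 1 if i < k and 0 otherwise. -/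
open MeasureTheory

lemma omega_le_iff {p : ℕ} [Fact p.Prime] (x : ℚ_[p]) (m : ℤ) :
    ‖x‖ * (p : ℝ) ^ (-m) ≤ 1 ↔ ‖x‖ ≤ (p : ℝ) ^ m := by
  have hp0 : (0:ℝ) < p := by exact_mod_cast (Fact.out : p.Prime).pos
  rw [zpow_neg, ← div_eq_mul_inv, div_le_one (zpow_pos hp0 m)]

lemma omega_mul {p : ℕ} [Fact p.Prime] (x : ℚ_[p]) (a b : ℤ) :
    Omega (‖x‖ * (p : ℝ) ^ (-a)) * Omega (‖x‖ * (p : ℝ) ^ (-b)) =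
      Omega (‖x‖ * (p : ℝ) ^ (-(min a b))) := by
  have hp1 : (1:ℝ) < p := by exact_mod_cast (Fact.out : p.Prime).one_lt
  have hmin : (p : ℝ) ^ (min a b) = min ((p : ℝ) ^ a) ((p : ℝ) ^ b) := by
    rcases le_total a b with h | h
    · rw [min_eq_left h, min_eq_left]
      exact zpow_le_zpow_right₀ hp1.le h
    · rw [min_eq_right h, min_eq_right]
      exact zpow_le_zpow_right₀ hp1.le h
  unfold Omega
  simp only [omega_le_iff, hmin, le_min_iff]
  split_ifs <;> simp_all

lemma omega_mul3 {p : ℕ} [Fact p.Prime] (x : ℚ_[p]) (a b c : ℤ) :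
    Omega (‖x‖ * (p : ℝ) ^ (-a)) *
      (Omega (‖x‖ * (p : ℝ) ^ (-b)) * Omega (‖x‖ * (p : ℝ) ^ (-c))) =
      Omega (‖x‖ * (p : ℝ) ^ (-(min a (min b c)))) := by
  rw [omega_mul, omega_mul]

lemma alg_offdiag (x1 x2 y1 y2 : ℝ) (hx1 : 0 < x1) (hx : x1 < x2)
    (hy1 : 0 < y1) (hy : y1 < y2) :
    (x1 * (1 - x1 / x2)) ^ (-(1 / 2 : ℝ)) * (x1 * (1 - x1 / x2)) ^ (-(1 / 2 : ℝ)) *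
      ((y1 * (1 - y1 / y2)) ^ (-(1 / 2 : ℝ)) * (x1 * (1 - x1 / x2) * (1 - y1 / y2)))
      = y1 ^ (-(1 / 2 : ℝ)) * (1 - y1 / y2) ^ ((1 / 2 : ℝ)) := by
  have hx2 : 0 < x2 := hx1.trans hx
  have hy2 : 0 < y2 := hy1.trans hy
  have hs : 0 < 1 - x1 / x2 := by
    have : x1 / x2 < 1 := (div_lt_one hx2).2 hx
    linarith
  have ht : 0 < 1 - y1 / y2 := by
    have : y1 / y2 < 1 := (div_lt_one hy2).2 hy
    linarith
  have hA : 0 < x1 * (1 - x1 / x2) := mul_pos hx1 hs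
  have e1 : (x1 * (1 - x1 / x2)) ^ (-(1 / 2 : ℝ)) * (x1 * (1 - x1 / x2)) ^ (-(1 / 2 : ℝ)) *
      (x1 * (1 - x1 / x2)) = 1 := by
    rw [← Real.rpow_add hA, show (-(1/2 : ℝ)) + (-(1/2 : ℝ)) = -1 by norm_num,
      Real.rpow_neg_one]
    exact inv_mul_cancel₀ hA.ne'
  have e2 : (1 - y1 / y2) ^ (-(1 / 2 : ℝ)) * (1 - y1 / y2) = (1 - y1 / y2) ^ ((1 / 2 : ℝ)) := by
    nth_rewrite 2 [← Real.rpow_one (1 - y1 / y2)]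
    rw [← Real.rpow_add ht]
    norm_num
  rw [Real.mul_rpow hy1.le ht.le]
  calc (x1 * (1 - x1 / x2)) ^ (-(1 / 2 : ℝ)) * (x1 * (1 - x1 / x2)) ^ (-(1 / 2 : ℝ)) *
      (y1 ^ (-(1 / 2 : ℝ)) * (1 - y1 / y2) ^ (-(1 / 2 : ℝ)) * (x1 * (1 - x1 / x2) * (1 - y1 / y2)))
      = ((x1 * (1 - x1 / x2)) ^ (-(1 / 2 : ℝ)) * (x1 * (1 - x1 / x2)) ^ (-(1 / 2 : ℝ)) *
          (x1 * (1 - x1 / x2))) *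
        (y1 ^ (-(1 / 2 : ℝ)) * ((1 - y1 / y2) ^ (-(1 / 2 : ℝ)) * (1 - y1 / y2))) := by ring
    _ = y1 ^ (-(1 / 2 : ℝ)) * (1 - y1 / y2) ^ ((1 / 2 : ℝ)) := by rw [e1, e2, one_mul]

lemma alg_diag (y1 y2 : ℝ) (hy1 : 0 < y1) (hy : y1 < y2) :
    (y1 * (1 - y1 / y2)) ^ (-(1 / 2 : ℝ)) * (y1 * (1 - y1 / y2)) ^ (-(1 / 2 : ℝ)) *
      ((y1 * (1 - y1 / y2)) ^ (-(1 / 2 : ℝ)) * (y1 * (1 - y1 / y2) * (1 - 2 * (y1 / y2))))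
      = y1 ^ (-(1 / 2 : ℝ)) * (1 - y1 / y2) ^ (-(3 / 2 : ℝ)) *
          (1 - 3 * (y1 / y2) + 2 * (y1 / y2) ^ 2) := by
  have hy2 : 0 < y2 := hy1.trans hy
  have ht : 0 < 1 - y1 / y2 := by
    have : y1 / y2 < 1 := (div_lt_one hy2).2 hy
    linarith
  have hA : 0 < y1 * (1 - y1 / y2) := mul_pos hy1 ht
  have e1 : (y1 * (1 - y1 / y2)) ^ (-(1 / 2 : ℝ)) * (y1 * (1 - y1 / y2)) ^ (-(1 / 2 : ℝ)) *
      (y1 * (1 - y1 / y2)) = 1 := by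
    rw [← Real.rpow_add hA, show (-(1/2 : ℝ)) + (-(1/2 : ℝ)) = -1 by norm_num,
      Real.rpow_neg_one]
    exact inv_mul_cancel₀ hA.ne'
  have e3 : (1 - y1 / y2) ^ (-(1 / 2 : ℝ)) = (1 - y1 / y2) ^ (-(3 / 2 : ℝ)) * (1 - y1 / y2) := by
    nth_rewrite 3 [← Real.rpow_one (1 - y1 / y2)]
    rw [← Real.rpow_add ht]
    norm_num
  calc (y1 * (1 - y1 / y2)) ^ (-(1 / 2 : ℝ)) * (y1 * (1 - y1 / y2)) ^ (-(1 / 2 : ℝ)) *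
      ((y1 * (1 - y1 / y2)) ^ (-(1 / 2 : ℝ)) * (y1 * (1 - y1 / y2) * (1 - 2 * (y1 / y2))))
      = ((y1 * (1 - y1 / y2)) ^ (-(1 / 2 : ℝ)) * (y1 * (1 - y1 / y2)) ^ (-(1 / 2 : ℝ)) *
          (y1 * (1 - y1 / y2))) * ((y1 * (1 - y1 / y2)) ^ (-(1 / 2 : ℝ)) * (1 - 2 * (y1 / y2))) := by
        ring
    _ = (y1 * (1 - y1 / y2)) ^ (-(1 / 2 : ℝ)) * (1 - 2 * (y1 / y2)) := by rw [e1, one_mul]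
    _ = y1 ^ (-(1 / 2 : ℝ)) * (1 - y1 / y2) ^ (-(1 / 2 : ℝ)) * (1 - 2 * (y1 / y2)) := by
        rw [Real.mul_rpow hy1.le ht.le]
    _ = y1 ^ (-(1 / 2 : ℝ)) * ((1 - y1 / y2) ^ (-(3 / 2 : ℝ)) * (1 - y1 / y2)) *
          (1 - 2 * (y1 / y2)) := by rw [← e3]
    _ = y1 ^ (-(1 / 2 : ℝ)) * (1 - y1 / y2) ^ (-(3 / 2 : ℝ)) *
          (1 - 3 * (y1 / y2) + 2 * (y1 / y2) ^ 2) := by ring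

set_option maxHeartbeats 2000000 in
/-- the triple-product formula for the basis functions `φ_i` in
`L²(ℚ_p, u(x)dμ(x))`. -/
theorem padic_basis_triple_product
    (p : ℕ) [Fact p.Prime]
    [MeasurableSpace ℚ_[p]] [BorelSpace ℚ_[p]]
    (μ : Measure ℚ_[p]) [μ.IsAddHaarMeasure]
    (hμ : μ (Metric.closedBall 0 1) = 1)
    (u : ℚ_[p] → ℝ) (hu_pos : ∀ x : ℚ_[p], 0 < u x)
    (hu_loc : LocallyIntegrable u μ)
    (V : ℤ → ℝ)
    (hVint : ∀ i : ℤ, Integrable (fun y : ℚ_[p] => u y * Omega (‖y‖ * (p : ℝ) ^ (-i))) μ)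
    (hV : ∀ i : ℤ, V i = ∫ y : ℚ_[p], u y * Omega (‖y‖ * (p : ℝ) ^ (-i)) ∂μ)
    (hVmono : ∀ i : ℤ, V (i - 1) < V i)
    (φ : ℤ → ℚ_[p] → ℝ)
    (hφ : ∀ (i : ℤ) (x : ℚ_[p]), φ i x =
      (V (i - 1) * (1 - V (i - 1) / V i)) ^ (-(1 / 2 : ℝ)) *
        (Omega (‖x‖ * (p : ℝ) ^ (-i + 1)) - V (i - 1) / V i * Omega (‖x‖ * (p : ℝ) ^ (-i)))) :
    ∀ i j k : ℤ,
      ∫ x : ℚ_[p], φ i x * φ j x * φ k x * u x ∂μ =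
        (if i = j ∧ j = k then
          (V (k - 1)) ^ (-(1 / 2 : ℝ)) * (1 - V (k - 1) / V k) ^ (-(3 / 2 : ℝ)) *
            (1 - 3 * (V (k - 1) / V k) + 2 * (V (k - 1) / V k) ^ 2)
         else 0) +
        (if i = j ∧ i < k then
          (V (k - 1)) ^ (-(1 / 2 : ℝ)) * (1 - V (k - 1) / V k) ^ ((1 / 2 : ℝ)) else 0) +
        (if i = k ∧ i < j then
          (V (j - 1)) ^ (-(1 / 2 : ℝ)) * (1 - V (j - 1) / V j) ^ ((1 / 2 : ℝ)) else 0) +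
        (if j = k ∧ j < i then
          (V (i - 1)) ^ (-(1 / 2 : ℝ)) * (1 - V (i - 1) / V i) ^ ((1 / 2 : ℝ)) else 0) := by
  have hp1 : (1:ℝ) < p := by exact_mod_cast (Fact.out : p.Prime).one_lt
  have hp0 : (0:ℝ) < p := by linarith
  -- positivity of V
  have hVpos : ∀ m : ℤ, 0 < V m := by
    intro m
    rw [hV m]
    have hnn : (0 : ℚ_[p] → ℝ) ≤ fun y => u y * Omega (‖y‖ * (p : ℝ) ^ (-m)) :=
      fun y => mul_nonneg (hu_pos y).le (Omega_nonneg _)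
    rw [integral_pos_iff_support_of_nonneg hnn (hVint m)]
    have hsub : Metric.ball (0 : ℚ_[p]) ((p : ℝ) ^ m) ⊆
        Function.support fun y => u y * Omega (‖y‖ * (p : ℝ) ^ (-m)) := by
      intro y hy
      simp only [Metric.mem_ball, dist_zero_right] at hy
      have h1 : ‖y‖ * (p : ℝ) ^ (-m) ≤ 1 := (omega_le_iff y m).2 hy.le
      simp only [Function.mem_support, Omega, if_pos h1, mul_one]
      exact (hu_pos y).ne'
    calc (0 : ENNReal) < μ (Metric.ball (0 : ℚ_[p]) ((p : ℝ) ^ m)) :=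
          Metric.measure_ball_pos μ _ (zpow_pos hp0 m)
      _ ≤ _ := measure_mono hsub
  have hVne : ∀ m : ℤ, V m ≠ 0 := fun m => (hVpos m).ne'
  have hIV : ∀ m : ℤ, ∫ x : ℚ_[p], u x * Omega (‖x‖ * (p : ℝ) ^ (-m)) ∂μ = V m :=
    fun m => (hV m).symm
  -- the master formula
  have main : ∀ i j k : ℤ,
      ∫ x : ℚ_[p], φ i x * φ j x * φ k x * u x ∂μ =
        (V (i - 1) * (1 - V (i - 1) / V i)) ^ (-(1 / 2 : ℝ)) *
        (V (j - 1) * (1 - V (j - 1) / V j)) ^ (-(1 / 2 : ℝ)) *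
        ((V (k - 1) * (1 - V (k - 1) / V k)) ^ (-(1 / 2 : ℝ)) *
        (V (min (i - 1) (min (j - 1) (k - 1)))
          - V (k - 1) / V k * V (min (i - 1) (min (j - 1) k))
          - V (j - 1) / V j * V (min (i - 1) (min j (k - 1)))
          + V (j - 1) / V j * (V (k - 1) / V k) * V (min (i - 1) (min j k))
          - V (i - 1) / V i * V (min i (min (j - 1) (k - 1)))
          + V (i - 1) / V i * (V (k - 1) / V k) * V (min i (min (j - 1) k))
          + V (i - 1) / V i * (V (j - 1) / V j) * V (min i (min j (k - 1)))
          - V (i - 1) / V i * (V (j - 1) / V j) * (V (k - 1) / V k) * V (min i (min j k)))) := by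
    intro i j k
    have hfun : (fun x : ℚ_[p] => φ i x * φ j x * φ k x * u x) = fun x : ℚ_[p] =>
        ((V (i - 1) * (1 - V (i - 1) / V i)) ^ (-(1 / 2 : ℝ)) *
         (V (j - 1) * (1 - V (j - 1) / V j)) ^ (-(1 / 2 : ℝ)) *
         (V (k - 1) * (1 - V (k - 1) / V k)) ^ (-(1 / 2 : ℝ))) *
        ((u x * Omega (‖x‖ * (p : ℝ) ^ (-(min (i - 1) (min (j - 1) (k - 1))))))
          - V (k - 1) / V k * (u x * Omega (‖x‖ * (p : ℝ) ^ (-(min (i - 1) (min (j - 1) k)))))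
          - V (j - 1) / V j * (u x * Omega (‖x‖ * (p : ℝ) ^ (-(min (i - 1) (min j (k - 1))))))
          + V (j - 1) / V j * (V (k - 1) / V k) *
              (u x * Omega (‖x‖ * (p : ℝ) ^ (-(min (i - 1) (min j k)))))
          - V (i - 1) / V i * (u x * Omega (‖x‖ * (p : ℝ) ^ (-(min i (min (j - 1) (k - 1))))))
          + V (i - 1) / V i * (V (k - 1) / V k) *
              (u x * Omega (‖x‖ * (p : ℝ) ^ (-(min i (min (j - 1) k)))))
          + V (i - 1) / V i * (V (j - 1) / V j) *
              (u x * Omega (‖x‖ * (p : ℝ) ^ (-(min i (min j (k - 1))))))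
          - V (i - 1) / V i * (V (j - 1) / V j) * (V (k - 1) / V k) *
              (u x * Omega (‖x‖ * (p : ℝ) ^ (-(min i (min j k)))))) := by
      funext x
      rw [hφ i x, hφ j x, hφ k x,
        ← omega_mul3 x (i - 1) (j - 1) (k - 1), ← omega_mul3 x (i - 1) (j - 1) k,
        ← omega_mul3 x (i - 1) j (k - 1), ← omega_mul3 x (i - 1) j k,
        ← omega_mul3 x i (j - 1) (k - 1), ← omega_mul3 x i (j - 1) k,
        ← omega_mul3 x i j (k - 1), ← omega_mul3 x i j k,
        show (-i + 1 : ℤ) = -(i - 1) by ring, show (-j + 1 : ℤ) = -(j - 1) by ring,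
        show (-k + 1 : ℤ) = -(k - 1) by ring]
      ring
    set n1 := min (i - 1) (min (j - 1) (k - 1)) with hn1
    set n2 := min (i - 1) (min (j - 1) k) with hn2
    set n3 := min (i - 1) (min j (k - 1)) with hn3
    set n4 := min (i - 1) (min j k) with hn4
    set n5 := min i (min (j - 1) (k - 1)) with hn5
    set n6 := min i (min (j - 1) k) with hn6
    set n7 := min i (min j (k - 1)) with hn7
    set n8 := min i (min j k) with hn8
    set a1 := V (i - 1) / V i with ha1
    set a2 := V (j - 1) / V j with ha2
    set a3 := V (k - 1) / V k with ha3
    have G : ∀ m : ℤ, Integrable (fun x : ℚ_[p] => u x * Omega (‖x‖ * (p : ℝ) ^ (-m))) μ :=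
      hVint
    have J1 : Integrable (fun x : ℚ_[p] =>
        u x * Omega (‖x‖ * (p : ℝ) ^ (-n1)) - a3 * (u x * Omega (‖x‖ * (p : ℝ) ^ (-n2)))) μ :=
      (G n1).sub ((G n2).const_mul a3)
    have J2 : Integrable (fun x : ℚ_[p] =>
        u x * Omega (‖x‖ * (p : ℝ) ^ (-n1)) - a3 * (u x * Omega (‖x‖ * (p : ℝ) ^ (-n2)))
          - a2 * (u x * Omega (‖x‖ * (p : ℝ) ^ (-n3)))) μ :=
      J1.sub ((G n3).const_mul a2)
    have J3 : Integrable (fun x : ℚ_[p] =>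
        u x * Omega (‖x‖ * (p : ℝ) ^ (-n1)) - a3 * (u x * Omega (‖x‖ * (p : ℝ) ^ (-n2)))
          - a2 * (u x * Omega (‖x‖ * (p : ℝ) ^ (-n3)))
          + a2 * a3 * (u x * Omega (‖x‖ * (p : ℝ) ^ (-n4)))) μ :=
      J2.add ((G n4).const_mul (a2 * a3))
    have J4 : Integrable (fun x : ℚ_[p] =>
        u x * Omega (‖x‖ * (p : ℝ) ^ (-n1)) - a3 * (u x * Omega (‖x‖ * (p : ℝ) ^ (-n2)))
          - a2 * (u x * Omega (‖x‖ * (p : ℝ) ^ (-n3)))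
          + a2 * a3 * (u x * Omega (‖x‖ * (p : ℝ) ^ (-n4)))
          - a1 * (u x * Omega (‖x‖ * (p : ℝ) ^ (-n5)))) μ :=
      J3.sub ((G n5).const_mul a1)
    have J5 : Integrable (fun x : ℚ_[p] =>
        u x * Omega (‖x‖ * (p : ℝ) ^ (-n1)) - a3 * (u x * Omega (‖x‖ * (p : ℝ) ^ (-n2)))
          - a2 * (u x * Omega (‖x‖ * (p : ℝ) ^ (-n3)))
          + a2 * a3 * (u x * Omega (‖x‖ * (p : ℝ) ^ (-n4)))
          - a1 * (u x * Omega (‖x‖ * (p : ℝ) ^ (-n5)))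
          + a1 * a3 * (u x * Omega (‖x‖ * (p : ℝ) ^ (-n6)))) μ :=
      J4.add ((G n6).const_mul (a1 * a3))
    have J6 : Integrable (fun x : ℚ_[p] =>
        u x * Omega (‖x‖ * (p : ℝ) ^ (-n1)) - a3 * (u x * Omega (‖x‖ * (p : ℝ) ^ (-n2)))
          - a2 * (u x * Omega (‖x‖ * (p : ℝ) ^ (-n3)))
          + a2 * a3 * (u x * Omega (‖x‖ * (p : ℝ) ^ (-n4)))
          - a1 * (u x * Omega (‖x‖ * (p : ℝ) ^ (-n5)))
          + a1 * a3 * (u x * Omega (‖x‖ * (p : ℝ) ^ (-n6)))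
          + a1 * a2 * (u x * Omega (‖x‖ * (p : ℝ) ^ (-n7)))) μ :=
      J5.add ((G n7).const_mul (a1 * a2))
    have I8 : Integrable (fun x : ℚ_[p] =>
        a1 * a2 * a3 * (u x * Omega (‖x‖ * (p : ℝ) ^ (-n8)))) μ :=
      (G n8).const_mul (a1 * a2 * a3)
    rw [hfun, integral_const_mul, integral_sub J6 I8, integral_add J5 ((G n7).const_mul (a1 * a2)),
      integral_add J4 ((G n6).const_mul (a1 * a3)), integral_sub J3 ((G n5).const_mul a1),
      integral_add J2 ((G n4).const_mul (a2 * a3)), integral_sub J1 ((G n3).const_mul a2),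
      integral_sub (G n1) ((G n2).const_mul a3),
      integral_const_mul, integral_const_mul, integral_const_mul, integral_const_mul,
      integral_const_mul, integral_const_mul, integral_const_mul,
      hIV, hIV, hIV, hIV, hIV, hIV, hIV, hIV]
    ring
  -- the vanishing case: strict minimum attained exactly once
  have zero_case : ∀ i j k : ℤ, i < j → i < k →
      ∫ x : ℚ_[p], φ i x * φ j x * φ k x * u x ∂μ = 0 := by
    intro i j k hij hik
    rw [main i j k,
      show min (i - 1) (min (j - 1) (k - 1)) = i - 1 by omega,
      show min (i - 1) (min (j - 1) k) = i - 1 by omega,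
      show min (i - 1) (min j (k - 1)) = i - 1 by omega,
      show min (i - 1) (min j k) = i - 1 by omega,
      show min i (min (j - 1) (k - 1)) = i by omega,
      show min i (min (j - 1) k) = i by omega,
      show min i (min j (k - 1)) = i by omega,
      show min i (min j k) = i by omega]
    apply mul_eq_zero_of_right
    apply mul_eq_zero_of_right
    have hi := hVne i; have hj := hVne j; have hk := hVne k
    field_simp
    ring
  intro i j k
  rcases eq_or_ne i j with rfl | hij
  · rcases lt_trichotomy i k with h | rfl | h
    · -- i = j < k
      rw [if_neg (show ¬(i = i ∧ i = k) by omega), if_pos (show i = i ∧ i < k from ⟨rfl, h⟩),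
        if_neg (show ¬(i = k ∧ i < i) by omega),
        zero_add, add_zero, add_zero, main i i k,
        show min (i - 1) (min (i - 1) (k - 1)) = i - 1 by omega,
        show min (i - 1) (min (i - 1) k) = i - 1 by omega,
        show min (i - 1) (min i (k - 1)) = i - 1 by omega,
        show min (i - 1) (min i k) = i - 1 by omega,
        show min i (min (i - 1) (k - 1)) = i - 1 by omega,
        show min i (min (i - 1) k) = i - 1 by omega,
        show min i (min i (k - 1)) = i by omega,
        show min i (min i k) = i by omega,
        ← alg_offdiag (V (i - 1)) (V i) (V (k - 1)) (V k) (hVpos _) (hVmono i)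
          (hVpos _) (hVmono k)]
      have hi := hVne i; have hk := hVne k
      field_simp
      ring
    · -- i = j = k
      rw [if_pos (show i = i ∧ i = i from ⟨rfl, rfl⟩),
        if_neg (show ¬(i = i ∧ i < i) by omega),
        add_zero, add_zero, add_zero, main i i i,
        show min (i - 1) (min (i - 1) (i - 1)) = i - 1 by omega,
        show min (i - 1) (min (i - 1) i) = i - 1 by omega,
        show min (i - 1) (min i (i - 1)) = i - 1 by omega,
        show min (i - 1) (min i i) = i - 1 by omega,
        show min i (min (i - 1) (i - 1)) = i - 1 by omega,
        show min i (min (i - 1) i) = i - 1 by omega,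
        show min i (min i (i - 1)) = i - 1 by omega,
        show min i (min i i) = i by omega,
        ← alg_diag (V (i - 1)) (V i) (hVpos _) (hVmono i)]
      have hi := hVne i
      field_simp
      ring
    · -- k < i = j
      rw [if_neg (show ¬(i = i ∧ i = k) by omega), if_neg (show ¬(i = i ∧ i < k) by omega),
        if_neg (show ¬(i = k ∧ i < i) by omega),
        add_zero, add_zero, add_zero,
        show (fun x : ℚ_[p] => φ i x * φ i x * φ k x * u x)
          = fun x : ℚ_[p] => φ k x * φ i x * φ i x * u x from funext fun x => by ring]
      exact zero_case k i i h h
  · rcases eq_or_ne i k with rfl | hik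
    · rcases lt_trichotomy i j with h | h | h
      · -- i = k < j
        rw [if_neg (show ¬(i = j ∧ j = i) by omega), if_neg (show ¬(i = j ∧ i < i) by omega),
          if_pos (show i = i ∧ i < j from ⟨rfl, h⟩),
          if_neg (show ¬(j = i ∧ j < i) by omega),
          zero_add, zero_add, add_zero, main i j i,
          show min (i - 1) (min (j - 1) (i - 1)) = i - 1 by omega,
          show min (i - 1) (min (j - 1) i) = i - 1 by omega,
          show min (i - 1) (min j (i - 1)) = i - 1 by omega,
          show min (i - 1) (min j i) = i - 1 by omega,
          show min i (min (j - 1) (i - 1)) = i - 1 by omega,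
          show min i (min (j - 1) i) = i by omega,
          show min i (min j (i - 1)) = i - 1 by omega,
          show min i (min j i) = i by omega,
          ← alg_offdiag (V (i - 1)) (V i) (V (j - 1)) (V j) (hVpos _) (hVmono i)
            (hVpos _) (hVmono j)]
        have hi := hVne i; have hj := hVne j
        field_simp
        ring
      · exact absurd h hij
      · -- j < i = k
        rw [if_neg (show ¬(i = j ∧ j = i) by omega), if_neg (show ¬(i = j ∧ i < i) by omega),
          if_neg (show ¬(i = i ∧ i < j) by omega), if_neg (show ¬(j = i ∧ j < i) by omega),
          add_zero, add_zero, add_zero,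
          show (fun x : ℚ_[p] => φ i x * φ j x * φ i x * u x)
            = fun x : ℚ_[p] => φ j x * φ i x * φ i x * u x from funext fun x => by ring]
        exact zero_case j i i h h
    · rcases eq_or_ne j k with rfl | hjk
      · rcases lt_trichotomy j i with h | h | h
        · -- j = k < i
          rw [if_neg (show ¬(i = j ∧ j = j) by omega), if_neg (show ¬(i = j ∧ i < j) by omega),
            if_pos (show j = j ∧ j < i from ⟨rfl, h⟩),
            zero_add, zero_add, zero_add, main i j j,
            show min (i - 1) (min (j - 1) (j - 1)) = j - 1 by omega,
            show min (i - 1) (min (j - 1) j) = j - 1 by omega,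
            show min (i - 1) (min j (j - 1)) = j - 1 by omega,
            show min (i - 1) (min j j) = j by omega,
            show min i (min (j - 1) (j - 1)) = j - 1 by omega,
            show min i (min (j - 1) j) = j - 1 by omega,
            show min i (min j (j - 1)) = j - 1 by omega,
            show min i (min j j) = j by omega,
            ← alg_offdiag (V (j - 1)) (V j) (V (i - 1)) (V i) (hVpos _) (hVmono j)
              (hVpos _) (hVmono i)]
          have hi := hVne i; have hj := hVne j
          field_simp
          ring
        · exact absurd h.symm hij
        · -- i < j = k
          rw [if_neg (show ¬(i = j ∧ j = j) by omega), if_neg (show ¬(i = j ∧ i < j) by omega),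
            if_neg (show ¬(j = j ∧ j < i) by omega),
            add_zero, add_zero, add_zero]
          exact zero_case i j j h h
      · -- i, j, k pairwise distinct
        rw [if_neg (show ¬(i = j ∧ j = k) by omega), if_neg (show ¬(i = j ∧ i < k) by omega),
          if_neg (show ¬(i = k ∧ i < j) by omega), if_neg (show ¬(j = k ∧ j < i) by omega),
          add_zero, add_zero, add_zero]
        rcases lt_trichotomy i j with h1 | h1 | h1
        · rcases lt_trichotomy i k with h2 | h2 | h2
          · exact zero_case i j k h1 h2
          · exact absurd h2 hik
          · rw [show (fun x : ℚ_[p] => φ i x * φ j x * φ k x * u x)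
              = fun x : ℚ_[p] => φ k x * φ i x * φ j x * u x from funext fun x => by ring]
            exact zero_case k i j h2 (h2.trans h1)
        · exact absurd h1 hij
        · rcases lt_trichotomy j k with h2 | h2 | h2
          · rw [show (fun x : ℚ_[p] => φ i x * φ j x * φ k x * u x)
              = fun x : ℚ_[p] => φ j x * φ i x * φ k x * u x from funext fun x => by ring]
            exact zero_case j i k h1 h2
          · exact absurd h2 hjk
          · rw [show (fun x : ℚ_[p] => φ i x * φ j x * φ k x * u x)
              = fun x : ℚ_[p] => φ k x * φ i x * φ j x * u x from funext fun x => by ring]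
            exact zero_case k i j (h2.trans h1) h2
end

section
/- Let p be a prime, α > 1, b > 0, and define u : ℚ_p → ℝ by u(x) = b·((1 − p⁻¹)/(1 − p^{−α})·Ω(|x|_p) + |x|_p^{α−1}·(1 − Ω(|x|_p))). Then for every integer i ≥ 0 the u-weighted volume of the ball of radius p^i satisfies ∫_{ℚ_p} u(y)·Ω(|y|_p p^{−i}) dμ(y) = b·(1 − p⁻¹)·p^{α(i+1)}/(p^{α} − 1). -/
/-!
The closed ball of radius `p ^ (n + 1)` in `ℚ_[p]` is the disjoint union of the `p` balls of
radius `p ^ n` centred at `j * p ^ (-(n + 1))`, `0 ≤ j < p`, so a Haar measure normalised on `ℤ_[p]`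
gives it volume `p ^ (n + 1)`. The potential is constant on `ℤ_[p]` and equals `b p ^ (k (α - 1))`
on the sphere of radius `p ^ k`, `k ≥ 1`, whose volume is `p ^ k - p ^ (k - 1)`; adding these
shell contributions one at a time gives a geometric series in `p ^ α`.
-/

open MeasureTheory

open Metric

theorem IsUltrametricDist.disjoint_closedBall_of_lt_dist {X : Type*} [PseudoMetricSpace X]
    [IsUltrametricDist X] {x y : X} {r : ℝ} (h : r < dist x y) :
    Disjoint (closedBall x r) (closedBall y r) :=
  Set.disjoint_left.mpr fun z hzx hzy => h.not_ge <|
    (dist_triangle_max x z y).trans (max_le (dist_comm z x ▸ hzx) hzy)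

theorem mul_Omega_norm_mul_inv_eq_indicator {E : Type*} [SeminormedAddGroup E] {r : ℝ}
    (hr : 0 < r) (f : E → ℝ) (y : E) :
    f y * Omega (‖y‖ * r⁻¹) = (closedBall 0 r).indicator f y := by
  by_cases hy : ‖y‖ ≤ r <;>
    simp [Omega, Set.indicator, ← div_eq_mul_inv, div_le_one hr, hy]

namespace Padic

variable {p : ℕ} [hp : Fact p.Prime]

theorem exists_lt_norm_sub_natCast_le {z : ℚ_[p]} (hz : ‖z‖ ≤ 1) :
    ∃ j < p, ‖z - j‖ ≤ (p : ℝ)⁻¹ := by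
  let x : ℤ_[p] := ⟨z, hz⟩
  refine ⟨x.zmodRepr, x.zmodRepr_lt_p, ?_⟩
  have h : ‖z - x.zmodRepr‖ < (p : ℝ) ^ (0 : ℤ) := by
    simpa [PadicInt.norm_def] using x.norm_sub_zmodRepr_lt_one
  rw [norm_lt_pow_iff_norm_le_pow_sub_one] at h
  simpa using h

theorem norm_natCast_sub_natCast_eq_one {j k : ℕ} (hj : j < p) (hk : k < p) (hjk : j ≠ k) :
    ‖(j : ℚ_[p]) - k‖ = 1 := by
  have hcast : (j : ℚ_[p]) - k = ((j - k : ℤ) : ℚ_[p]) := by push_cast; ring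
  rw [hcast]
  refine (norm_int_le_one _).antisymm (not_lt.mp fun hlt => hjk ?_)
  have := Int.eq_zero_of_abs_lt_dvd (norm_intCast_lt_one_iff.mp hlt)
    (abs_sub_lt_iff.mpr ⟨by omega, by omega⟩)
  omega

theorem closedBall_zpow_succ_eq_biUnion (n : ℤ) :
    closedBall (0 : ℚ_[p]) ((p : ℝ) ^ (n + 1)) =
      ⋃ j ∈ Finset.range p, closedBall ((j : ℚ_[p]) * (p : ℚ_[p]) ^ (-(n + 1))) ((p : ℝ) ^ n) := by
  have hp1 : (1 : ℝ) < p := Nat.one_lt_cast.mpr hp.out.one_lt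
  have hp0 : (0 : ℝ) < p := zero_lt_one.trans hp1
  have hpQ : (p : ℚ_[p]) ≠ 0 := Nat.cast_ne_zero.mpr hp.out.ne_zero
  ext x
  simp only [mem_closedBall, dist_eq_norm, sub_zero, Set.mem_iUnion, Finset.mem_range,
    exists_prop]
  constructor
  · intro hx
    have hz : ‖x * (p : ℚ_[p]) ^ (n + 1)‖ ≤ 1 := by
      rw [norm_mul, norm_p_zpow, zpow_neg, ← div_eq_mul_inv, div_le_one (zpow_pos hp0 _)]
      exact hx
    obtain ⟨j, hj, hxj⟩ := exists_lt_norm_sub_natCast_le hz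
    refine ⟨j, hj, ?_⟩
    have hsplit : x - j * (p : ℚ_[p]) ^ (-(n + 1)) =
        (x * (p : ℚ_[p]) ^ (n + 1) - j) * (p : ℚ_[p]) ^ (-(n + 1)) := by
      rw [sub_mul, mul_assoc, ← zpow_add₀ hpQ, add_neg_cancel, zpow_zero, mul_one]
    calc ‖x - j * (p : ℚ_[p]) ^ (-(n + 1))‖
        = ‖x * (p : ℚ_[p]) ^ (n + 1) - j‖ * (p : ℝ) ^ (n + 1) := by
          rw [hsplit, norm_mul, norm_p_zpow, neg_neg]
      _ ≤ (p : ℝ)⁻¹ * (p : ℝ) ^ (n + 1) := by gcongr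
      _ = (p : ℝ) ^ n := by rw [zpow_add_one₀ hp0.ne', mul_comm, mul_inv_cancel_right₀ hp0.ne']
  · rintro ⟨j, -, hxj⟩
    have hc : ‖(j : ℚ_[p]) * (p : ℚ_[p]) ^ (-(n + 1))‖ ≤ (p : ℝ) ^ (n + 1) := by
      rw [norm_mul, norm_p_zpow, neg_neg]
      exact mul_le_of_le_one_left (zpow_pos hp0 _).le (by simpa using norm_int_le_one (p := p) j)
    calc ‖x‖ = ‖(x - j * (p : ℚ_[p]) ^ (-(n + 1))) + j * (p : ℚ_[p]) ^ (-(n + 1))‖ := by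
          rw [sub_add_cancel]
      _ ≤ max ‖x - j * (p : ℚ_[p]) ^ (-(n + 1))‖ ‖(j : ℚ_[p]) * (p : ℚ_[p]) ^ (-(n + 1))‖ :=
          nonarchimedean _ _
      _ ≤ (p : ℝ) ^ (n + 1) := max_le (hxj.trans (zpow_le_zpow_right₀ hp1.le (by omega))) hc

theorem closedBall_zpow_subset_closedBall_zpow_succ (n : ℤ) :
    closedBall (0 : ℚ_[p]) ((p : ℝ) ^ n) ⊆ closedBall 0 ((p : ℝ) ^ (n + 1)) :=
  closedBall_subset_closedBall
    (zpow_le_zpow_right₀ (Nat.one_le_cast.mpr hp.out.one_le) (by omega))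

theorem pairwiseDisjoint_closedBall_natCast_mul_zpow (n : ℤ) :
    (Finset.range p : Set ℕ).PairwiseDisjoint
      fun j => closedBall ((j : ℚ_[p]) * (p : ℚ_[p]) ^ (-(n + 1))) ((p : ℝ) ^ n) := by
  intro j hj k hk hjk
  apply IsUltrametricDist.disjoint_closedBall_of_lt_dist
  rw [dist_eq_norm, ← sub_mul, norm_mul, norm_p_zpow, neg_neg,
    norm_natCast_sub_natCast_eq_one (Finset.mem_range.mp hj) (Finset.mem_range.mp hk) hjk,
    one_mul]
  exact zpow_lt_zpow_right₀ (Nat.one_lt_cast.mpr hp.out.one_lt) (by omega)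

theorem closedBall_zpow_succ_diff_eq_sphere (n : ℤ) :
    closedBall (0 : ℚ_[p]) ((p : ℝ) ^ (n + 1)) \ closedBall 0 ((p : ℝ) ^ n) =
      sphere 0 ((p : ℝ) ^ (n + 1)) := by
  ext x
  rw [Set.mem_sdiff, mem_closedBall_zero_iff, mem_closedBall_zero_iff,
    norm_le_pow_iff_norm_lt_pow_add_one x n, not_lt, mem_sphere_zero_iff_norm, le_antisymm_iff]

variable [MeasurableSpace ℚ_[p]] [BorelSpace ℚ_[p]] (μ : Measure ℚ_[p]) [μ.IsAddHaarMeasure]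

theorem measureReal_closedBall_zpow_succ (n : ℤ) :
    μ.real (closedBall 0 ((p : ℝ) ^ (n + 1))) = p * μ.real (closedBall 0 ((p : ℝ) ^ n)) := by
  rw [closedBall_zpow_succ_eq_biUnion, measureReal_biUnion_finset
    (pairwiseDisjoint_closedBall_natCast_mul_zpow n) (fun _ _ => measurableSet_closedBall)
    (fun _ _ => measure_closedBall_lt_top.ne)]
  simp [Measure.addHaar_real_closedBall_center]

theorem measureReal_closedBall_zpow (hμ : μ (closedBall 0 1) = 1) (n : ℤ) :
    μ.real (closedBall 0 ((p : ℝ) ^ n)) = (p : ℝ) ^ n := by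
  have hp0 : (p : ℝ) ≠ 0 := Nat.cast_ne_zero.mpr hp.out.ne_zero
  induction n using Int.induction_on with
  | zero => simp [measureReal_def, hμ]
  | succ n ih => rw [measureReal_closedBall_zpow_succ, ih, zpow_add_one₀ hp0, mul_comm]
  | pred n ih =>
    have h := measureReal_closedBall_zpow_succ μ (-n - 1)
    set r := μ.real (closedBall 0 ((p : ℝ) ^ (-n - 1 : ℤ)))
    rw [sub_add_cancel, ih] at h
    rw [zpow_sub_one₀ hp0, h, mul_comm, inv_mul_cancel_left₀ hp0]

end Padic

noncomputable def powerLawPotential (p : ℕ) [Fact p.Prime] (α b : ℝ) (x : ℚ_[p]) : ℝ :=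
  b * ((1 - (p : ℝ)⁻¹) / (1 - (p : ℝ) ^ (-α)) * Omega ‖x‖ + ‖x‖ ^ (α - 1) * (1 - Omega ‖x‖))

section powerLawPotential

variable {p : ℕ} [hp : Fact p.Prime] {α b : ℝ}

theorem powerLawPotential_of_norm_le_one {x : ℚ_[p]} (hx : ‖x‖ ≤ 1) :
    powerLawPotential p α b x = b * ((1 - (p : ℝ)⁻¹) / (1 - (p : ℝ) ^ (-α))) := by
  simp [powerLawPotential, Omega, hx]

theorem powerLawPotential_of_one_lt_norm {x : ℚ_[p]} (hx : 1 < ‖x‖) :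
    powerLawPotential p α b x = b * ‖x‖ ^ (α - 1) := by
  simp [powerLawPotential, Omega, hx.not_ge]

theorem eqOn_powerLawPotential_closedBall_zpow_succ_diff {n : ℤ} (hn : 0 ≤ n) :
    Set.EqOn (powerLawPotential p α b) (fun _ => b * ((p : ℝ) ^ (n + 1)) ^ (α - 1))
      (closedBall 0 ((p : ℝ) ^ (n + 1)) \ closedBall 0 ((p : ℝ) ^ n)) := by
  intro x hx
  rw [Padic.closedBall_zpow_succ_diff_eq_sphere, mem_sphere_zero_iff_norm] at hx
  rw [powerLawPotential_of_one_lt_norm (hx ▸ one_lt_zpow₀ (Nat.one_lt_cast.mpr hp.out.one_lt)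
    (by omega)), hx]

variable [MeasurableSpace ℚ_[p]] [BorelSpace ℚ_[p]] (μ : Measure ℚ_[p]) [μ.IsAddHaarMeasure]

theorem integrableOn_powerLawPotential_closedBall_zpow {n : ℤ} (hn : 0 ≤ n) :
    IntegrableOn (powerLawPotential p α b) (closedBall 0 ((p : ℝ) ^ n)) μ := by
  induction n, hn using Int.leInduction with
  | base =>
    refine (integrableOn_const (C := b * ((1 - (p : ℝ)⁻¹) / (1 - (p : ℝ) ^ (-α))))
      measure_closedBall_lt_top.ne).congr_fun (fun x hx => ?_)
      measurableSet_closedBall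
    exact (powerLawPotential_of_norm_le_one (by simpa using hx)).symm
  | succ n hn ih =>
    rw [← Set.union_sdiff_cancel (Padic.closedBall_zpow_subset_closedBall_zpow_succ n)]
    exact ih.union ((integrableOn_const ((measure_mono Set.sdiff_subset).trans_lt
      measure_closedBall_lt_top).ne).congr_fun
      (eqOn_powerLawPotential_closedBall_zpow_succ_diff hn).symm
      (measurableSet_closedBall.diff measurableSet_closedBall))

theorem setIntegral_powerLawPotential_closedBall_zpow_succ (hμ : μ (closedBall 0 1) = 1) {n : ℤ}
    (hn : 0 ≤ n) :
    ∫ x in closedBall 0 ((p : ℝ) ^ (n + 1)), powerLawPotential p α b x ∂μ =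
      ∫ x in closedBall 0 ((p : ℝ) ^ n), powerLawPotential p α b x ∂μ +
        b * ((p : ℝ) ^ (n + 1)) ^ (α - 1) * ((p : ℝ) ^ (n + 1) - (p : ℝ) ^ n) := by
  have hsub := Padic.closedBall_zpow_subset_closedBall_zpow_succ (p := p) n
  have hshell : MeasurableSet
      (closedBall (0 : ℚ_[p]) ((p : ℝ) ^ (n + 1)) \ closedBall 0 ((p : ℝ) ^ n)) :=
    measurableSet_closedBall.diff measurableSet_closedBall
  rw [← Set.union_sdiff_cancel hsub, setIntegral_union Set.disjoint_sdiff_right hshell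
    (integrableOn_powerLawPotential_closedBall_zpow μ hn)
    ((integrableOn_powerLawPotential_closedBall_zpow μ (by omega)).mono_set Set.sdiff_subset),
    setIntegral_congr_fun hshell (eqOn_powerLawPotential_closedBall_zpow_succ_diff hn),
    setIntegral_const,
    measureReal_sdiff hsub measurableSet_closedBall measure_closedBall_lt_top.ne,
    Padic.measureReal_closedBall_zpow μ hμ, Padic.measureReal_closedBall_zpow μ hμ, smul_eq_mul,
    mul_comm]

theorem setIntegral_powerLawPotential_closedBall_zpow (hα : 1 < α) (hμ : μ (closedBall 0 1) = 1)
    {n : ℤ} (hn : 0 ≤ n) :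
    ∫ x in closedBall 0 ((p : ℝ) ^ n), powerLawPotential p α b x ∂μ =
      b * (1 - (p : ℝ)⁻¹) * (p : ℝ) ^ (α * ((n : ℝ) + 1)) / ((p : ℝ) ^ α - 1) := by
  have hp1 : (1 : ℝ) < p := Nat.one_lt_cast.mpr hp.out.one_lt
  have hp0 : (0 : ℝ) < p := zero_lt_one.trans hp1
  have hq : (p : ℝ) ^ α - 1 ≠ 0 := (sub_pos.mpr (Real.one_lt_rpow hp1 (by linarith))).ne'
  induction n, hn using Int.leInduction with
  | base =>
    rw [setIntegral_congr_fun measurableSet_closedBall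
      (fun x hx => powerLawPotential_of_norm_le_one (by simpa using hx)), setIntegral_const,
      Padic.measureReal_closedBall_zpow μ hμ, Real.rpow_neg hp0.le]
    have hp0' : (p : ℝ) ≠ 0 := hp0.ne'
    simp only [zpow_zero, one_smul, Int.cast_zero, zero_add, mul_one]
    field_simp
  | succ n hn ih =>
    have hpow : ((p : ℝ) ^ (n + 1)) ^ (α - 1) * (p : ℝ) ^ (n + 1) =
        (p : ℝ) ^ (α * ((n : ℝ) + 1)) := by
      rw [Real.rpow_sub_one (by positivity), div_mul_cancel₀ _ (by positivity),
        ← Real.rpow_intCast_mul hp0.le]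
      push_cast
      ring_nf
    have hsucc : (p : ℝ) ^ (α * (((n + 1 : ℤ) : ℝ) + 1)) =
        (p : ℝ) ^ (α * ((n : ℝ) + 1)) * (p : ℝ) ^ α := by
      rw [← Real.rpow_add hp0]
      push_cast
      ring_nf
    have hdiff : (p : ℝ) ^ (n + 1) - (p : ℝ) ^ n = (p : ℝ) ^ (n + 1) * (1 - (p : ℝ)⁻¹) := by
      rw [zpow_add_one₀ hp0.ne']
      field_simp
    have hshell : b * ((p : ℝ) ^ (n + 1)) ^ (α - 1) * ((p : ℝ) ^ (n + 1) * (1 - (p : ℝ)⁻¹)) =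
        b * (1 - (p : ℝ)⁻¹) * (p : ℝ) ^ (α * ((n : ℝ) + 1)) := by
      rw [← hpow]
      ring
    rw [setIntegral_powerLawPotential_closedBall_zpow_succ μ hμ hn, ih, hsucc, hdiff, hshell]
    field_simp
    ring

end powerLawPotential

theorem padic_powerlaw_ball_volumes_general
    (p : ℕ) [Fact p.Prime]
    [MeasurableSpace ℚ_[p]] [BorelSpace ℚ_[p]]
    (μ : Measure ℚ_[p]) [μ.IsAddHaarMeasure]
    (hμ : μ (Metric.closedBall 0 1) = 1)
    (α b : ℝ) (hα : 1 < α)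
    (u : ℚ_[p] → ℝ)
    (hu : ∀ x : ℚ_[p], u x =
      b * ((1 - (p : ℝ)⁻¹) / (1 - (p : ℝ) ^ (-α)) * Omega ‖x‖ +
        ‖x‖ ^ (α - 1) * (1 - Omega ‖x‖))) :
    ∀ i : ℤ, 0 ≤ i →
      Integrable (fun y : ℚ_[p] => u y * Omega (‖y‖ * (p : ℝ) ^ (-i))) μ ∧
      ∫ y : ℚ_[p], u y * Omega (‖y‖ * (p : ℝ) ^ (-i)) ∂μ =
        b * (1 - (p : ℝ)⁻¹) * (p : ℝ) ^ (α * ((i : ℝ) + 1)) / ((p : ℝ) ^ α - 1) := by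
  intro i hi
  have hp : (0 : ℝ) < p := by exact_mod_cast (Fact.out : p.Prime).pos
  have hu_eq : u = powerLawPotential p α b := funext hu
  have hball : (fun y : ℚ_[p] => u y * Omega (‖y‖ * (p : ℝ) ^ (-i))) =
      (closedBall 0 ((p : ℝ) ^ i)).indicator (powerLawPotential p α b) := by
    ext y
    rw [zpow_neg, mul_Omega_norm_mul_inv_eq_indicator (zpow_pos hp i), hu_eq]
  rw [hball, integrable_indicator_iff measurableSet_closedBall,
    integral_indicator measurableSet_closedBall]
  exact ⟨integrableOn_powerLawPotential_closedBall_zpow μ hi,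
    setIntegral_powerLawPotential_closedBall_zpow μ hα hμ hi⟩

/-- for the power-law potential `u`, the `u`-weighted volume of the ball of
radius `p^i` equals `b(1-p⁻¹)p^{α(i+1)}/(p^α - 1)` for every integer `i ≥ 0`. -/
theorem padic_powerlaw_ball_volumes
    (p : ℕ) [Fact p.Prime]
    [MeasurableSpace ℚ_[p]] [BorelSpace ℚ_[p]]
    (μ : Measure ℚ_[p]) [μ.IsAddHaarMeasure]
    (hμ : μ (Metric.closedBall 0 1) = 1)
    (α b : ℝ) (hα : 1 < α) (hb : 0 < b)
    (u : ℚ_[p] → ℝ)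
    (hu : ∀ x : ℚ_[p], u x =
      b * ((1 - (p : ℝ)⁻¹) / (1 - (p : ℝ) ^ (-α)) * Omega ‖x‖ +
        ‖x‖ ^ (α - 1) * (1 - Omega ‖x‖))) :
    ∀ i : ℤ, 0 ≤ i →
      Integrable (fun y : ℚ_[p] => u y * Omega (‖y‖ * (p : ℝ) ^ (-i))) μ ∧
      ∫ y : ℚ_[p], u y * Omega (‖y‖ * (p : ℝ) ^ (-i)) ∂μ =
        b * (1 - (p : ℝ)⁻¹) * (p : ℝ) ^ (α * ((i : ℝ) + 1)) / ((p : ℝ) ^ α - 1) :=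
  padic_powerlaw_ball_volumes_general p μ hμ α b hα u hu
end

section
/- Let p be a prime, α > 1, b > 0, and set λ = b·Γ_p(α)·Γ_p(−α) and V_i = b(1 − p⁻¹)p^{α(i+1)}/(p^{α} − 1) for i ∈ ℤ, i ≥ 0. Then for every integer k ≥ 1 and every real s with s ≠ b·p^{−k}·p^{α}·Γ_p(−α), all the series below converge and s + (1 − p^{−(α+1)})·Σ_{i=k}^{∞} p^{−i(α+1)}V_i − λ·V_0·V_{k−1}^{−1}(1 − V_{k−1}/V_k)^{−1}(1 − 3V_{k−1}/V_k + 2V_{k−1}²/V_k²) − λ·Σ_{i=k}^{∞} V_0·V_{i−1}^{−1}(1 − V_{i−1}/V_i) + 2λ·V_0·V_{k−1}^{−1}(1 − V_{k−1}/V_k) = s − b·p^{−k}·p^{α}·Γ_p(−α); consequently the coefficient function g_k(s) = V_0·V_{k−1}^{−1/2}(1 − V_{k−1}/V_k)^{1/2} divided by the displayed bracket equals (b·p^{α}(1 − p⁻¹))^{1/2}·p^{−αk/2}/(s − b·p^{−k}·p^{α}·Γ_p(−α)). -/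
/-- with `V_i = b(1-p⁻¹)p^{α(i+1)}/(p^α - 1)` and
`λ = b Γ_p(α) Γ_p(-α)`, for every `k ≥ 1` the bracket in the coefficient function `g_k(s)`
collapses to `s - b p^{-k} p^α Γ_p(-α)`, so that
`g_k(s) = (b p^α (1-p⁻¹))^{1/2} p^{-αk/2} / (s - b p^{-k} p^α Γ_p(-α))`. -/
theorem padic_gk_coefficient
    (p : ℕ) [Fact p.Prime] (α b lam : ℝ) (hα : 1 < α) (hb : 0 < b)
    (hlam : lam = b * ((1 - (p : ℝ) ^ (α - 1)) / (1 - (p : ℝ) ^ (-α)))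
        * ((1 - (p : ℝ) ^ (-α - 1)) / (1 - (p : ℝ) ^ α)))
    (V : ℕ → ℝ)
    (hV : ∀ i : ℕ, V i =
      b * (1 - (p : ℝ)⁻¹) * (p : ℝ) ^ (α * ((i : ℝ) + 1)) / ((p : ℝ) ^ α - 1)) :
    ∀ k : ℕ, 1 ≤ k → ∀ s : ℝ,
      s ≠ b * (p : ℝ) ^ (-(k : ℝ)) * (p : ℝ) ^ α *
            ((1 - (p : ℝ) ^ (-α - 1)) / (1 - (p : ℝ) ^ α)) →
      Summable (fun n : ℕ => (p : ℝ) ^ (-((k : ℝ) + n) * (α + 1)) * V (k + n)) ∧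
      Summable (fun n : ℕ => V 0 * (V (k + n - 1))⁻¹ * (1 - V (k + n - 1) / V (k + n))) ∧
      s + (1 - (p : ℝ) ^ (-(α + 1))) *
            (∑' n : ℕ, (p : ℝ) ^ (-((k : ℝ) + n) * (α + 1)) * V (k + n)) -
          lam * (V 0 * (V (k - 1))⁻¹ * (1 - V (k - 1) / V k)⁻¹ *
            (1 - 3 * (V (k - 1) / V k) + 2 * (V (k - 1) / V k) ^ 2)) -
          lam * (∑' n : ℕ, V 0 * (V (k + n - 1))⁻¹ * (1 - V (k + n - 1) / V (k + n))) +
          2 * lam * (V 0 * (V (k - 1))⁻¹ * (1 - V (k - 1) / V k)) =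
        s - b * (p : ℝ) ^ (-(k : ℝ)) * (p : ℝ) ^ α *
            ((1 - (p : ℝ) ^ (-α - 1)) / (1 - (p : ℝ) ^ α)) ∧
      V 0 * (V (k - 1)) ^ (-(1 / 2 : ℝ)) * (1 - V (k - 1) / V k) ^ ((1 / 2 : ℝ)) /
          (s + (1 - (p : ℝ) ^ (-(α + 1))) *
              (∑' n : ℕ, (p : ℝ) ^ (-((k : ℝ) + n) * (α + 1)) * V (k + n)) -
            lam * (V 0 * (V (k - 1))⁻¹ * (1 - V (k - 1) / V k)⁻¹ *
              (1 - 3 * (V (k - 1) / V k) + 2 * (V (k - 1) / V k) ^ 2)) -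
            lam * (∑' n : ℕ, V 0 * (V (k + n - 1))⁻¹ * (1 - V (k + n - 1) / V (k + n))) +
            2 * lam * (V 0 * (V (k - 1))⁻¹ * (1 - V (k - 1) / V k))) =
        (b * (p : ℝ) ^ α * (1 - (p : ℝ)⁻¹)) ^ ((1 / 2 : ℝ)) * (p : ℝ) ^ (-(α * k) / 2) /
          (s - b * (p : ℝ) ^ (-(k : ℝ)) * (p : ℝ) ^ α *
            ((1 - (p : ℝ) ^ (-α - 1)) / (1 - (p : ℝ) ^ α))) := by
  have hp1 : (1:ℝ) < (p:ℝ) := by exact_mod_cast (Fact.out : p.Prime).one_lt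
  have hP0 : (0:ℝ) < (p:ℝ) := by linarith
  have hPinv : (0:ℝ) < 1 - (p:ℝ)⁻¹ := by
    have : (p:ℝ)⁻¹ < 1 := inv_lt_one_of_one_lt₀ hp1
    linarith
  have hy1 : (1:ℝ) < (p:ℝ) ^ α :=
    (Real.one_lt_rpow_iff_of_pos hP0).mpr (Or.inl ⟨hp1, by linarith⟩)
  have hym : (0:ℝ) < (p:ℝ) ^ α - 1 := by linarith
  have hQ0 : (0:ℝ) < (p:ℝ) ^ (-α) := Real.rpow_pos_of_pos hP0 _
  have hQ1 : (p:ℝ) ^ (-α) < 1 := Real.rpow_lt_one_of_one_lt_of_neg hp1 (by linarith)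
  have hVpos : ∀ m : ℕ, 0 < V m := by
    intro m; rw [hV m]
    exact div_pos (mul_pos (mul_pos hb hPinv) (Real.rpow_pos_of_pos hP0 _)) hym
  have hVmul : ∀ (m : ℕ) (t : ℝ), V m * (p:ℝ) ^ t =
      b * (1 - (p:ℝ)⁻¹) * (p:ℝ) ^ (α * ((m:ℝ) + 1) + t) / ((p:ℝ) ^ α - 1) := by
    intro m t
    rw [hV m, Real.rpow_add hP0]
    ring
  have key : ∀ m : ℕ, V m = V (m+1) * (p:ℝ) ^ (-α) := by
    intro m
    rw [hVmul (m+1) (-α), hV m]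
    congr 2
    push_cast; ring
  have hrat : ∀ m : ℕ, V m / V (m+1) = (p:ℝ) ^ (-α) := by
    intro m
    rw [key m, mul_comm, mul_div_assoc, div_self (hVpos (m+1)).ne', mul_one]
  have keyd : ∀ m : ℕ, V 0 = V m * (p:ℝ) ^ (-(α * (m:ℝ))) := by
    intro m
    rw [hVmul m (-(α * (m:ℝ))), hV 0]
    congr 2
    push_cast; ring
  have hdiv : ∀ m : ℕ, V 0 * (V m)⁻¹ = (p:ℝ) ^ (-(α * (m:ℝ))) := by
    intro m
    rw [keyd m, mul_comm (V m), mul_assoc, mul_inv_cancel₀ (hVpos m).ne', mul_one]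
  have hgeo : ∀ n : ℕ, (p:ℝ) ^ (-(n:ℝ)) = ((p:ℝ)⁻¹) ^ n := by
    intro n
    rw [inv_pow, ← Real.rpow_natCast (p:ℝ) n, ← Real.rpow_neg hP0.le]
  have hQpow : ∀ n : ℕ, ((p:ℝ) ^ (-α)) ^ n = (p:ℝ) ^ (-(α * (n:ℝ))) := by
    intro n
    rw [← Real.rpow_natCast ((p:ℝ) ^ (-α)) n, ← Real.rpow_mul hP0.le]
    congr 1; ring
  intro k hk s _hs
  obtain ⟨j, rfl⟩ : ∃ j, k = j + 1 := ⟨k - 1, by omega⟩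
  have idx1 : ∀ n : ℕ, j + 1 + n - 1 = j + n := fun n => by omega
  have idx2 : ∀ n : ℕ, j + 1 + n = j + n + 1 := fun n => by omega
  have idx0 : j + 1 - 1 = j := by omega
  have idx3 : ∀ n : ℕ, j + n + 1 - 1 = j + n := fun n => by omega
  simp only [idx1, idx2, idx0, idx3]
  -- closed form of first summand
  have hf1 : ∀ n : ℕ,
      (p : ℝ) ^ (-(((j+1:ℕ) : ℝ) + n) * (α + 1)) * V (j + n + 1) =
        (b * (1 - (p:ℝ)⁻¹) / ((p:ℝ) ^ α - 1) * (p:ℝ) ^ (α - ((j:ℝ) + 1))) * ((p:ℝ)⁻¹) ^ n := by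
    intro n
    rw [hV (j + n + 1)]
    have e : (-(((j+1:ℕ) : ℝ) + n) * (α + 1)) + (α * (((j+n+1:ℕ):ℝ) + 1)) =
        (α - ((j:ℝ) + 1)) + (-(n:ℝ)) := by push_cast; ring
    calc (p : ℝ) ^ (-(((j+1:ℕ) : ℝ) + n) * (α + 1)) *
          (b * (1 - (p:ℝ)⁻¹) * (p:ℝ) ^ (α * (((j+n+1:ℕ):ℝ) + 1)) / ((p:ℝ) ^ α - 1))
        = (b * (1 - (p:ℝ)⁻¹) / ((p:ℝ) ^ α - 1)) *
            ((p : ℝ) ^ (-(((j+1:ℕ) : ℝ) + n) * (α + 1)) * (p:ℝ) ^ (α * (((j+n+1:ℕ):ℝ) + 1))) := by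
          ring
      _ = (b * (1 - (p:ℝ)⁻¹) / ((p:ℝ) ^ α - 1)) * (p:ℝ) ^ ((α - ((j:ℝ) + 1)) + (-(n:ℝ))) := by
          rw [← Real.rpow_add hP0, e]
      _ = _ := by
          rw [Real.rpow_add hP0, hgeo n]; ring
  have hinv0 : (0:ℝ) ≤ (p:ℝ)⁻¹ := by positivity
  have hinv1 : (p:ℝ)⁻¹ < 1 := inv_lt_one_of_one_lt₀ hp1
  have hsum1 : Summable (fun n : ℕ =>
      (p : ℝ) ^ (-(((j+1:ℕ) : ℝ) + n) * (α + 1)) * V (j + n + 1)) :=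
    (((summable_geometric_of_lt_one hinv0 hinv1).mul_left _)).congr (fun n => (hf1 n).symm)
  have hT1 : (∑' n : ℕ, (p : ℝ) ^ (-(((j+1:ℕ) : ℝ) + n) * (α + 1)) * V (j + n + 1)) =
      b * (1 - (p:ℝ)⁻¹) / ((p:ℝ) ^ α - 1) * (p:ℝ) ^ (α - ((j:ℝ) + 1)) * (1 - (p:ℝ)⁻¹)⁻¹ := by
    rw [tsum_congr hf1, tsum_mul_left, tsum_geometric_of_lt_one hinv0 hinv1]
  -- closed form of second summand
  have hf2 : ∀ n : ℕ,
      V 0 * (V (j + n))⁻¹ * (1 - V (j + n) / V (j + n + 1)) =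
        ((1 - (p:ℝ) ^ (-α)) * (p:ℝ) ^ (-(α * (j:ℝ)))) * ((p:ℝ) ^ (-α)) ^ n := by
    intro n
    calc V 0 * (V (j + n))⁻¹ * (1 - V (j + n) / V (j + n + 1))
        = (p:ℝ) ^ (-(α * ((j+n:ℕ):ℝ))) * (1 - (p:ℝ) ^ (-α)) := by rw [hdiv, hrat]
      _ = (1 - (p:ℝ) ^ (-α)) * (p:ℝ) ^ (-(α * (j:ℝ)) + -(α * (n:ℝ))) := by
          rw [show -(α * ((j+n:ℕ):ℝ)) = -(α * (j:ℝ)) + -(α * (n:ℝ)) from by push_cast; ring]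
          ring
      _ = _ := by rw [Real.rpow_add hP0, hQpow n]; ring
  have hsum2 : Summable (fun n : ℕ =>
      V 0 * (V (j + n))⁻¹ * (1 - V (j + n) / V (j + n + 1))) :=
    (((summable_geometric_of_lt_one hQ0.le hQ1).mul_left _)).congr (fun n => (hf2 n).symm)
  have hT2 : (∑' n : ℕ, V 0 * (V (j + n))⁻¹ * (1 - V (j + n) / V (j + n + 1))) =
      (p:ℝ) ^ (-(α * (j:ℝ))) := by
    rw [tsum_congr hf2, tsum_mul_left, tsum_geometric_of_lt_one hQ0.le hQ1,
      mul_comm (1 - (p:ℝ) ^ (-α)), mul_assoc,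
      mul_inv_cancel₀ (by linarith : (1:ℝ) - (p:ℝ) ^ (-α) ≠ 0), mul_one]
  -- the main closed-form for the first tsum contribution
  have h1 : (1 - (p:ℝ) ^ (-(α + 1))) *
      (b * (1 - (p:ℝ)⁻¹) / ((p:ℝ) ^ α - 1) * (p:ℝ) ^ (α - ((j:ℝ) + 1)) * (1 - (p:ℝ)⁻¹)⁻¹) =
      -(b * (p:ℝ) ^ (-(((j+1:ℕ)):ℝ)) * (p:ℝ) ^ α *
        ((1 - (p:ℝ) ^ (-α - 1)) / (1 - (p:ℝ) ^ α))) := by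
    have eA : (p:ℝ) ^ (-(α + 1)) = (p:ℝ) ^ (-α - 1) := by congr 1; ring
    have eB : (p:ℝ) ^ (α - ((j:ℝ) + 1)) = (p:ℝ) ^ α * ((p:ℝ) ^ ((j:ℝ) + 1))⁻¹ := by
      rw [Real.rpow_sub hP0, div_eq_mul_inv]
    have eK : (p:ℝ) ^ (-(((j+1:ℕ)):ℝ)) = ((p:ℝ) ^ ((j:ℝ) + 1))⁻¹ := by
      rw [Real.rpow_neg hP0.le]
      congr 2
      push_cast; ring
    rw [eA, eB, eK]
    set c : ℝ := 1 - (p:ℝ)⁻¹ with hc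
    set y : ℝ := (p:ℝ) ^ α with hy
    set Z : ℝ := (p:ℝ) ^ ((j:ℝ) + 1) with hZdef
    set A : ℝ := (p:ℝ) ^ (-α - 1) with hA
    have hZ : Z ≠ 0 := (Real.rpow_pos_of_pos hP0 _).ne'
    have hc0 : c ≠ 0 := hPinv.ne'
    have hym' : y - 1 ≠ 0 := hym.ne'
    have h1y : 1 - y ≠ 0 := by
      have : (1:ℝ) < y := hy1
      linarith
    field_simp
    ring
  have hfac : (p:ℝ) ^ (-(α * (j:ℝ))) * (1 - (p:ℝ) ^ (-α))⁻¹ *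
      (1 - 3 * (p:ℝ) ^ (-α) + 2 * ((p:ℝ) ^ (-α)) ^ 2) =
      (p:ℝ) ^ (-(α * (j:ℝ))) * (1 - 2 * (p:ℝ) ^ (-α)) := by
    have h : (1:ℝ) - (p:ℝ) ^ (-α) ≠ 0 := by linarith
    field_simp
    ring
  have heq : s + (1 - (p : ℝ) ^ (-(α + 1))) *
        (∑' n : ℕ, (p : ℝ) ^ (-(((j+1:ℕ) : ℝ) + n) * (α + 1)) * V (j + n + 1)) -
      lam * (V 0 * (V j)⁻¹ * (1 - V j / V (j+1))⁻¹ *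
        (1 - 3 * (V j / V (j+1)) + 2 * (V j / V (j+1)) ^ 2)) -
      lam * (∑' n : ℕ, V 0 * (V (j + n))⁻¹ * (1 - V (j + n) / V (j + n + 1))) +
      2 * lam * (V 0 * (V j)⁻¹ * (1 - V j / V (j+1))) =
      s - b * (p : ℝ) ^ (-(((j+1:ℕ)) : ℝ)) * (p : ℝ) ^ α *
        ((1 - (p : ℝ) ^ (-α - 1)) / (1 - (p : ℝ) ^ α)) := by
    rw [hT1, hT2, hdiv j, hrat j, h1, hfac]
    ring
  refine ⟨hsum1, hsum2, heq, ?_⟩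
  rw [heq]
  congr 1
  -- numerator identity
  rw [hrat j]
  have sq_rpow : ∀ x e : ℝ, 0 ≤ x → (x ^ e) ^ 2 = x ^ (e * 2) := by
    intro x e hx
    rw [← Real.rpow_natCast (x ^ e) 2, ← Real.rpow_mul hx]
    norm_num
  have hN1pos : 0 < V 0 * (V j) ^ (-(1/2 : ℝ)) * (1 - (p:ℝ) ^ (-α)) ^ ((1/2 : ℝ)) :=
    mul_pos (mul_pos (hVpos 0) (Real.rpow_pos_of_pos (hVpos j) _))
      (Real.rpow_pos_of_pos (by linarith) _)
  have hMpos : (0:ℝ) < b * (p:ℝ) ^ α * (1 - (p:ℝ)⁻¹) :=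
    mul_pos (mul_pos hb (Real.rpow_pos_of_pos hP0 _)) hPinv
  have hN2pos : 0 < (b * (p:ℝ) ^ α * (1 - (p:ℝ)⁻¹)) ^ ((1/2 : ℝ)) *
      (p:ℝ) ^ (-(α * ((j+1:ℕ):ℝ)) / 2) :=
    mul_pos (Real.rpow_pos_of_pos hMpos _) (Real.rpow_pos_of_pos hP0 _)
  have hsq : (V 0 * (V j) ^ (-(1/2 : ℝ)) * (1 - (p:ℝ) ^ (-α)) ^ ((1/2 : ℝ))) ^ 2 =
      ((b * (p:ℝ) ^ α * (1 - (p:ℝ)⁻¹)) ^ ((1/2 : ℝ)) *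
        (p:ℝ) ^ (-(α * ((j+1:ℕ):ℝ)) / 2)) ^ 2 := by
    rw [mul_pow, mul_pow, mul_pow, sq_rpow _ _ (hVpos j).le,
      sq_rpow _ _ (by linarith : (0:ℝ) ≤ 1 - (p:ℝ) ^ (-α)),
      sq_rpow _ _ hMpos.le, sq_rpow _ _ hP0.le]
    have h2a : (V j) ^ ((-(1/2 : ℝ)) * 2) = (V j)⁻¹ := by
      rw [show (-(1/2 : ℝ)) * 2 = -1 from by norm_num, Real.rpow_neg_one]
    have h2b : ((1 - (p:ℝ) ^ (-α))) ^ (((1/2 : ℝ)) * 2) = 1 - (p:ℝ) ^ (-α) := by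
      rw [show ((1/2 : ℝ)) * 2 = 1 from by norm_num, Real.rpow_one]
    have h2c : (b * (p:ℝ) ^ α * (1 - (p:ℝ)⁻¹)) ^ (((1/2 : ℝ)) * 2) =
        b * (p:ℝ) ^ α * (1 - (p:ℝ)⁻¹) := by
      rw [show ((1/2 : ℝ)) * 2 = 1 from by norm_num, Real.rpow_one]
    rw [h2a, h2b, h2c]
    have ej : (p:ℝ) ^ (α * ((j:ℝ) + 1)) = (p:ℝ) ^ (α * (j:ℝ)) * (p:ℝ) ^ α := by
      rw [← Real.rpow_add hP0]; congr 1; ring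
    have e0 : (p:ℝ) ^ (α * (((0:ℕ):ℝ) + 1)) = (p:ℝ) ^ α := by
      congr 1; push_cast; ring
    have ek2 : (p:ℝ) ^ ((-(α * ((j+1:ℕ):ℝ)) / 2) * 2) =
        ((p:ℝ) ^ (α * (j:ℝ)))⁻¹ * ((p:ℝ) ^ α)⁻¹ := by
      rw [show (-(α * ((j+1:ℕ):ℝ)) / 2) * 2 = -(α * (j:ℝ) + α) from by push_cast; ring,
        Real.rpow_neg hP0.le, Real.rpow_add hP0, mul_inv]
    rw [hV 0, hV j, e0, ej, ek2, Real.rpow_neg hP0.le]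
    set c : ℝ := 1 - (p:ℝ)⁻¹ with hc
    set x : ℝ := (p:ℝ) ^ (α * (j:ℝ)) with hxdef
    set y : ℝ := (p:ℝ) ^ α with hydef
    have hx : x ≠ 0 := (Real.rpow_pos_of_pos hP0 _).ne'
    have hy : y ≠ 0 := (Real.rpow_pos_of_pos hP0 _).ne'
    have hy1' : y - 1 ≠ 0 := hym.ne'
    have hc0 : c ≠ 0 := hPinv.ne'
    have hb0 : b ≠ 0 := hb.ne'
    field_simp
  calc V 0 * (V j) ^ (-(1/2 : ℝ)) * (1 - (p:ℝ) ^ (-α)) ^ ((1/2 : ℝ))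
      = Real.sqrt ((V 0 * (V j) ^ (-(1/2 : ℝ)) * (1 - (p:ℝ) ^ (-α)) ^ ((1/2 : ℝ))) ^ 2) :=
        (Real.sqrt_sq hN1pos.le).symm
    _ = Real.sqrt (((b * (p:ℝ) ^ α * (1 - (p:ℝ)⁻¹)) ^ ((1/2 : ℝ)) *
          (p:ℝ) ^ (-(α * ((j+1:ℕ):ℝ)) / 2)) ^ 2) := by rw [hsq]
    _ = _ := Real.sqrt_sq hN2pos.le
end

section
/- Let p be a prime, α > 2, b > 0, and define u : ℚ_p → ℝ by u(x) = b·((1 − p⁻¹)/(1 − p^{−α})·Ω(|x|_p) + |x|_p^{α−1}·(1 − Ω(|x|_p))). Set N = (1 − p^{−α})/(1 − p⁻¹) + (1 − p⁻¹)/(p^{α−2} − 1) and define f^{st} : ℚ_p → ℝ by f^{st}(x) = N^{−1}·((1 − p^{−α})/(1 − p⁻¹)·Ω(|x|_p) + |x|_p^{−α+1}·(1 − Ω(|x|_p))). Then (i) f^{st} is μ-integrable with ∫_{ℚ_p} f^{st}(x) dμ(x) = 1, and (ii) for every x ∈ ℚ_p the function y ↦ (u(y)f^{st}(y) − u(x)f^{st}(x))/|x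 − y|_p^{α+1} is μ-integrable with ∫_{ℚ_p} (u(y)f^{st}(y) − u(x)f^{st}(x))/|x − y|_p^{α+1} dμ(y) = 0; that is, f^{st} is the normalized stationary solution of the equation of p-adic random walk in the potential u. -/
open MeasureTheory

/-!
The product `u · f^{st}` is the constant `b / N`: on `ℤ_p` the two constant values are reciprocal,
and outside `ℤ_p` one has `|x|^{α-1} · |x|^{1-α} = 1`. Hence the integrand of the stationarity
equation vanishes identically, and the content of the theorem is the normalization `∫ f^{st} = 1`.

The ball `p^{-k} ℤ_p` is the disjoint union of the `p^k` translates `j / p^k + ℤ_p`, `j < p^k`,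
so it has measure `p^k`, and the sphere `|x|_p = p^{k+1}` has measure `(1 - p⁻¹) p^{k+1}`.
Summing the geometric series, `∫_{|x|_p > 1} |x|_p^{1-α} = (1 - p⁻¹) / (p^{α-2} - 1)`,
while `ℤ_p` contributes `(1 - p^{-α}) / (1 - p⁻¹)`; together this is `N`.
-/

open Metric Function
open scoped ENNReal

/-- `u = b · powerProfile a (α - 1) ∘ ‖·‖` and `f^{st} = N⁻¹ · powerProfile a⁻¹ (1 - α) ∘ ‖·‖`
with `a = (1 - p⁻¹) / (1 - p^{-α})`. -/
noncomputable def powerProfile (a γ r : ℝ) : ℝ := a * Omega r + r ^ γ * (1 - Omega r)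

lemma powerProfile_of_le_one {a γ r : ℝ} (h : r ≤ 1) : powerProfile a γ r = a := by
  simp [powerProfile, Omega, h]

lemma powerProfile_of_one_lt {a γ r : ℝ} (h : 1 < r) : powerProfile a γ r = r ^ γ := by
  simp [powerProfile, Omega, h.not_ge]

lemma powerProfile_inv_mul_powerProfile {a γ δ : ℝ} (ha : a ≠ 0) (hγδ : γ + δ = 0) (r : ℝ) :
    powerProfile a⁻¹ γ r * powerProfile a δ r = 1 := by
  rcases le_or_gt r 1 with hr | hr
  · rw [powerProfile_of_le_one hr, powerProfile_of_le_one hr, inv_mul_cancel₀ ha]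
  · rw [powerProfile_of_one_lt hr, powerProfile_of_one_lt hr,
      ← Real.rpow_add (zero_lt_one.trans hr), hγδ, Real.rpow_zero]

lemma powerProfile_nonneg {a γ r : ℝ} (ha : 0 ≤ a) (hr : 0 ≤ r) : 0 ≤ powerProfile a γ r := by
  rcases le_or_gt r 1 with h | h
  · rwa [powerProfile_of_le_one h]
  · rw [powerProfile_of_one_lt h]
    exact Real.rpow_nonneg hr γ

lemma measurable_powerProfile (a γ : ℝ) : Measurable (powerProfile a γ) := by
  have hΩ : Measurable Omega := Measurable.ite measurableSet_Iic measurable_const measurable_const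
  unfold powerProfile
  fun_prop

lemma integrable_and_integral_eq_of_lintegral_ofReal_eq {X : Type*} [MeasurableSpace X]
    {μ : Measure X} {f : X → ℝ} (hfm : AEStronglyMeasurable f μ) (hf : 0 ≤ᵐ[μ] f) {c : ℝ}
    (hc : 0 ≤ c) (h : ∫⁻ x, ENNReal.ofReal (f x) ∂μ = ENNReal.ofReal c) :
    Integrable f μ ∧ ∫ x, f x ∂μ = c :=
  ⟨⟨hfm, (hasFiniteIntegral_iff_ofReal hf).mpr (h ▸ ENNReal.ofReal_lt_top)⟩,
    by rw [integral_eq_lintegral_of_nonneg_ae hf hfm, h, ENNReal.toReal_ofReal hc]⟩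

namespace Padic

variable {p : ℕ} [hp : Fact p.Prime]

lemma norm_div_pow_p (x : ℚ_[p]) (k : ℕ) : ‖x / (p : ℚ_[p]) ^ k‖ = ‖x‖ * (p : ℝ) ^ k := by
  rw [norm_div, norm_p_pow, zpow_neg, zpow_natCast, div_inv_eq_mul]

lemma closedBall_zero_pow_eq_biUnion (k : ℕ) :
    closedBall (0 : ℚ_[p]) ((p : ℝ) ^ k) =
      ⋃ j ∈ Finset.range (p ^ k), closedBall ((j : ℚ_[p]) / (p : ℚ_[p]) ^ k) 1 := by
  have hpk : (0 : ℝ) < (p : ℝ) ^ k := pow_pos (mod_cast hp.out.pos) k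
  ext x
  simp only [Set.mem_iUnion, Finset.mem_range, exists_prop, mem_closedBall_zero_iff]
  constructor
  · intro hx
    let z : ℤ_[p] := ⟨x * (p : ℚ_[p]) ^ k, by
      rw [norm_mul, norm_p_pow, zpow_neg, zpow_natCast]
      exact mul_inv_le_one_of_le₀ hx hpk.le⟩
    refine ⟨z.appr k, z.appr_lt k, ?_⟩
    have hz : ‖z - z.appr k‖ ≤ 1 / (p : ℝ) ^ k := by
      rw [one_div, ← zpow_natCast, ← zpow_neg]
      exact ((z - z.appr k).norm_le_pow_iff_mem_span_pow k).mpr (z.appr_spec k)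
    have hx : x - (z.appr k : ℚ_[p]) / (p : ℚ_[p]) ^ k
        = ((z - z.appr k : ℤ_[p]) : ℚ_[p]) / (p : ℚ_[p]) ^ k := by
      rw [PadicInt.coe_sub, PadicInt.coe_natCast, show (z : ℚ_[p]) = x * (p : ℚ_[p]) ^ k from rfl,
        sub_div, mul_div_cancel_right₀ _ (pow_ne_zero _ (mod_cast hp.out.ne_zero))]
    rw [mem_closedBall, dist_eq_norm, hx, norm_div_pow_p, ← PadicInt.norm_def]
    rwa [le_div_iff₀ hpk] at hz
  · rintro ⟨j, -, hj⟩
    have hc : ‖(j : ℚ_[p]) / (p : ℚ_[p]) ^ k‖ ≤ (p : ℝ) ^ k := by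
      rw [norm_div_pow_p]
      exact mul_le_of_le_one_left hpk.le (IsUltrametricDist.norm_natCast_le_one _ j)
    rw [mem_closedBall] at hj
    rw [← dist_zero_right] at hc ⊢
    exact (IsUltrametricDist.dist_triangle_max _ _ _).trans
      (max_le (hj.trans (one_le_pow₀ (mod_cast hp.out.one_lt.le))) hc)

lemma pairwiseDisjoint_closedBall_div_pow (k : ℕ) :
    (Finset.range (p ^ k) : Set ℕ).PairwiseDisjoint
      fun j => closedBall ((j : ℚ_[p]) / (p : ℚ_[p]) ^ k) 1 := by
  intro i hi j hj hij
  refine Set.disjoint_left.mpr fun x hxi hxj => hij ?_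
  rw [mem_closedBall] at hxi hxj
  have hdist := (IsUltrametricDist.dist_triangle_max _ x _).trans
    (max_le (dist_comm x _ ▸ hxi) hxj)
  have hdiff : ‖(((i : ℤ) - j : ℤ) : ℚ_[p])‖ ≤ (p : ℝ) ^ (-k : ℤ) := by
    rw [dist_eq_norm, ← sub_div, norm_div_pow_p] at hdist
    rw [zpow_neg, zpow_natCast, ← one_div, le_div_iff₀ (pow_pos (mod_cast hp.out.pos) k)]
    exact_mod_cast hdist
  rw [norm_int_le_pow_iff_dvd] at hdiff
  exact (Nat.ModEq.eq_of_lt_of_lt (Nat.modEq_iff_dvd.mpr (mod_cast hdiff))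
    (Finset.mem_range.mp hj) (Finset.mem_range.mp hi)).symm

lemma sphere_zero_pow_succ_eq_diff (k : ℕ) :
    sphere (0 : ℚ_[p]) ((p : ℝ) ^ (k + 1)) =
      closedBall 0 ((p : ℝ) ^ (k + 1)) \ closedBall 0 ((p : ℝ) ^ k) := by
  ext x
  have hdiscrete := norm_le_pow_iff_norm_lt_pow_add_one x k
  rw [← Nat.cast_succ, zpow_natCast, zpow_natCast] at hdiscrete
  rw [mem_sphere_zero_iff_norm, Set.mem_sdiff, mem_closedBall_zero_iff, mem_closedBall_zero_iff,
    hdiscrete, not_lt, le_antisymm_iff]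

lemma compl_closedBall_one_eq_iUnion_sphere :
    (closedBall (0 : ℚ_[p]) 1)ᶜ = ⋃ k : ℕ, sphere 0 ((p : ℝ) ^ (k + 1)) := by
  have hp1 : (1 : ℝ) < p := mod_cast hp.out.one_lt
  ext x
  simp only [Set.mem_compl_iff, mem_closedBall_zero_iff, Set.mem_iUnion,
    sphere_zero_pow_succ_eq_diff, Set.mem_sdiff]
  constructor
  · intro hx
    have hbounded : ∃ n : ℕ, ‖x‖ ≤ (p : ℝ) ^ n :=
      (pow_unbounded_of_one_lt ‖x‖ hp1).imp fun _ => le_of_lt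
    obtain ⟨m, hm⟩ : ∃ m, Nat.find hbounded = m + 1 :=
      Nat.exists_eq_succ_of_ne_zero fun h => hx (pow_zero (p : ℝ) ▸ h ▸ Nat.find_spec hbounded)
    exact ⟨m, hm ▸ Nat.find_spec hbounded, Nat.find_min hbounded (by omega)⟩
  · rintro ⟨k, -, hk⟩ hx
    exact hk (hx.trans (one_le_pow₀ hp1.le))

lemma pairwise_disjoint_sphere_zero_pow_succ :
    Pairwise (Disjoint on fun k : ℕ => sphere (0 : ℚ_[p]) ((p : ℝ) ^ (k + 1))) := by
  intro i j hij
  refine Set.disjoint_left.mpr fun x hxi hxj => hij ?_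
  rw [mem_sphere_zero_iff_norm] at hxi hxj
  exact Nat.succ_injective (Nat.pow_right_injective hp.out.two_le (mod_cast hxi.symm.trans hxj))

lemma one_sub_inv_div_rpow_sub_one_nonneg {γ : ℝ} (hγ : γ < -1) :
    0 ≤ (1 - (p : ℝ)⁻¹) / ((p : ℝ) ^ (-(γ + 1)) - 1) := by
  have hp1 : (1 : ℝ) < p := mod_cast hp.out.one_lt
  exact div_nonneg (sub_nonneg.mpr (inv_le_one_of_one_le₀ hp1.le))
    (sub_nonneg.mpr (Real.one_le_rpow hp1.le (by linarith)))

variable [MeasurableSpace ℚ_[p]] [BorelSpace ℚ_[p]] (μ : Measure ℚ_[p])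

lemma lintegral_compl_closedBall_one_comp_norm (F : ℝ → ℝ≥0∞) :
    ∫⁻ x in (closedBall (0 : ℚ_[p]) 1)ᶜ, F ‖x‖ ∂μ =
      ∑' k : ℕ, F ((p : ℝ) ^ (k + 1)) * μ (sphere 0 ((p : ℝ) ^ (k + 1))) := by
  rw [compl_closedBall_one_eq_iUnion_sphere,
    lintegral_iUnion (fun _ => isClosed_sphere.measurableSet)
      pairwise_disjoint_sphere_zero_pow_succ]
  congr 1 with k
  rw [setLIntegral_congr_fun isClosed_sphere.measurableSet fun x hx => by
    rw [mem_sphere_zero_iff_norm.mp hx], setLIntegral_const]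

variable [μ.IsAddHaarMeasure]

lemma measure_closedBall_zero_pow (k : ℕ) :
    μ (closedBall 0 ((p : ℝ) ^ k)) = p ^ k * μ (closedBall 0 1) := by
  rw [closedBall_zero_pow_eq_biUnion, measure_biUnion_finset
    (pairwiseDisjoint_closedBall_div_pow k) fun _ _ => measurableSet_closedBall]
  simp [μ.addHaar_closedBall_center]

lemma measure_sphere_zero_pow_succ (k : ℕ) :
    μ (sphere 0 ((p : ℝ) ^ (k + 1))) =
      ENNReal.ofReal ((1 - (p : ℝ)⁻¹) * (p : ℝ) ^ (k + 1)) * μ (closedBall 0 1) := by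
  have hp1 : (1 : ℝ) < p := mod_cast hp.out.one_lt
  have hshell : (p : ℝ≥0∞) ^ (k + 1) - (p : ℝ≥0∞) ^ k =
      ENNReal.ofReal ((1 - (p : ℝ)⁻¹) * (p : ℝ) ^ (k + 1)) := by
    rw [show (1 - (p : ℝ)⁻¹) * (p : ℝ) ^ (k + 1) = (p : ℝ) ^ (k + 1) - (p : ℝ) ^ k by
        field_simp; ring,
      ENNReal.ofReal_sub _ (by positivity), ENNReal.ofReal_pow (by positivity),
      ENNReal.ofReal_pow (by positivity), ENNReal.ofReal_natCast]
  rw [sphere_zero_pow_succ_eq_diff, measure_sdiff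
      (closedBall_subset_closedBall (pow_le_pow_right₀ hp1.le k.le_succ))
      measurableSet_closedBall.nullMeasurableSet measure_closedBall_lt_top.ne,
    measure_closedBall_zero_pow, measure_closedBall_zero_pow,
    ← ENNReal.sub_mul fun _ _ => measure_closedBall_lt_top.ne, hshell]

lemma lintegral_compl_closedBall_one_norm_rpow {β : ℝ} (hβ : β < -1) :
    ∫⁻ x in (closedBall (0 : ℚ_[p]) 1)ᶜ, ENNReal.ofReal (‖x‖ ^ β) ∂μ =
      ENNReal.ofReal ((1 - (p : ℝ)⁻¹) / ((p : ℝ) ^ (-(β + 1)) - 1)) * μ (closedBall 0 1) := by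
  have hp1 : (1 : ℝ) < p := mod_cast hp.out.one_lt
  have hc : 0 ≤ 1 - (p : ℝ)⁻¹ := sub_nonneg.mpr (inv_le_one_of_one_le₀ hp1.le)
  set q := (p : ℝ) ^ (β + 1) with hq
  have hq0 : 0 < q := Real.rpow_pos_of_pos (by positivity) _
  have hq1 : q < 1 := Real.rpow_lt_one_of_one_lt_of_neg hp1 (by linarith)
  have hterm (k : ℕ) : ENNReal.ofReal (((p : ℝ) ^ (k + 1)) ^ β) *
      ENNReal.ofReal ((1 - (p : ℝ)⁻¹) * (p : ℝ) ^ (k + 1)) =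
        ENNReal.ofReal ((1 - (p : ℝ)⁻¹) * q * q ^ k) := by
    rw [← ENNReal.ofReal_mul (by positivity), mul_left_comm,
      ← Real.rpow_add_one (by positivity), ← Real.rpow_pow_comm (by positivity), pow_succ, ← hq]
    congr 1
    ring
  have hsum : HasSum (fun k : ℕ => (1 - (p : ℝ)⁻¹) * q * q ^ k)
      ((1 - (p : ℝ)⁻¹) * q * (1 - q)⁻¹) :=
    (hasSum_geometric_of_lt_one hq0.le hq1).mul_left _
  rw [lintegral_compl_closedBall_one_comp_norm μ fun r => ENNReal.ofReal (r ^ β)]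
  simp_rw [measure_sphere_zero_pow_succ, ← mul_assoc, hterm, ENNReal.tsum_mul_right,
    ← ENNReal.ofReal_tsum_of_nonneg (fun k => by positivity) hsum.summable, hsum.tsum_eq]
  rw [Real.rpow_neg (by positivity), ← hq]
  congr 2
  field_simp

lemma lintegral_powerProfile_norm {a γ : ℝ} (ha : 0 ≤ a) (hγ : γ < -1) :
    ∫⁻ x, ENNReal.ofReal (powerProfile a γ ‖x‖) ∂μ =
      ENNReal.ofReal (a + (1 - (p : ℝ)⁻¹) / ((p : ℝ) ^ (-(γ + 1)) - 1)) * μ (closedBall 0 1) := by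
  have hball : ∫⁻ x in closedBall (0 : ℚ_[p]) 1, ENNReal.ofReal (powerProfile a γ ‖x‖) ∂μ =
      ENNReal.ofReal a * μ (closedBall 0 1) := by
    rw [setLIntegral_congr_fun measurableSet_closedBall fun x hx => by
      rw [powerProfile_of_le_one (mem_closedBall_zero_iff.mp hx)], setLIntegral_const]
  have hcompl : ∫⁻ x in (closedBall (0 : ℚ_[p]) 1)ᶜ, ENNReal.ofReal (powerProfile a γ ‖x‖) ∂μ =
      ∫⁻ x in (closedBall (0 : ℚ_[p]) 1)ᶜ, ENNReal.ofReal (‖x‖ ^ γ) ∂μ :=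
    setLIntegral_congr_fun measurableSet_closedBall.compl fun x hx => by
      rw [powerProfile_of_one_lt (not_le.mp (mt mem_closedBall_zero_iff.mpr hx))]
  rw [← lintegral_add_compl _ measurableSet_closedBall, hball, hcompl,
    lintegral_compl_closedBall_one_norm_rpow μ hγ, ← add_mul,
    ← ENNReal.ofReal_add ha (one_sub_inv_div_rpow_sub_one_nonneg hγ)]

lemma integrable_and_integral_powerProfile_norm (hμ : μ (closedBall 0 1) = 1) {a γ : ℝ} (ha : 0 ≤ a)
    (hγ : γ < -1) :
    Integrable (fun x => powerProfile a γ ‖x‖) μ ∧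
      ∫ x, powerProfile a γ ‖x‖ ∂μ = a + (1 - (p : ℝ)⁻¹) / ((p : ℝ) ^ (-(γ + 1)) - 1) := by
  refine integrable_and_integral_eq_of_lintegral_ofReal_eq
    (f := fun x => powerProfile a γ ‖x‖)
    ((measurable_powerProfile a γ).comp measurable_norm).aestronglyMeasurable
    (ae_of_all _ fun x => powerProfile_nonneg ha (norm_nonneg x))
    (add_nonneg ha (one_sub_inv_div_rpow_sub_one_nonneg hγ)) ?_
  rw [lintegral_powerProfile_norm μ ha hγ, hμ, mul_one]

end Padic

theorem padic_stationary_solution_general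
    (p : ℕ) [Fact p.Prime]
    [MeasurableSpace ℚ_[p]] [BorelSpace ℚ_[p]]
    (μ : Measure ℚ_[p]) [μ.IsAddHaarMeasure]
    (hμ : μ (Metric.closedBall 0 1) = 1)
    (α b : ℝ) (hα : 2 < α)
    (u : ℚ_[p] → ℝ)
    (hu : ∀ x : ℚ_[p], u x =
      b * ((1 - (p : ℝ)⁻¹) / (1 - (p : ℝ) ^ (-α)) * Omega ‖x‖ +
        ‖x‖ ^ (α - 1) * (1 - Omega ‖x‖)))
    (N : ℝ)
    (hN : N = (1 - (p : ℝ) ^ (-α)) / (1 - (p : ℝ)⁻¹) +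
      (1 - (p : ℝ)⁻¹) / ((p : ℝ) ^ (α - 2) - 1))
    (fst : ℚ_[p] → ℝ)
    (hfst : ∀ x : ℚ_[p], fst x =
      N⁻¹ * ((1 - (p : ℝ) ^ (-α)) / (1 - (p : ℝ)⁻¹) * Omega ‖x‖ +
        ‖x‖ ^ (-α + 1) * (1 - Omega ‖x‖))) :
    (Integrable fst μ ∧ ∫ x : ℚ_[p], fst x ∂μ = 1) ∧
    ∀ x : ℚ_[p],
      Integrable
        (fun y : ℚ_[p] => (u y * fst y - u x * fst x) / ‖x - y‖ ^ (α + 1)) μ ∧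
      ∫ y : ℚ_[p], (u y * fst y - u x * fst x) / ‖x - y‖ ^ (α + 1) ∂μ = 0 := by
  have hp1 : (1 : ℝ) < p := mod_cast (Fact.out : p.Prime).one_lt
  set a := (1 - (p : ℝ) ^ (-α)) / (1 - (p : ℝ)⁻¹) with ha_def
  have ha : 0 < a := div_pos (sub_pos.mpr (Real.rpow_lt_one_of_one_lt_of_neg hp1 (by linarith)))
    (sub_pos.mpr (inv_lt_one_of_one_lt₀ hp1))
  have hN0 : 0 < N := hN ▸ add_pos ha (div_pos (sub_pos.mpr (inv_lt_one_of_one_lt₀ hp1))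
    (sub_pos.mpr (Real.one_lt_rpow hp1 (by linarith))))
  have hfst_eq : fst = fun x => N⁻¹ * powerProfile a (-α + 1) ‖x‖ := funext hfst
  obtain ⟨hint, hval⟩ :=
    Padic.integrable_and_integral_powerProfile_norm μ hμ ha.le (γ := -α + 1) (by linarith)
  rw [show -(-α + 1 + 1) = α - 2 by ring, ← hN] at hval
  have hconst (x : ℚ_[p]) : u x * fst x = b * N⁻¹ := by
    rw [hu, hfst, ← inv_div, ← ha_def]
    calc _ = b * N⁻¹ * (powerProfile a⁻¹ (α - 1) ‖x‖ * powerProfile a (-α + 1) ‖x‖) := by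
          simp only [powerProfile]; ring
      _ = b * N⁻¹ := by rw [powerProfile_inv_mul_powerProfile ha.ne' (by ring), mul_one]
  refine ⟨⟨hfst_eq ▸ hint.const_mul _, ?_⟩, fun x => ?_⟩
  · rw [hfst_eq, integral_const_mul, hval, inv_mul_cancel₀ hN0.ne']
  · simp only [hconst, sub_self, zero_div]
    exact ⟨integrable_zero _ _ _, integral_zero _ _⟩

/-- for `α > 2`, `f^{st}` is the normalized stationary solution of the
equation of `p`-adic random walk in the power-law potential `u`. -/
theorem padic_stationary_solution
    (p : ℕ) [Fact p.Prime]
    [MeasurableSpace ℚ_[p]] [BorelSpace ℚ_[p]]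
    (μ : Measure ℚ_[p]) [μ.IsAddHaarMeasure]
    (hμ : μ (Metric.closedBall 0 1) = 1)
    (α b : ℝ) (hα : 2 < α) (hb : 0 < b)
    (u : ℚ_[p] → ℝ)
    (hu : ∀ x : ℚ_[p], u x =
      b * ((1 - (p : ℝ)⁻¹) / (1 - (p : ℝ) ^ (-α)) * Omega ‖x‖ +
        ‖x‖ ^ (α - 1) * (1 - Omega ‖x‖)))
    (N : ℝ)
    (hN : N = (1 - (p : ℝ) ^ (-α)) / (1 - (p : ℝ)⁻¹) +
      (1 - (p : ℝ)⁻¹) / ((p : ℝ) ^ (α - 2) - 1))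
    (fst : ℚ_[p] → ℝ)
    (hfst : ∀ x : ℚ_[p], fst x =
      N⁻¹ * ((1 - (p : ℝ) ^ (-α)) / (1 - (p : ℝ)⁻¹) * Omega ‖x‖ +
        ‖x‖ ^ (-α + 1) * (1 - Omega ‖x‖))) :
    (Integrable fst μ ∧ ∫ x : ℚ_[p], fst x ∂μ = 1) ∧
    ∀ x : ℚ_[p],
      Integrable
        (fun y : ℚ_[p] => (u y * fst y - u x * fst x) / ‖x - y‖ ^ (α + 1)) μ ∧
      ∫ y : ℚ_[p], (u y * fst y - u x * fst x) / ‖x - y‖ ^ (α + 1) ∂μ = 0 :=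
  padic_stationary_solution_general p μ hμ α b hα u hu N hN fst hfst
end

section
/- Let p be a prime and α > 2. Let δ : ℕ → ℝ be a sequence with 0 < δ_k < p − 1 for all k ≥ 1, δ_k → 0 as k → ∞, and suppose that for every k ≥ 1 the (absolutely convergent) series identity Σ_{i=1}^{∞} p^{−αi}/(p^{−k−1} + p^{−k−1}δ_k − p^{−i}) = −1/(p^{α−1} − 1) holds. Then liminf_{k→∞} p^{(α−2)k}·δ_k ≥ (1 − p⁻¹)(1 − p^{2−α}) and limsup_{k→∞} p^{(α−2)k}·δ_k ≤ 1 − p^{2−α}. -/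
open Filter Finset

private lemma rpow_nat_pow' {q : ℝ} (hq0 : 0 < q) (c : ℝ) (n : ℕ) :
    (q ^ c) ^ n = q ^ (c * (n : ℝ)) := by
  rw [← Real.rpow_natCast (q ^ c) n, ← Real.rpow_mul hq0.le]

private lemma rpow_add_eq {q : ℝ} (hq0 : 0 < q) {a b c : ℝ} (h : a + b = c) :
    q ^ a * q ^ b = q ^ c := by rw [← Real.rpow_add hq0, h]

private lemma geom_tsum_succ {r : ℝ} (h0 : 0 ≤ r) (h1 : r < 1) :
    ∑' i : ℕ, r ^ (i + 1) = r / (1 - r) := by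
  have : ∑' i : ℕ, r ^ i * r = (∑' i : ℕ, r ^ i) * r := tsum_mul_right
  simpa [pow_succ, tsum_geometric_of_lt_one h0 h1, div_eq_mul_inv, mul_comm]
    using this

private lemma geom_summable_succ {r : ℝ} (h0 : 0 ≤ r) (h1 : r < 1) :
    Summable (fun i : ℕ => r ^ (i + 1)) := by
  simpa [pow_succ] using (summable_geometric_of_lt_one h0 h1).mul_right r

private lemma key_term_identity (C A B P x : ℝ) (hBP : B * P = 1) (hPx : P - x ≠ 0) :
    C * (-(A * B) - A / (x - P)) = C * (A * B) * (x / (P - x)) := by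
  have hxP : x - P ≠ 0 := fun h => hPx (by linarith [sub_eq_zero.mp h])
  field_simp
  linear_combination (C*A*P - C*A*x) * hBP

set_option maxHeartbeats 1000000 in
/-- The key per-`k` estimate. -/
private lemma key_estimate (q : ℝ) (hq : 1 < q) (α : ℝ) (hα : 2 < α) (k : ℕ) (d : ℝ)
    (hd0 : 0 < d) (hd1 : d < q - 1)
    (hsum : Summable (fun i : ℕ => |q ^ (-α * ((i : ℝ) + 1)) /
        (q ^ (-(k : ℝ) - 1) + q ^ (-(k : ℝ) - 1) * d - q ^ (-((i : ℝ) + 1)))|))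
    (heq : (∑' i : ℕ, q ^ (-α * ((i : ℝ) + 1)) /
        (q ^ (-(k : ℝ) - 1) + q ^ (-(k : ℝ) - 1) * d - q ^ (-((i : ℝ) + 1)))) =
        -1 / (q ^ (α - 1) - 1)) :
    (q ^ (2-α) - (q ^ (2-α)) ^ (k+1)) / (1 - q ^ (2-α))
       - (1 + d) / (1 - q⁻¹) * (q ^ (2-α)) ^ (k+1) / (1 - q ^ (1-α))
      ≤ (q ^ (2-α)) ^ (k+1) / d ∧
    (q ^ (2-α)) ^ (k+1) / d ≤ (1 + d) / (1 - (1 + d)/q) * (q ^ (2-α) / (1 - q ^ (2-α))) := by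
  classical
  have hq0 : (0:ℝ) < q := lt_trans one_pos hq
  set r1 : ℝ := q ^ (1-α) with hr1_def
  set r2 : ℝ := q ^ (2-α) with hr2_def
  have hr1_pos : 0 < r1 := Real.rpow_pos_of_pos hq0 _
  have hr2_pos : 0 < r2 := Real.rpow_pos_of_pos hq0 _
  have hr1_lt : r1 < 1 := Real.rpow_lt_one_of_one_lt_of_neg hq (by linarith)
  have hr2_lt : r2 < 1 := Real.rpow_lt_one_of_one_lt_of_neg hq (by linarith)
  have hd1' : 1 + d < q := by linarith
  have hqinv : q⁻¹ < 1 := by rw [inv_lt_one_iff₀]; right; exact hq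
  have hqinv_pos : 0 < q⁻¹ := by positivity
  set K : ℝ := (1 + d) / (1 - (1 + d)/q) with hK_def
  set M : ℝ := (1 + d) / (1 - q⁻¹) with hM_def
  have hKden : 0 < 1 - (1 + d)/q := by
    rw [sub_pos, div_lt_one hq0]; exact hd1'
  have hK_pos : 0 < K := by rw [hK_def]; positivity
  have hM1 : 1 ≤ M := by
    rw [hM_def, le_div_iff₀ (by linarith)]; linarith
  -- notation
  set t : ℕ → ℝ := fun i => q ^ (-α * ((i : ℝ) + 1)) /
        (q ^ (-(k : ℝ) - 1) + q ^ (-(k : ℝ) - 1) * d - q ^ (-((i : ℝ) + 1))) with ht_def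
  set u : ℕ → ℝ := fun i => q ^ ((1-α) * ((i : ℝ) + 1)) with hu_def
  set v : ℕ → ℝ := fun i => if i = k then 0 else t i with hv_def
  set W : ℕ → ℝ := fun i => q ^ ((k : ℝ) + 1) * (-u i - v i) with hW_def
  set P : ℕ → ℝ := fun i => q ^ (-((i : ℝ) + 1)) with hP_def
  set x : ℝ := q ^ (-(k : ℝ) - 1) * (1 + d) with hx_def
  have hPpos : ∀ i, 0 < P i := fun i => Real.rpow_pos_of_pos hq0 _
  have hxpos : 0 < x := by
    have := Real.rpow_pos_of_pos hq0 (-(k:ℝ) - 1); positivity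
  -- sign facts
  have hlt : ∀ i, i < k → x < P i := by
    intro i hi
    have e : q ^ (-(k:ℝ)-1) * q ^ (1:ℝ) = q ^ (-(k:ℝ)) := rpow_add_eq hq0 (by ring)
    rw [Real.rpow_one] at e
    have h1 : x < q ^ (-(k:ℝ)) := by
      simp only [hx_def]; rw [← e]
      have := Real.rpow_pos_of_pos hq0 (-(k:ℝ) - 1)
      nlinarith
    have h2 : q ^ (-(k:ℝ)) ≤ P i := by
      rw [hP_def, Real.rpow_le_rpow_left_iff hq]
      have : (i:ℝ) + 1 ≤ (k:ℝ) := by exact_mod_cast Nat.succ_le_of_lt hi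
      linarith
    linarith
  have hPle : ∀ i, k < i → P i ≤ q ^ (-(k:ℝ) - 2) := by
    intro i hi
    rw [hP_def, Real.rpow_le_rpow_left_iff hq]
    have : (k:ℝ) + 1 ≤ (i:ℝ) := by exact_mod_cast Nat.succ_le_of_lt hi
    linarith
  have hxlow : q ^ (-(k:ℝ)-1) * (1 - q⁻¹) ≤ x - q ^ (-(k:ℝ) - 2) := by
    have e : q ^ (-(k:ℝ)-1) * q ^ (-1:ℝ) = q ^ (-(k:ℝ)-2) := rpow_add_eq hq0 (by ring)
    rw [Real.rpow_neg_one] at e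
    simp only [hx_def]; rw [← e]
    have := Real.rpow_pos_of_pos hq0 (-(k:ℝ) - 1)
    nlinarith
  have hgt : ∀ i, k < i → P i < x := by
    intro i hi
    have h1 := hPle i hi
    have h2 : 0 < q ^ (-(k:ℝ)-1) * (1 - q⁻¹) := by
      have := Real.rpow_pos_of_pos hq0 (-(k:ℝ) - 1)
      nlinarith
    linarith [hxlow]
  -- summability
  have ht_sum : Summable t := hsum.of_abs
  have hu_eq : ∀ i : ℕ, u i = r1 ^ (i+1) := by
    intro i
    rw [hr1_def, rpow_nat_pow' hq0, hu_def]
    push_cast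
    ring_nf
  have hu_sum : Summable u :=
    (geom_summable_succ hr1_pos.le hr1_lt).congr fun i => (hu_eq i).symm
  have hu_tsum : ∑' i, u i = 1 / (q ^ (α-1) - 1) := by
    have h1 : q ^ (α-1) * r1 = 1 := by
      rw [hr1_def, ← Real.rpow_add hq0]; norm_num
    have hgt1 : 1 < q ^ (α-1) := by
      rw [Real.one_lt_rpow_iff_of_pos hq0]; left; exact ⟨hq, by linarith⟩
    have hne : q ^ (α-1) - 1 ≠ 0 := by linarith
    have hne2 : 1 - r1 ≠ 0 := by linarith
    rw [tsum_congr hu_eq, geom_tsum_succ hr1_pos.le hr1_lt]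
    field_simp
    linear_combination h1
  have hv_sum : Summable v := by
    have h1 : Summable (fun i => if i = k then t i else 0) :=
      summable_of_ne_finset_zero (s := {k}) (by
        intro i hi; simp only [Finset.mem_singleton] at hi; simp [hi])
    exact (ht_sum.sub h1).congr fun i => by
      by_cases h : i = k <;> simp [hv_def, h]
  have hW_sum : Summable W := ((hu_sum.neg.sub hv_sum).mul_left _)
  -- the central identity : q^(k+1) * t k = ∑' W
  have e1 : ∑' i, t i = t k + ∑' i, v i := Summable.tsum_eq_add_tsum_ite ht_sum k
  have e2 : t k = -∑' i, u i - ∑' i, v i := by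
    rw [hu_tsum]
    simp only [ht_def] at heq
    rw [e1, neg_div] at heq
    linarith [heq]
  have e3 : q ^ ((k:ℝ)+1) * t k = ∑' i, W i := by
    have h : ∑' i, W i = q ^ ((k:ℝ)+1) * ∑' i, (-u i - v i) := by
      rw [hW_def, tsum_mul_left]
    rw [h, Summable.tsum_sub hu_sum.neg hv_sum, tsum_neg, e2]
  -- value of q^(k+1) * t k
  have hgval : q ^ ((k:ℝ)+1) * t k = r2 ^ (k+1) / d := by
    have htk : t k = q ^ (-α * ((k:ℝ)+1)) / (q ^ (-(k:ℝ) - 1) * d) := by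
      simp only [ht_def]
      have hexp : q ^ (-((k:ℝ)+1)) = q ^ (-(k:ℝ) - 1) := by congr 1; ring
      simp only [hexp]
      congr 1; ring
    have hA : q ^ ((k:ℝ)+1) * q ^ (-α*((k:ℝ)+1)) = q ^ (-(k:ℝ)-1) * q ^ ((2-α)*((k+1:ℕ):ℝ)) := by
      rw [← Real.rpow_add hq0, ← Real.rpow_add hq0]
      congr 1; push_cast; ring
    have hBne : q ^ (-(k:ℝ)-1) ≠ 0 := (Real.rpow_pos_of_pos hq0 _).ne'
    rw [htk, hr2_def, rpow_nat_pow' hq0, mul_div_assoc', hA,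
      mul_div_mul_left _ _ hBne]
  -- identity for the other terms
  have hWi : ∀ i, i ≠ k → W i = q ^ ((k:ℝ)+1) * u i * (x / (P i - x)) := by
    intro i hi
    have hPx : P i - x ≠ 0 := by
      rcases hi.lt_or_gt with h' | h'
      · exact ne_of_gt (sub_pos.mpr (hlt i h'))
      · exact ne_of_lt (sub_neg.mpr (hgt i h'))
    have hti : t i = q ^ (-α * ((i:ℝ)+1)) / (x - P i) := by
      simp only [ht_def]
      congr 1
      simp only [hx_def, hP_def]; ring
    have hui : u i = q ^ (-α * ((i:ℝ)+1)) * q ^ ((i:ℝ)+1) := by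
      simp only [hu_def]
      rw [← Real.rpow_add hq0]
      congr 1; ring
    have hPinv : q ^ ((i:ℝ)+1) * P i = 1 := by
      simp only [hP_def]
      rw [rpow_add_eq hq0 (by ring : ((i:ℝ)+1) + (-((i:ℝ)+1)) = (0:ℝ)), Real.rpow_zero]
    have hvi : v i = t i := by simp only [hv_def, if_neg hi]
    show q ^ ((k:ℝ)+1) * (-u i - v i) = q ^ ((k:ℝ)+1) * u i * (x / (P i - x))
    rw [hvi, hti, hui]
    exact key_term_identity _ _ _ _ _ hPinv hPx
  have hu_pos : ∀ i, 0 < u i := fun i => Real.rpow_pos_of_pos hq0 _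
  -- bounds for i < k
  have hWbnd : ∀ i, i < k → r2 ^ (i+1) ≤ W i ∧ W i ≤ r2 ^ (i+1) * K := by
    intro i hik
    set z : ℝ := q ^ ((i:ℝ) - (k:ℝ)) * (1 + d) with hz_def
    have hzq : 0 < q ^ ((i:ℝ) - (k:ℝ)) := Real.rpow_pos_of_pos hq0 _
    have hz_pos : 0 < z := by rw [hz_def]; positivity
    have hzb : z ≤ (1+d) / q := by
      have h1 : q ^ ((i:ℝ)-(k:ℝ)) ≤ q ^ (-1:ℝ) := by
        rw [Real.rpow_le_rpow_left_iff hq]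
        have : (i:ℝ) + 1 ≤ (k:ℝ) := by exact_mod_cast Nat.succ_le_of_lt hik
        linarith
      rw [Real.rpow_neg_one] at h1
      rw [hz_def, div_eq_mul_inv, mul_comm (1+d) q⁻¹]
      exact mul_le_mul_of_nonneg_right h1 (by linarith)
    have hzlt1 : z < 1 := by
      have : (1+d)/q < 1 := by rw [div_lt_one hq0]; exact hd1'
      linarith
    have h1z : 0 < 1 - z := by linarith
    have hPz : P i * z = x := by
      simp only [hP_def, hz_def, hx_def]
      rw [← mul_assoc, rpow_add_eq hq0
        (show (-((i:ℝ)+1)) + ((i:ℝ)-(k:ℝ)) = -(k:ℝ)-1 by ring)]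
    have hxPi : x / (P i - x) = z / (1 - z) := by
      rw [← hPz, show P i - P i * z = P i * (1-z) by ring]
      exact mul_div_mul_left _ _ (hPpos i).ne'
    have hqku : q ^ ((k:ℝ)+1) * u i * z = r2 ^ (i+1) * (1+d) := by
      simp only [hu_def, hz_def, hr2_def]
      rw [rpow_nat_pow' hq0, ← mul_assoc, ← Real.rpow_add hq0, ← Real.rpow_add hq0]
      congr 2
      push_cast; ring
    have hWval : W i = r2 ^ (i+1) * (1+d) / (1 - z) := by
      rw [hWi i (Nat.ne_of_lt hik), hxPi, ← mul_div_assoc, hqku]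
    constructor
    · rw [hWval, le_div_iff₀ h1z]
      have hp := pow_pos hr2_pos (i+1)
      nlinarith
    · rw [hWval, hK_def, ← mul_div_assoc]
      exact div_le_div_of_nonneg_left (by positivity) hKden (by linarith)
  -- tail bounds
  have hqk_u : ∀ j : ℕ, q ^ ((k:ℝ)+1) * u (j+k) = r2 ^ (k+1) * r1 ^ j := by
    intro j
    simp only [hu_def, hr1_def, hr2_def]
    rw [rpow_nat_pow' hq0, rpow_nat_pow' hq0, ← Real.rpow_add hq0, ← Real.rpow_add hq0]
    congr 1
    push_cast; ring
  have hWk : W k = -(r2 ^ (k+1)) := by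
    have h0 := hqk_u 0
    rw [zero_add, pow_zero, mul_one] at h0
    have hvk : v k = 0 := by simp [hv_def]
    simp only [hW_def]
    rw [hvk, sub_zero, mul_neg, h0]
  have htail_low : ∀ j : ℕ, -(M * r2 ^ (k+1) * r1 ^ j) ≤ W (j+k) := by
    intro j
    have haj := hqk_u j
    rcases Nat.eq_zero_or_pos j with hj | hj
    · subst hj
      rw [zero_add, pow_zero, hWk]
      have hp := pow_pos hr2_pos (k+1)
      nlinarith
    · have hne : j + k ≠ k := by omega
      have hik : k < j + k := by omega
      rw [hWi _ hne]
      have hPjk : P (j+k) < x := hgt _ hik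
      have hxP : 0 < x - P (j+k) := sub_pos.mpr hPjk
      have hxM : x / (x - P (j+k)) ≤ M := by
        have h1 : q ^ (-(k:ℝ)-1) * (1 - q⁻¹) ≤ x - P (j+k) := by
          linarith [hxlow, hPle _ hik]
        have h2 : 0 < q ^ (-(k:ℝ)-1) * (1 - q⁻¹) := by
          have := Real.rpow_pos_of_pos hq0 (-(k:ℝ)-1); nlinarith
        have h3 : x / (x - P (j+k)) ≤ x / (q ^ (-(k:ℝ)-1) * (1 - q⁻¹)) :=
          div_le_div_of_nonneg_left hxpos.le h2 h1
        have h4 : x / (q ^ (-(k:ℝ)-1) * (1 - q⁻¹)) = M := by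
          simp only [hx_def, hM_def]
          exact mul_div_mul_left _ _ (Real.rpow_pos_of_pos hq0 (-(k:ℝ)-1)).ne'
        linarith
      have h5 : x / (P (j+k) - x) = -(x / (x - P (j+k))) := by
        rw [show P (j+k) - x = -(x - P (j+k)) by ring, div_neg]
      have hp : (0:ℝ) ≤ r2^(k+1) * r1^j := by positivity
      have h6 : (r2^(k+1) * r1^j) * (x/(x-P (j+k))) ≤ (r2^(k+1)*r1^j) * M :=
        mul_le_mul_of_nonneg_left hxM hp
      calc -(M * r2^(k+1) * r1^j) = -((r2^(k+1)*r1^j)*M) := by ring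
        _ ≤ -((r2^(k+1)*r1^j)*(x/(x-P (j+k)))) := neg_le_neg h6
        _ = (r2^(k+1)*r1^j) * (x/(P (j+k)-x)) := by rw [h5]; ring
        _ = q ^ ((k:ℝ)+1) * u (j+k) * (x / (P (j+k) - x)) := by rw [haj]
  have htail_up : ∀ j : ℕ, W (j+k) ≤ 0 := by
    intro j
    rcases Nat.eq_zero_or_pos j with hj | hj
    · subst hj
      rw [zero_add, hWk]
      have hp := pow_pos hr2_pos (k+1)
      linarith
    · have hne : j + k ≠ k := by omega
      have hik : k < j + k := by omega
      rw [hWi _ hne]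
      have hPjk : P (j+k) < x := hgt _ hik
      have ha_pos : 0 < q ^ ((k:ℝ)+1) * u (j+k) :=
        mul_pos (Real.rpow_pos_of_pos hq0 _) (hu_pos _)
      have hdiv : x / (P (j+k) - x) ≤ 0 :=
        div_nonpos_of_nonneg_of_nonpos hxpos.le (by linarith)
      exact mul_nonpos_of_nonneg_of_nonpos ha_pos.le hdiv
  -- assembling
  have hsplit : ∑ i ∈ range k, W i + ∑' j, W (j+k) = ∑' i, W i :=
    Summable.sum_add_tsum_nat_add k hW_sum
  have hfin_low : ∑ i ∈ range k, (fun i => r2^(i+1)) i ≤ ∑ i ∈ range k, W i :=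
    Finset.sum_le_sum fun i hi => (hWbnd i (Finset.mem_range.mp hi)).1
  have hfin_up : ∑ i ∈ range k, W i ≤ ∑ i ∈ range k, r2^(i+1) * K :=
    Finset.sum_le_sum fun i hi => (hWbnd i (Finset.mem_range.mp hi)).2
  have hgeo : ∑ i ∈ range k, r2^(i+1) = (r2 - r2^(k+1)) / (1 - r2) := by
    have h := geom_sum_eq (ne_of_lt hr2_lt) k
    have h2 : ∑ i ∈ range k, r2^(i+1) = (∑ i ∈ range k, r2^i) * r2 := by
      rw [Finset.sum_mul]
      exact Finset.sum_congr rfl fun i _ => pow_succ r2 i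
    rw [h2, h]
    have hne : r2 - 1 ≠ 0 := by intro h'; rw [sub_eq_zero] at h'; exact (ne_of_lt hr2_lt) h'
    have hne2 : (1:ℝ) - r2 ≠ 0 := by intro h'; apply hne; linarith
    field_simp
    ring
  have hfin_up2 : ∑ i ∈ range k, r2^(i+1) * K ≤ r2 / (1 - r2) * K := by
    have hs : Summable (fun i : ℕ => r2^(i+1) * K) :=
      (geom_summable_succ hr2_pos.le hr2_lt).mul_right K
    have h1 : ∑ i ∈ range k, r2^(i+1) * K ≤ ∑' i : ℕ, r2^(i+1) * K :=
      Summable.sum_le_tsum (range k) (fun i _ => by positivity) hs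
    have h2 : ∑' i : ℕ, r2^(i+1) * K = r2 / (1-r2) * K := by
      rw [tsum_mul_right, geom_tsum_succ hr2_pos.le hr2_lt]
    linarith
  have htail_sum_low : -(M * r2^(k+1) * (1 - r1)⁻¹) ≤ ∑' j, W (j+k) := by
    have hs1 : Summable (fun j : ℕ => -(M * r2^(k+1) * r1 ^ j)) :=
      ((summable_geometric_of_lt_one hr1_pos.le hr1_lt).mul_left (M * r2^(k+1))).neg
    have hs2 : Summable (fun j : ℕ => W (j+k)) := (summable_nat_add_iff k).mpr hW_sum
    have h1 := Summable.tsum_le_tsum htail_low hs1 hs2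
    have h2 : ∑' j : ℕ, -(M * r2^(k+1) * r1 ^ j) = -(M * r2^(k+1) * (1-r1)⁻¹) := by
      rw [tsum_neg]
      congr 1
      rw [tsum_mul_left, tsum_geometric_of_lt_one hr1_pos.le hr1_lt]
    linarith [h1, h2.symm.le]
  have htail_sum_up : ∑' j, W (j+k) ≤ 0 := tsum_nonpos htail_up
  have hWtotal : ∑' i, W i = r2^(k+1)/d := by rw [← e3, hgval]
  constructor
  · have hM2 : M * r2^(k+1) / (1-r1) = M * r2^(k+1) * (1-r1)⁻¹ := div_eq_mul_inv _ _
    have hfl : ∑ i ∈ range k, r2^(i+1) ≤ ∑ i ∈ range k, W i := hfin_low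
    linarith [hfl, htail_sum_low, hgeo, hsplit, hWtotal, hM2]
  · have hc : r2/(1-r2) * K = K * (r2/(1-r2)) := mul_comm _ _
    linarith [hfin_up, htail_sum_up, hfin_up2, hsplit, hWtotal, hc]


/-- asymptotics of the pole errors `δ_k` for `α > 2`:
`(1-p⁻¹)(1-p^{2-α}) ≤ liminf p^{(α-2)k} δ_k` and `limsup p^{(α-2)k} δ_k ≤ 1 - p^{2-α}`. -/
theorem padic_delta_asymptotics_gt_two
    (p : ℕ) [Fact p.Prime] (α : ℝ) (hα : 2 < α)
    (δ : ℕ → ℝ)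
    (hδ : ∀ k : ℕ, 1 ≤ k → 0 < δ k ∧ δ k < (p : ℝ) - 1)
    (hδ0 : Tendsto δ atTop (nhds 0))
    (hsum : ∀ k : ℕ, 1 ≤ k → Summable (fun i : ℕ =>
      |(p : ℝ) ^ (-α * ((i : ℝ) + 1)) /
        ((p : ℝ) ^ (-(k : ℝ) - 1) + (p : ℝ) ^ (-(k : ℝ) - 1) * δ k -
          (p : ℝ) ^ (-((i : ℝ) + 1)))|))
    (heq : ∀ k : ℕ, 1 ≤ k →
      (∑' i : ℕ, (p : ℝ) ^ (-α * ((i : ℝ) + 1)) /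
        ((p : ℝ) ^ (-(k : ℝ) - 1) + (p : ℝ) ^ (-(k : ℝ) - 1) * δ k -
          (p : ℝ) ^ (-((i : ℝ) + 1)))) =
        -1 / ((p : ℝ) ^ (α - 1) - 1)) :
    (1 - (p : ℝ)⁻¹) * (1 - (p : ℝ) ^ (2 - α)) ≤
        liminf (fun k : ℕ => (p : ℝ) ^ ((α - 2) * k) * δ k) atTop ∧
    limsup (fun k : ℕ => (p : ℝ) ^ ((α - 2) * k) * δ k) atTop ≤
      1 - (p : ℝ) ^ (2 - α) := by
  have hq : (1:ℝ) < (p:ℝ) := by exact_mod_cast (Fact.out : p.Prime).one_lt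
  have hq0 : (0:ℝ) < (p:ℝ) := lt_trans one_pos hq
  set r1 : ℝ := (p:ℝ) ^ (1-α) with hr1_def
  set r2 : ℝ := (p:ℝ) ^ (2-α) with hr2_def
  have hr1_pos : 0 < r1 := Real.rpow_pos_of_pos hq0 _
  have hr2_pos : 0 < r2 := Real.rpow_pos_of_pos hq0 _
  have hr1_lt : r1 < 1 := Real.rpow_lt_one_of_one_lt_of_neg hq (by linarith)
  have hr2_lt : r2 < 1 := Real.rpow_lt_one_of_one_lt_of_neg hq (by linarith)
  have h1r2 : 0 < 1 - r2 := by linarith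
  have hpinv : (p:ℝ)⁻¹ < 1 := by rw [inv_lt_one_iff₀]; right; exact hq
  have hpinv_pos : 0 < (p:ℝ)⁻¹ := by positivity
  have hc_pos : 0 < r2/(1-r2) := div_pos hr2_pos h1r2
  -- the per-k bounds
  have key' : ∀ k : ℕ, 1 ≤ k →
      ((r2 - r2^(k+1)) / (1-r2) - (1 + δ k)/(1 - (p:ℝ)⁻¹) * r2^(k+1) / (1-r1)
          ≤ r2^(k+1) / δ k ∧
        r2^(k+1) / δ k ≤ (1 + δ k)/(1 - (1 + δ k)/(p:ℝ)) * (r2/(1-r2))) := fun k hk =>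
    key_estimate (p:ℝ) hq α hα k (δ k) (hδ k hk).1 (hδ k hk).2 (hsum k hk) (heq k hk)
  -- limits of the bounds
  have hr2pow : Tendsto (fun k : ℕ => r2^(k+1)) atTop (nhds 0) :=
    (tendsto_pow_atTop_nhds_zero_of_lt_one hr2_pos.le hr2_lt).comp (tendsto_add_atTop_nat 1)
  have hLb_t : Tendsto (fun k : ℕ => (r2 - r2^(k+1)) / (1-r2)
      - (1 + δ k)/(1 - (p:ℝ)⁻¹) * r2^(k+1) / (1-r1)) atTop (nhds (r2/(1-r2))) := by
    have h1 : Tendsto (fun k : ℕ => (r2 - r2^(k+1)) / (1-r2)) atTop (nhds ((r2 - 0)/(1-r2))) :=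
      (tendsto_const_nhds.sub hr2pow).div_const _
    have h2 : Tendsto (fun k : ℕ => (1 + δ k)/(1 - (p:ℝ)⁻¹) * r2^(k+1) / (1-r1)) atTop
        (nhds ((1 + 0)/(1 - (p:ℝ)⁻¹) * 0 / (1-r1))) :=
      (((tendsto_const_nhds.add hδ0).div_const _).mul hr2pow).div_const _
    have h3 := h1.sub h2
    simpa using h3
  have hUb_t : Tendsto (fun k : ℕ => (1 + δ k)/(1 - (1 + δ k)/(p:ℝ)) * (r2/(1-r2))) atTop
      (nhds ((1:ℝ)/(1 - (p:ℝ)⁻¹) * (r2/(1-r2)))) := by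
    have hnum : Tendsto (fun k : ℕ => 1 + δ k) atTop (nhds 1) := by
      simpa using (tendsto_const_nhds (x := (1:ℝ)) (f := atTop)).add hδ0
    have hden : Tendsto (fun k : ℕ => 1 - (1 + δ k)/(p:ℝ)) atTop (nhds (1 - 1/(p:ℝ))) :=
      tendsto_const_nhds.sub (hnum.div_const _)
    have hne : (1:ℝ) - 1/(p:ℝ) ≠ 0 := by
      have : 1/(p:ℝ) < 1 := by rw [div_lt_one hq0]; exact hq
      linarith
    have h4 := (hnum.div hden hne).mul_const (r2/(1-r2))
    simpa [one_div] using h4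
  -- limits of the reciprocals
  have hAt : Tendsto (fun k : ℕ => r2 / ((r2 - r2^(k+1)) / (1-r2)
      - (1 + δ k)/(1 - (p:ℝ)⁻¹) * r2^(k+1) / (1-r1))) atTop (nhds (1 - r2)) := by
    have h5 := (tendsto_const_nhds (x := r2) (f := (atTop : Filter ℕ))).div hLb_t hc_pos.ne'
    have hval : r2 / (r2/(1-r2)) = 1 - r2 := by
      rw [div_div_eq_mul_div, mul_comm, mul_div_assoc, div_self hr2_pos.ne', mul_one]
    rwa [hval] at h5
  have hUbne : (1:ℝ)/(1-(p:ℝ)⁻¹) * (r2/(1-r2)) ≠ 0 := by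
    have h6 : (0:ℝ) < 1 - (p:ℝ)⁻¹ := by linarith
    positivity
  have hBt : Tendsto (fun k : ℕ => r2 / ((1 + δ k)/(1-(1+δ k)/(p:ℝ)) * (r2/(1-r2)))) atTop
      (nhds ((1 - (p:ℝ)⁻¹) * (1 - r2))) := by
    have h5 := (tendsto_const_nhds (x := r2) (f := (atTop : Filter ℕ))).div hUb_t hUbne
    have h6 : (0:ℝ) < 1 - (p:ℝ)⁻¹ := by linarith
    have hval : r2 / ((1:ℝ)/(1-(p:ℝ)⁻¹) * (r2/(1-r2))) = (1-(p:ℝ)⁻¹)*(1-r2) := by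
      field_simp
    rwa [hval] at h5
  -- the reciprocal relation
  have hfk : ∀ k : ℕ, 1 ≤ k → (p:ℝ)^((α-2)*(k:ℝ)) * δ k = r2 / (r2^(k+1) / δ k) := by
    intro k hk
    have hdk : 0 < δ k := (hδ k hk).1
    have hgpos : 0 < r2^(k+1)/δ k := div_pos (pow_pos hr2_pos _) hdk
    rw [eq_div_iff hgpos.ne']
    have h1 : (p:ℝ)^((α-2)*(k:ℝ)) * r2^(k+1) = r2 := by
      rw [hr2_def, rpow_nat_pow' hq0,
        rpow_add_eq hq0 (show (α-2)*(k:ℝ) + (2-α)*((k+1:ℕ):ℝ) = 2-α by push_cast; ring)]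
    calc (p:ℝ)^((α-2)*(k:ℝ)) * δ k * (r2^(k+1)/δ k)
        = ((p:ℝ)^((α-2)*(k:ℝ)) * r2^(k+1)) * (δ k / δ k) := by ring
      _ = r2 := by rw [div_self hdk.ne', mul_one, h1]
  -- eventual bounds
  have hev1 : ∀ᶠ k : ℕ in atTop, r2/(1-r2)/2 < (r2 - r2^(k+1)) / (1-r2)
      - (1 + δ k)/(1 - (p:ℝ)⁻¹) * r2^(k+1) / (1-r1) :=
    hLb_t.eventually (eventually_gt_nhds (half_lt_self hc_pos))
  have hev_up : ∀ᶠ k : ℕ in atTop, (p:ℝ)^((α-2)*(k:ℝ)) * δ k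
      ≤ r2 / ((r2 - r2^(k+1)) / (1-r2) - (1 + δ k)/(1 - (p:ℝ)⁻¹) * r2^(k+1) / (1-r1)) := by
    filter_upwards [hev1, eventually_ge_atTop 1] with k h1 hk
    have h2 := (key' k hk).1
    have hLbpos : 0 < (r2 - r2^(k+1)) / (1-r2) - (1 + δ k)/(1 - (p:ℝ)⁻¹) * r2^(k+1) / (1-r1) := by
      linarith [hc_pos]
    rw [hfk k hk]
    exact div_le_div_of_nonneg_left hr2_pos.le hLbpos h2
  have hev_lo : ∀ᶠ k : ℕ in atTop, r2 / ((1 + δ k)/(1-(1+δ k)/(p:ℝ)) * (r2/(1-r2)))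
      ≤ (p:ℝ)^((α-2)*(k:ℝ)) * δ k := by
    filter_upwards [eventually_ge_atTop 1] with k hk
    have h2 := (key' k hk).2
    have hdk : 0 < δ k := (hδ k hk).1
    have hgpos : 0 < r2^(k+1)/δ k := div_pos (pow_pos hr2_pos _) hdk
    rw [hfk k hk]
    exact div_le_div_of_nonneg_left hr2_pos.le hgpos h2
  have hev_pos : ∀ᶠ k : ℕ in atTop, (0:ℝ) ≤ (p:ℝ)^((α-2)*(k:ℝ)) * δ k := by
    filter_upwards [eventually_ge_atTop 1] with k hk
    have hdk : 0 < δ k := (hδ k hk).1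
    positivity
  have hev_bnd : ∀ᶠ k : ℕ in atTop, (p:ℝ)^((α-2)*(k:ℝ)) * δ k ≤ r2/(r2/(1-r2)/2) := by
    filter_upwards [hev_up, hev1] with k h1 h2
    refine le_trans h1 (div_le_div_of_nonneg_left hr2_pos.le (half_pos hc_pos) h2.le)
  constructor
  · have h1 : liminf (fun k : ℕ => r2 / ((1 + δ k)/(1-(1+δ k)/(p:ℝ)) * (r2/(1-r2)))) atTop
        = (1 - (p:ℝ)⁻¹) * (1 - r2) := hBt.liminf_eq
    have h2 : liminf (fun k : ℕ => r2 / ((1 + δ k)/(1-(1+δ k)/(p:ℝ)) * (r2/(1-r2)))) atTop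
        ≤ liminf (fun k : ℕ => (p:ℝ)^((α-2)*(k:ℝ)) * δ k) atTop :=
      liminf_le_liminf hev_lo (hBt.isBoundedUnder_ge)
        (isCoboundedUnder_ge_of_eventually_le atTop hev_bnd)
    rw [← h1]
    exact h2
  · have h1 : limsup (fun k : ℕ => r2 / ((r2 - r2^(k+1)) / (1-r2)
        - (1 + δ k)/(1 - (p:ℝ)⁻¹) * r2^(k+1) / (1-r1))) atTop = 1 - r2 := hAt.limsup_eq
    have h2 : limsup (fun k : ℕ => (p:ℝ)^((α-2)*(k:ℝ)) * δ k) atTop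
        ≤ limsup (fun k : ℕ => r2 / ((r2 - r2^(k+1)) / (1-r2)
          - (1 + δ k)/(1 - (p:ℝ)⁻¹) * r2^(k+1) / (1-r1))) atTop :=
      limsup_le_limsup hev_up (isCoboundedUnder_le_of_eventually_le atTop hev_pos)
        (hAt.isBoundedUnder_le)
    rw [← h1]
    exact h2
end

section
/- Let p be a prime and α = 2. Let δ : ℕ → ℝ be a sequence with 0 < δ_k < p − 1 for all k ≥ 1, δ_k → 0 as k → ∞, and suppose that for every k ≥ 1 the (absolutely convergent) series identity Σ_{i=1}^{∞} p^{−2i}/(p^{−k−1} + p^{−k−1}δ_k − p^{−i}) = −1/(p − 1) holds. Then liminf_{k→∞} k·δ_k ≥ 1 − p⁻¹ and limsup_{k→∞} k·δ_k ≤ 1. -/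
open Filter

lemma key_bounds (y δ : ℝ) (k : ℕ) (hy0 : 0 < y) (hy2 : y ≤ 1/2)
    (hδ0 : 0 < δ) (hδ1 : y * (1 + δ) ≤ 3/4)
    (hsum : Summable (fun i : ℕ => |(y ^ (i+1)) ^ 2 / (y ^ (k+1) * (1 + δ) - y ^ (i+1))|))
    (heq : (∑' i : ℕ, (y ^ (i+1)) ^ 2 / (y ^ (k+1) * (1 + δ) - y ^ (i+1))) = -(y / (1 - y))) :
    (k : ℝ) - 6 ≤ 1 / δ ∧ 1 / δ ≤ (k : ℝ) + 6 := by
  have hy1 : y < 1 := by linarith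
  set x : ℝ := y ^ (k+1) * (1 + δ) with hxdef
  have hx0 : 0 < x := mul_pos (pow_pos hy0 _) (by linarith)
  have hlt : ∀ i : ℕ, i < k → x < y ^ (i+1) := by
    intro i hi
    calc x = y ^ k * (y * (1 + δ)) := by rw [hxdef, pow_succ]; ring
      _ ≤ y ^ k * (3/4) := mul_le_mul_of_nonneg_left hδ1 (pow_pos hy0 k).le
      _ < y ^ k := by nlinarith [pow_pos hy0 k]
      _ ≤ y ^ (i+1) := pow_le_pow_of_le_one hy0.le hy1.le (by omega)
  have hgt : ∀ i : ℕ, k ≤ i → y ^ (i+1) < x := by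
    intro i hi
    have h1 : y ^ (i+1) ≤ y ^ (k+1) := pow_le_pow_of_le_one hy0.le hy1.le (by omega)
    nlinarith [pow_pos hy0 (k+1)]
  have hne : ∀ i : ℕ, x - y ^ (i+1) ≠ 0 := by
    intro i
    rcases lt_or_ge i k with h | h
    · exact sub_ne_zero_of_ne (hlt i h).ne
    · exact sub_ne_zero_of_ne (hgt i h).ne'
  set t : ℕ → ℝ := fun i => (y ^ (i+1)) ^ 2 / (x - y ^ (i+1)) with htdef
  set f : ℕ → ℝ := fun i => y ^ (i+1) / (x - y ^ (i+1)) with hfdef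
  have ht : Summable t := summable_abs_iff.mp hsum
  have hgeo : Summable (fun i : ℕ => y ^ (i+1)) := by
    refine ((summable_geometric_of_lt_one hy0.le hy1).mul_left y).congr fun i => ?_
    rw [pow_succ]; ring
  have hgeos : ∑' i : ℕ, y ^ (i+1) = y / (1 - y) := by
    have h : (fun i : ℕ => y ^ (i + 1)) = fun i : ℕ => y * y ^ i := by
      funext i; rw [pow_succ]; ring
    rw [h, tsum_mul_left, tsum_geometric_of_lt_one hy0.le hy1, div_eq_mul_inv]
  have hid : ∀ i : ℕ, t i + y ^ (i+1) = x * f i := by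
    intro i
    have h := hne i
    simp only [htdef, hfdef]
    field_simp
    ring
  have hsf : Summable f := by
    refine ((ht.add hgeo).mul_left x⁻¹).congr fun i => ?_
    rw [hid i, ← mul_assoc, inv_mul_cancel₀ hx0.ne', one_mul]
  have htsf : ∑' i, f i = 0 := by
    have h1 : ∑' i, (t i + y ^ (i+1)) = 0 := by
      rw [Summable.tsum_add ht hgeo, heq, hgeos]; ring
    have h2 : ∑' i, x * f i = 0 := by
      rw [← h1]; exact tsum_congr fun i => (hid i).symm
    rw [tsum_mul_left] at h2
    exact (mul_eq_zero.mp h2).resolve_left hx0.ne'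
  have hfk : f k = 1 / δ := by
    have hyk : (y : ℝ) ^ (k+1) ≠ 0 := (pow_pos hy0 _).ne'
    simp only [hfdef, hxdef]
    rw [show y ^ (k+1) * (1 + δ) - y ^ (k+1) = y ^ (k+1) * δ by ring]
    rw [div_mul_eq_div_div, div_self hyk]
  classical
  set g : ℕ → ℝ := fun i => if i = k then 0 else f i with hgdef
  have hsg : Summable g := by
    have hss : Summable (fun i : ℕ => if i = k then f k else 0) :=
      summable_of_ne_finset_zero (s := {k}) (by intro b hb; simp only [Finset.mem_singleton] at hb; simp [hb])
    have hgeq : g = fun i => f i - (if i = k then f k else 0) := by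
      funext i
      by_cases h : i = k <;> simp [hgdef, h]
    rw [hgeq]; exact hsf.sub hss
  have hS : 1 / δ + ∑' i, g i = 0 := by
    have h := Summable.tsum_eq_add_tsum_ite hsf k
    rw [htsf, hfk] at h
    linarith [h.symm.le, h.le]
  -- termwise bounds
  have hb1 : ∀ i : ℕ, i < k → f i ≤ -1 := by
    intro i hi
    have hneg : x - y ^ (i+1) < 0 := by linarith [hlt i hi]
    simp only [hfdef]
    rw [div_le_iff_of_neg hneg]
    nlinarith
  have hb2 : ∀ i : ℕ, i < k → -1 - 3 * y ^ (k-1-i) ≤ f i := by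
    intro i hi
    have hneg : x - y ^ (i+1) < 0 := by linarith [hlt i hi]
    have hxe : x = y ^ (i+1) * y ^ (k-1-i) * (y * (1 + δ)) := by
      rw [hxdef, show y ^ (k+1) = y ^ (i+1) * y ^ (k-1-i) * y from by
        rw [← pow_add, ← pow_succ]; congr 1; omega]
      ring
    have hE1 : y ^ (k-1-i) ≤ 1 := pow_le_one₀ hy0.le hy1.le
    have hE0 : 0 < y ^ (k-1-i) := pow_pos hy0 _
    have ha0 : 0 < y ^ (i+1) := pow_pos hy0 _
    have hw0 : 0 < y * (1 + δ) := mul_pos hy0 (by linarith)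
    simp only [hfdef]
    rw [le_div_iff_of_neg hneg]
    nlinarith [mul_pos ha0 hE0, mul_pos (mul_pos ha0 hE0) hw0,
      mul_le_mul_of_nonneg_left hδ1 (mul_pos ha0 hE0).le]
  have hb3 : ∀ i : ℕ, 0 ≤ g (i + k) := by
    intro i
    rcases Nat.eq_zero_or_pos i with h | h
    · simp [hgdef, h]
    · have hik : i + k ≠ k := by omega
      have hp : 0 < f (i + k) := by
        simp only [hfdef]
        exact div_pos (pow_pos hy0 _) (by linarith [hgt (i + k) (by omega)])
      simp only [hgdef, if_neg hik]
      exact hp.le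
  have hb4 : ∀ i : ℕ, g (i + k) ≤ 2 * (1/2 : ℝ) ^ i := by
    intro i
    rcases Nat.eq_zero_or_pos i with h | h
    · simp [hgdef, h]
    · have hik : i + k ≠ k := by omega
      have hd : 0 < x - y ^ ((i+k)+1) := by linarith [hgt (i + k) (by omega)]
      simp only [hgdef, if_neg hik, hfdef]
      rw [div_le_iff₀ hd]
      have hae : y ^ ((i+k)+1) = y ^ (k+1) * y ^ i := by
        rw [← pow_add]; congr 1; omega
      have hyi : y ^ i ≤ (1/2 : ℝ) ^ i := pow_le_pow_left₀ hy0.le hy2 i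
      have hyi2 : (1/2 : ℝ) ^ i ≤ 1/2 := by
        calc (1/2 : ℝ) ^ i ≤ (1/2 : ℝ) ^ 1 := pow_le_pow_of_le_one (by norm_num) (by norm_num) h
        _ = 1/2 := pow_one _
      have hyk : (0:ℝ) < y ^ (k+1) := pow_pos hy0 _
      have hpi : (0:ℝ) < (1/2 : ℝ) ^ i := pow_pos (by norm_num) i
      rw [hae, hxdef]
      nlinarith [mul_le_mul_of_nonneg_left hyi hyk.le, mul_pos hyk hpi]
  -- assemble
  have hsplit : (∑ i ∈ Finset.range k, g i) + ∑' i, g (i + k) = ∑' i, g i :=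
    Summable.sum_add_tsum_nat_add k hsg
  have hfin_up : (∑ i ∈ Finset.range k, g i) ≤ -(k : ℝ) := by
    have h1 : ∀ i ∈ Finset.range k, g i ≤ -1 := by
      intro i hi
      have hik := Finset.mem_range.mp hi
      simp only [hgdef, if_neg (Nat.ne_of_lt hik)]
      exact hb1 i hik
    calc (∑ i ∈ Finset.range k, g i) ≤ ∑ _i ∈ Finset.range k, (-1 : ℝ) :=
        Finset.sum_le_sum h1
      _ = -(k : ℝ) := by simp
  have hfin_lo : -(k : ℝ) - 6 ≤ ∑ i ∈ Finset.range k, g i := by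
    have h1 : ∀ i ∈ Finset.range k, -1 - 3 * y ^ (k-1-i) ≤ g i := by
      intro i hi
      have hik := Finset.mem_range.mp hi
      simp only [hgdef, if_neg (Nat.ne_of_lt hik)]
      exact hb2 i hik
    have h2 : (∑ i ∈ Finset.range k, (-1 - 3 * y ^ (k-1-i))) ≤ ∑ i ∈ Finset.range k, g i :=
      Finset.sum_le_sum h1
    have h3 : (∑ i ∈ Finset.range k, (-1 - 3 * y ^ (k-1-i)))
        = -(k:ℝ) - 3 * ∑ i ∈ Finset.range k, y ^ (k-1-i) := by
      rw [Finset.sum_sub_distrib, Finset.mul_sum]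
      simp [Finset.mul_sum]
    have h4 : (∑ i ∈ Finset.range k, y ^ (k-1-i)) = ∑ i ∈ Finset.range k, y ^ i :=
      Finset.sum_range_reflect (fun i => y ^ i) k
    have h5 : (∑ i ∈ Finset.range k, y ^ i) ≤ (1 - y)⁻¹ := by
      have := Summable.sum_le_tsum (Finset.range k) (fun i _ => (pow_pos hy0 i).le)
        (summable_geometric_of_lt_one hy0.le hy1)
      rwa [tsum_geometric_of_lt_one hy0.le hy1] at this
    have h6 : (1 - y)⁻¹ ≤ 2 := by
      rw [inv_le_comm₀ (by linarith) (by norm_num)]; linarith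
    have h7 : (∑ i ∈ Finset.range k, y ^ (k-1-i)) ≤ 2 := by
      rw [h4]; linarith
    linarith
  have htail_lo : 0 ≤ ∑' i, g (i + k) := tsum_nonneg hb3
  have htail_up : ∑' i, g (i + k) ≤ 4 := by
    have hM : Summable (fun i : ℕ => 2 * (1/2 : ℝ) ^ i) :=
      (summable_geometric_of_lt_one (by norm_num) (by norm_num)).mul_left 2
    have h := Summable.tsum_le_tsum hb4 ((summable_nat_add_iff k).mpr hsg) hM
    rw [tsum_mul_left, tsum_geometric_of_lt_one (by norm_num) (by norm_num)] at h
    norm_num at h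
    linarith
  constructor <;> [skip; skip] <;> linarith [hsplit, hS]

/-- asymptotics of the pole errors `δ_k` for `α = 2`:
`1 - p⁻¹ ≤ liminf k·δ_k` and `limsup k·δ_k ≤ 1`. -/
theorem padic_delta_asymptotics_eq_two
    (p : ℕ) [Fact p.Prime]
    (δ : ℕ → ℝ)
    (hδ : ∀ k : ℕ, 1 ≤ k → 0 < δ k ∧ δ k < (p : ℝ) - 1)
    (hδ0 : Tendsto δ atTop (nhds 0))
    (hsum : ∀ k : ℕ, 1 ≤ k → Summable (fun i : ℕ =>
      |(p : ℝ) ^ (-2 * ((i : ℝ) + 1)) /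
        ((p : ℝ) ^ (-(k : ℝ) - 1) + (p : ℝ) ^ (-(k : ℝ) - 1) * δ k -
          (p : ℝ) ^ (-((i : ℝ) + 1)))|))
    (heq : ∀ k : ℕ, 1 ≤ k →
      (∑' i : ℕ, (p : ℝ) ^ (-2 * ((i : ℝ) + 1)) /
        ((p : ℝ) ^ (-(k : ℝ) - 1) + (p : ℝ) ^ (-(k : ℝ) - 1) * δ k -
          (p : ℝ) ^ (-((i : ℝ) + 1)))) =
        -1 / ((p : ℝ) - 1)) :
    1 - (p : ℝ)⁻¹ ≤ liminf (fun k : ℕ => (k : ℝ) * δ k) atTop ∧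
    limsup (fun k : ℕ => (k : ℝ) * δ k) atTop ≤ 1 := by
  have hp : p.Prime := Fact.out
  have hp2 : (2 : ℝ) ≤ (p : ℝ) := by exact_mod_cast hp.two_le
  have hp0 : (0 : ℝ) < (p : ℝ) := by linarith
  set y : ℝ := ((p : ℝ))⁻¹ with hydef
  have hy0 : 0 < y := inv_pos.mpr hp0
  have hy2 : y ≤ 1/2 := by
    rw [hydef, show (1/2 : ℝ) = 2⁻¹ by norm_num]
    exact inv_anti₀ (by norm_num) hp2
  -- rpow conversions
  have e2 : ∀ n : ℕ, (p : ℝ) ^ (-((n : ℝ) + 1)) = y ^ (n + 1) := by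
    intro n
    rw [show -((n : ℝ) + 1) = -(((n + 1 : ℕ) : ℝ)) by push_cast; ring,
      Real.rpow_neg hp0.le, Real.rpow_natCast, hydef, inv_pow]
  have e3 : ∀ n : ℕ, (p : ℝ) ^ (-(n : ℝ) - 1) = y ^ (n + 1) := by
    intro n
    rw [show -(n : ℝ) - 1 = -((n : ℝ) + 1) by ring]
    exact e2 n
  have e1 : ∀ n : ℕ, (p : ℝ) ^ (-2 * ((n : ℝ) + 1)) = (y ^ (n + 1)) ^ 2 := by
    intro n
    rw [show -2 * ((n : ℝ) + 1) = -(((2 * (n + 1) : ℕ) : ℝ)) by push_cast; ring,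
      Real.rpow_neg hp0.le, Real.rpow_natCast, hydef, ← inv_pow,
      show 2 * (n + 1) = (n + 1) * 2 by ring, pow_mul]
  have eden : ∀ k i : ℕ,
      (p : ℝ) ^ (-(k : ℝ) - 1) + (p : ℝ) ^ (-(k : ℝ) - 1) * δ k -
        (p : ℝ) ^ (-((i : ℝ) + 1)) = y ^ (k + 1) * (1 + δ k) - y ^ (i + 1) := by
    intro k i
    rw [e3 k, e2 i]; ring
  have erhs : (-1 : ℝ) / ((p : ℝ) - 1) = -(y / (1 - y)) := by
    have h1 : (p : ℝ) - 1 ≠ 0 := by linarith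
    have h2 : (p : ℝ) ≠ 0 := hp0.ne'
    have h3 : 1 - y ≠ 0 := by
      have : y < 1 := by linarith
      linarith
    rw [hydef] at h3 ⊢
    field_simp
  -- bounds, eventually
  have hev : ∀ᶠ k : ℕ in atTop, (k : ℝ) / ((k : ℝ) + 6) ≤ (k : ℝ) * δ k ∧
      (k : ℝ) * δ k ≤ (k : ℝ) / ((k : ℝ) + (-6)) := by
    have hsm : ∀ᶠ k in atTop, δ k < 1/2 :=
      Filter.Tendsto.eventually_lt_const (by norm_num) hδ0
    filter_upwards [hsm, eventually_ge_atTop 7] with k hk1 hk7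
    obtain ⟨hd0, hd1⟩ := hδ k (by omega)
    have hδ1 : y * (1 + δ k) ≤ 3/4 := by nlinarith
    have hsum' : Summable (fun i : ℕ =>
        |(y ^ (i+1)) ^ 2 / (y ^ (k+1) * (1 + δ k) - y ^ (i+1))|) := by
      refine (hsum k (by omega)).congr fun i => ?_
      rw [e1 i, eden k i]
    have heq' : (∑' i : ℕ, (y ^ (i+1)) ^ 2 / (y ^ (k+1) * (1 + δ k) - y ^ (i+1)))
        = -(y / (1 - y)) := by
      rw [← erhs, ← heq k (by omega)]
      exact tsum_congr fun i => by rw [e1 i, eden k i]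
    obtain ⟨hlo, hhi⟩ := key_bounds y (δ k) k hy0 hy2 hd0 hδ1 hsum' heq'
    have hk7' : (7:ℝ) ≤ (k:ℝ) := by exact_mod_cast hk7
    constructor
    · rw [div_le_iff₀ (by positivity : (0:ℝ) < (k:ℝ) + 6)]
      have h1 : 1 ≤ ((k:ℝ) + 6) * δ k := by
        have := (div_le_iff₀ hd0).mp hhi
        linarith
      nlinarith [Nat.cast_nonneg (α := ℝ) k]
    · have hk6 : (0:ℝ) < (k:ℝ) + (-6) := by linarith
      rw [le_div_iff₀ hk6]
      have h2 : ((k:ℝ) - 6) * δ k ≤ 1 := (le_div_iff₀ hd0).mp hlo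
      nlinarith [Nat.cast_nonneg (α := ℝ) k]
  have htend : Tendsto (fun k : ℕ => (k:ℝ) * δ k) atTop (nhds 1) := by
    refine tendsto_of_tendsto_of_tendsto_of_le_of_le'
      (tendsto_natCast_div_add_atTop (6 : ℝ)) (tendsto_natCast_div_add_atTop (-6 : ℝ))
      ?_ ?_
    · exact hev.mono fun k hk => hk.1
    · exact hev.mono fun k hk => hk.2
  constructor
  · rw [htend.liminf_eq]
    have h0 : (0:ℝ) ≤ (p:ℝ)⁻¹ := by positivity
    linarith
  · rw [htend.limsup_eq]
end

section
/- Let a > 1, b > 1 and k ≥ 0 be real numbers, and set c = ln a / ln b. For t ≥ 0 define S₁(t) = Σ_{i=1}^{∞} i^{−k}·a^{−i}·exp(−b^{−i}·t) (a convergent series). Then liminf_{t→∞} S₁(t)·t^{c}·(ln t)^{k} ≥ a^{−1}·(ln b)^{k−1}·Γ(c) and limsup_{t→∞} S₁(t)·t^{c}·(ln t)^{k} ≤ a·(ln b)^{k−1}·Γ(c), where Γ denotes the (real) Gamma function. -/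
/-!
Write `f_T(x) = x^(-k) a^(-x) exp(-b^(-x) T)` (this is `seriesTerm a b k T x`), so that
`S₁(t) = ∑_{i ≥ 1} f_t(i)`, and let `c = log a / log b`, so that `a = b^c`. On `[i, i + 1]` the
factor `x^(-k) a^(-x)` decreases while `b^(-x)` drops by at most a factor `b`; hence
`∫_1^∞ f_{bt} ≤ S₁(t) ≤ f_t(1) + ∫_1^∞ f_{t/b}`.

The substitution `u = β t b^(-x)` gives
`t^c (log t)^k ∫_1^∞ f_{βt}(x) dx`
`  = β^(-c) (log b)^(k-1) ∫_0^{βt/b} (log t / log (βt/u))^k e^(-u) u^(c-1) du`.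
The ratio of logarithms tends to `1` and, for `u < βt/b`, is at most `1 + u / (β log b)`, so by
dominated convergence the right side tends to `β^(-c) (log b)^(k-1) Γ(c)`. The choices `β = b`
and `β = 1/b` give the constants `a⁻¹` and `a`, while `t^c (log t)^k f_t(1) → 0`.
-/

open Filter MeasureTheory Set Topology Real

theorem le_liminf_and_limsup_le_of_squeeze {α : Type*} {l : Filter α} [l.NeBot]
    {f g h : α → ℝ} {A B : ℝ} (hg : Tendsto g l (𝓝 A)) (hh : Tendsto h l (𝓝 B))
    (hgf : g ≤ᶠ[l] f) (hfh : f ≤ᶠ[l] h) :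
    A ≤ liminf f l ∧ limsup f l ≤ B := by
  have hf_le : IsBoundedUnder (· ≤ ·) l f := hh.isBoundedUnder_le.mono_le hfh
  have hf_ge : IsBoundedUnder (· ≥ ·) l f := hg.isBoundedUnder_ge.mono_ge hgf
  constructor
  · rw [← hg.liminf_eq]
    exact liminf_le_liminf hgf hg.isBoundedUnder_ge hf_le.isCoboundedUnder_ge
  · rw [← hh.limsup_eq]
    exact limsup_le_limsup hfh hf_ge.isCoboundedUnder_le hh.isBoundedUnder_le

section SumIntegralComparison

theorem iUnion_Ioc_add_natCast (x₀ : ℝ) : ⋃ n : ℕ, Ioc (x₀ + n) (x₀ + n + 1) = Ioi x₀ := by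
  refine Subset.antisymm (iUnion_subset fun n x hx => ?_) fun x (hx : x₀ < x) => ?_
  · have : (0 : ℝ) ≤ n := n.cast_nonneg
    exact lt_of_le_of_lt (by linarith) hx.1
  · have hpos : 0 < ⌈x - x₀⌉₊ := Nat.ceil_pos.mpr (sub_pos.mpr hx)
    have hle := Nat.le_ceil (x - x₀)
    have hlt := Nat.ceil_lt_add_one (sub_nonneg.mpr hx.le)
    refine mem_iUnion.2 ⟨⌈x - x₀⌉₊ - 1, ?_, ?_⟩ <;> push_cast [Nat.cast_pred hpos] <;> linarith

theorem hasSum_integral_Ioc_add_nat {E : Type*} [NormedAddCommGroup E] [NormedSpace ℝ E]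
    {f : ℝ → E} {x₀ : ℝ} (hf : IntegrableOn f (Ioi x₀)) :
    HasSum (fun n : ℕ => ∫ x in Ioc (x₀ + n) (x₀ + n + 1), f x) (∫ x in Ioi x₀, f x) := by
  have hmono : Monotone fun n : ℕ => x₀ + n := fun m n h => by simpa using h
  rw [← iUnion_Ioc_add_natCast x₀] at hf ⊢
  simpa [add_assoc] using hasSum_integral_iUnion (fun n => measurableSet_Ioc)
    hmono.pairwise_disjoint_on_Ioc_succ (by simpa [add_assoc] using hf)

variable {f : ℝ → ℝ} {y C : ℝ}

theorem setIntegral_Ioc_add_one_le (hf : IntegrableOn f (Ioc y (y + 1)))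
    (h : ∀ x ∈ Ioc y (y + 1), f x ≤ C) : ∫ x in Ioc y (y + 1), f x ≤ C := by
  calc ∫ x in Ioc y (y + 1), f x ≤ ∫ _ in Ioc y (y + 1), C :=
        setIntegral_mono_on hf (integrableOn_const measure_Ioc_lt_top.ne) measurableSet_Ioc h
    _ = C := by simp

theorem le_setIntegral_Ioc_add_one (hf : IntegrableOn f (Ioc y (y + 1)))
    (h : ∀ x ∈ Ioc y (y + 1), C ≤ f x) : C ≤ ∫ x in Ioc y (y + 1), f x := by
  calc C = ∫ _ in Ioc y (y + 1), C := by simp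
    _ ≤ ∫ x in Ioc y (y + 1), f x :=
        setIntegral_mono_on (integrableOn_const measure_Ioc_lt_top.ne) hf measurableSet_Ioc h

end SumIntegralComparison

section ChangeOfVariables

variable {b T : ℝ}

theorem image_mul_rpow_neg_Ioi (hb : 1 < b) (hT : 0 < T) (x₀ : ℝ) :
    (fun x => T * b ^ (-x)) '' Ioi x₀ = Ioo 0 (T * b ^ (-x₀)) := by
  refine Subset.antisymm ?_ fun u hu => ?_
  · rintro _ ⟨x, hx, rfl⟩
    exact ⟨by positivity, mul_lt_mul_of_pos_left
      (rpow_lt_rpow_of_exponent_lt hb (neg_lt_neg hx)) hT⟩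
  · have hu' : 0 < u / T := div_pos hu.1 hT
    refine ⟨-logb b (u / T), ?_, ?_⟩
    · rw [mem_Ioi, lt_neg, logb_lt_iff_lt_rpow hb hu', div_lt_iff₀' hT]
      exact hu.2
    · simp only [neg_neg, rpow_logb (zero_lt_one.trans hb) hb.ne' hu']
      field_simp

theorem integral_Ioi_comp_mul_rpow_neg {E : Type*} [NormedAddCommGroup E] [NormedSpace ℝ E]
    (hb : 1 < b) (hT : 0 < T) (x₀ : ℝ) (g : ℝ → E) :
    ∫ x in Ioi x₀, (log b * (T * b ^ (-x))) • g (T * b ^ (-x)) =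
      ∫ u in Ioo 0 (T * b ^ (-x₀)), g u := by
  have hderiv : ∀ x ∈ Ioi x₀, HasDerivWithinAt (fun x => T * b ^ (-x))
      (-(log b * (T * b ^ (-x)))) (Ioi x₀) x := fun x _ => by
    have := ((hasDerivAt_neg x).const_rpow (zero_lt_one.trans hb)).const_mul T
    exact (this.congr_deriv (by ring)).hasDerivWithinAt
  have hanti : StrictAnti fun x : ℝ => T * b ^ (-x) := fun x y hxy =>
    mul_lt_mul_of_pos_left (rpow_lt_rpow_of_exponent_lt hb (neg_lt_neg hxy)) hT
  rw [← image_mul_rpow_neg_Ioi hb hT x₀,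
    integral_image_eq_integral_abs_deriv_smul measurableSet_Ioi hderiv hanti.injective.injOn]
  refine setIntegral_congr_fun measurableSet_Ioi fun x _ => ?_
  rw [abs_neg, abs_of_pos (by have := log_pos hb; positivity)]

end ChangeOfVariables

section DominatedConvergence

theorem one_add_rpow_le {y k : ℝ} (hy : 0 ≤ y) (hk : 0 ≤ k) :
    (1 + y) ^ k ≤ 2 ^ k * (1 + y ^ k) := by
  rcases le_total y 1 with h | h
  · calc (1 + y) ^ k ≤ 2 ^ k := rpow_le_rpow (by positivity) (by linarith) hk
      _ ≤ 2 ^ k * (1 + y ^ k) := le_mul_of_one_le_right (by positivity)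
          (le_add_of_nonneg_right (by positivity))
  · calc (1 + y) ^ k ≤ (2 * y) ^ k := rpow_le_rpow (by positivity) (by linarith) hk
      _ = 2 ^ k * y ^ k := mul_rpow (by norm_num) hy
      _ ≤ 2 ^ k * (1 + y ^ k) := by gcongr; linarith

theorem integrableOn_one_add_rpow_mul_GammaIntegrand {c k : ℝ} (hc : 0 < c) (hk : 0 ≤ k) :
    IntegrableOn (fun u => (1 + u ^ k) * (exp (-u) * u ^ (c - 1))) (Ioi 0) := by
  refine ((GammaIntegral_convergent hc).add
    (GammaIntegral_convergent (add_pos_of_pos_of_nonneg hc hk))).congr_fun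
    (fun u (hu : 0 < u) => ?_) measurableSet_Ioi
  rw [Pi.add_apply, show c + k - 1 = k + (c - 1) by ring, rpow_add hu]
  ring

variable {b β t u : ℝ}

theorem log_div_log_mul_div_mem_Icc (hb : 1 < b) (hβ : 0 < β) (ht : 1 ≤ t) (hu : 0 < u)
    (hub : u < β * t / b) : log t / log (β * t / u) ∈ Icc 0 (1 + u / (β * log b)) := by
  have hL := log_pos hb
  have hlogb : log b < log (β * t / u) := log_lt_log (zero_lt_one.trans hb)
    ((lt_div_iff₀ hu).2 (by rwa [lt_div_iff₀' (zero_lt_one.trans hb)] at hub))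
  have hD : 0 < log (β * t / u) := hL.trans hlogb
  have hsplit : log t = log (β * t / u) + log (u / β) := by
    rw [← log_mul (by positivity) (by positivity)]; congr 1; field_simp
  have hlog : log (u / β) ≤ u / β * (log (β * t / u) / log b) :=
    calc log (u / β) ≤ u / β := log_le_self (by positivity)
      _ ≤ u / β * (log (β * t / u) / log b) :=
          le_mul_of_one_le_right (by positivity) ((one_le_div hL).2 hlogb.le)
  refine ⟨div_nonneg (log_nonneg ht) hD.le, (div_le_iff₀ hD).2 ?_⟩
  calc log t ≤ log (β * t / u) + u / β * (log (β * t / u) / log b) := by linarith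
    _ = (1 + u / (β * log b)) * log (β * t / u) := by field_simp

theorem rpow_log_div_log_mul_div_le {k : ℝ} (hb : 1 < b) (hβ : 0 < β) (ht : 1 ≤ t)
    (hu : 0 < u) (hub : u < β * t / b) (hk : 0 ≤ k) :
    (log t / log (β * t / u)) ^ k ≤ (2 * (1 + (β * log b)⁻¹)) ^ k * (1 + u ^ k) := by
  obtain ⟨hnonneg, hle⟩ := log_div_log_mul_div_mem_Icc hb hβ ht hu hub
  have hD : 0 ≤ (β * log b)⁻¹ := by have := log_pos hb; positivity
  have hlin : 1 + u / (β * log b) ≤ (1 + (β * log b)⁻¹) * (1 + u) := by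
    rw [div_eq_inv_mul]; nlinarith
  calc (log t / log (β * t / u)) ^ k ≤ ((1 + (β * log b)⁻¹) * (1 + u)) ^ k :=
        rpow_le_rpow hnonneg (hle.trans hlin) hk
    _ = (1 + (β * log b)⁻¹) ^ k * (1 + u) ^ k := mul_rpow (by positivity) (by positivity)
    _ ≤ (1 + (β * log b)⁻¹) ^ k * (2 ^ k * (1 + u ^ k)) := by
        gcongr; exact one_add_rpow_le hu.le hk
    _ = (2 * (1 + (β * log b)⁻¹)) ^ k * (1 + u ^ k) := by
        rw [mul_rpow (by norm_num) (by positivity)]; ring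

theorem tendsto_log_div_log_mul_div (hβ : 0 < β) (hu : 0 < u) :
    Tendsto (fun t => log t / log (β * t / u)) atTop (𝓝 1) := by
  have h : Tendsto (fun t => (1 + log (β / u) / log t)⁻¹) atTop (𝓝 1) := by
    simpa using ((tendsto_const_nhds.div_atTop tendsto_log_atTop).const_add 1).inv₀
      (by norm_num : (1 : ℝ) + 0 ≠ 0)
  refine h.congr' ?_
  filter_upwards [eventually_gt_atTop 1] with t ht
  rw [one_add_div (log_pos ht).ne', inv_div, show β * t / u = t * (β / u) by ring,
    log_mul (by linarith) (by positivity)]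

theorem tendsto_integral_log_div_log_rpow_mul_GammaIntegrand {c k : ℝ} (hb : 1 < b)
    (hβ : 0 < β) (hc : 0 < c) (hk : 0 ≤ k) :
    Tendsto (fun t => ∫ u in Ioo 0 (β * t / b),
      (log t / log (β * t / u)) ^ k * (exp (-u) * u ^ (c - 1))) atTop (𝓝 (Gamma c)) := by
  set F : ℝ → ℝ → ℝ := fun t => (Ioo 0 (β * t / b)).indicator
    fun u => (log t / log (β * t / u)) ^ k * (exp (-u) * u ^ (c - 1))
  have hF : ∀ t, ∫ u in Ioo 0 (β * t / b),
      (log t / log (β * t / u)) ^ k * (exp (-u) * u ^ (c - 1)) = ∫ u in Ioi 0, F t u :=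
    fun t => by
      rw [setIntegral_indicator measurableSet_Ioo, inter_eq_right.2 Ioo_subset_Ioi_self]
  simp only [hF]
  rw [Gamma_eq_integral hc]
  refine tendsto_integral_filter_of_dominated_convergence
    (fun u => (2 * (1 + (β * log b)⁻¹)) ^ k * ((1 + u ^ k) * (exp (-u) * u ^ (c - 1))))
    (Eventually.of_forall fun t =>
      (Measurable.indicator (by fun_prop) measurableSet_Ioo).aestronglyMeasurable)
    ?_ ((integrableOn_one_add_rpow_mul_GammaIntegrand hc hk).const_mul _) ?_
  · filter_upwards [eventually_ge_atTop 1] with t ht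
    refine (ae_restrict_iff' measurableSet_Ioi).2 (Eventually.of_forall fun u (hu : 0 < u) => ?_)
    by_cases hmem : u ∈ Ioo 0 (β * t / b)
    · have hnonneg := (log_div_log_mul_div_mem_Icc hb hβ ht hu hmem.2).1
      simp only [F, indicator_of_mem hmem]
      rw [norm_of_nonneg (by positivity)]
      exact (mul_le_mul_of_nonneg_right (rpow_log_div_log_mul_div_le hb hβ ht hu hmem.2 hk)
        (by positivity)).trans_eq (mul_assoc _ _ _)
    · simp only [F, indicator_of_notMem hmem, norm_zero]
      have := rpow_nonneg hu.le k
      have := log_pos hb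
      positivity
  · refine (ae_restrict_iff' measurableSet_Ioi).2 (Eventually.of_forall fun u (hu : 0 < u) => ?_)
    have hcut : ∀ᶠ t in atTop, u < β * t / b :=
      ((tendsto_id.const_mul_atTop hβ).atTop_div_const (zero_lt_one.trans hb)).eventually_gt_atTop u
    have hlim := ((tendsto_log_div_log_mul_div hβ hu).rpow_const (p := k)
      (Or.inl one_ne_zero)).mul_const (exp (-u) * u ^ (c - 1))
    rw [one_rpow, one_mul] at hlim
    refine hlim.congr' ?_
    filter_upwards [hcut] with t ht
    simp only [F, indicator_of_mem (show u ∈ Ioo 0 (β * t / b) from ⟨hu, ht⟩)]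

end DominatedConvergence

noncomputable def seriesTerm (a b k t x : ℝ) : ℝ := x ^ (-k) * a ^ (-x) * exp (-b ^ (-x) * t)

section SeriesTerm

variable {a b k : ℝ}

theorem seriesTerm_nonneg (ha : 0 ≤ a) (t : ℝ) {x : ℝ} (hx : 0 ≤ x) :
    0 ≤ seriesTerm a b k t x := by
  unfold seriesTerm; positivity

theorem seriesTerm_le_seriesTerm (ha : 1 ≤ a) (hk : 0 ≤ k) {t t' x y : ℝ} (hx : 0 < x)
    (hxy : x ≤ y) (ht : b ^ (-x) * t' ≤ b ^ (-y) * t) :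
    seriesTerm a b k t y ≤ seriesTerm a b k t' x := by
  have h1 : y ^ (-k) ≤ x ^ (-k) := rpow_le_rpow_of_nonpos hx hxy (neg_nonpos.mpr hk)
  have h2 : a ^ (-y) ≤ a ^ (-x) := rpow_le_rpow_of_exponent_le ha (neg_le_neg hxy)
  have h3 : exp (-b ^ (-y) * t) ≤ exp (-b ^ (-x) * t') := exp_le_exp.mpr (by linarith)
  unfold seriesTerm
  gcongr

theorem seriesTerm_le_rpow_neg (ha : 0 ≤ a) (hb : 0 ≤ b) (hk : 0 ≤ k) {t x : ℝ} (ht : 0 ≤ t)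
    (hx : 1 ≤ x) :
    seriesTerm a b k t x ≤ a ^ (-x) := by
  have h1 : x ^ (-k) ≤ 1 := rpow_le_one_of_one_le_of_nonpos hx (neg_nonpos.mpr hk)
  have h2 : exp (-b ^ (-x) * t) ≤ 1 :=
    exp_le_one_iff.mpr (by have := rpow_nonneg hb (-x); nlinarith)
  calc seriesTerm a b k t x ≤ 1 * a ^ (-x) * 1 := by unfold seriesTerm; gcongr
    _ = a ^ (-x) := by ring

theorem summable_seriesTerm (ha : 1 < a) (hb : 0 ≤ b) (hk : 0 ≤ k) {t : ℝ} (ht : 0 ≤ t) :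
    Summable fun i : ℕ => seriesTerm a b k t (i + 1) := by
  have hgeom : Summable fun i : ℕ => a ^ (-((i : ℝ) + 1)) := by
    refine ((summable_geometric_of_lt_one (by positivity) (inv_lt_one_of_one_lt₀ ha)).mul_left
      a⁻¹).congr fun i => ?_
    rw [rpow_neg (by positivity), ← Nat.cast_succ, rpow_natCast, inv_pow, pow_succ]
    ring
  exact hgeom.of_nonneg_of_le (fun i => seriesTerm_nonneg (by linarith) t (by positivity))
    fun i => seriesTerm_le_rpow_neg (by linarith) hb hk ht (by simp)

theorem integrableOn_seriesTerm (ha : 1 < a) (hb : 0 ≤ b) (hk : 0 ≤ k) {t : ℝ} (ht : 0 ≤ t) :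
    IntegrableOn (seriesTerm a b k t) (Ioi 1) := by
  have hdom : IntegrableOn (fun x : ℝ => a ^ (-x)) (Ioi 1) := by
    refine (exp_neg_integrableOn_Ioi 1 (log_pos ha)).congr_fun (fun x _ => ?_) measurableSet_Ioi
    rw [rpow_def_of_pos (by linarith)]; ring_nf
  have hmeas : Measurable (seriesTerm a b k t) := by unfold seriesTerm; fun_prop
  refine hdom.mono' hmeas.aestronglyMeasurable
    ((ae_restrict_iff' measurableSet_Ioi).mpr (Eventually.of_forall fun x (hx : 1 < x) => ?_))
  rw [norm_of_nonneg (seriesTerm_nonneg (by linarith) t (by linarith))]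
  exact seriesTerm_le_rpow_neg (by linarith) hb hk ht hx.le

theorem integral_seriesTerm_le_tsum (ha : 1 < a) (hb : 1 < b) (hk : 0 ≤ k) {t : ℝ}
    (ht : 0 ≤ t) :
    ∫ x in Ioi 1, seriesTerm a b k (b * t) x ≤ ∑' i : ℕ, seriesTerm a b k t (i + 1) := by
  have hb0 : 0 ≤ b := by linarith
  have hint := integrableOn_seriesTerm ha hb0 hk (by positivity : 0 ≤ b * t)
  refine hasSum_le (fun i => ?_) (hasSum_integral_Ioc_add_nat hint)
    (summable_seriesTerm ha hb0 hk ht).hasSum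
  have hi : (0 : ℝ) ≤ i := i.cast_nonneg
  refine setIntegral_Ioc_add_one_le (hint.mono_set fun x hx => ?_) fun x ⟨hx1, hx2⟩ => ?_
  · exact lt_of_le_of_lt (by linarith) hx.1
  refine seriesTerm_le_seriesTerm ha.le hk (by positivity) (by linarith) ?_
  calc b ^ (-((i : ℝ) + 1)) * t ≤ b ^ (-x + 1) * t := by
        gcongr
        · exact hb.le
        · linarith
    _ = b ^ (-x) * (b * t) := by rw [rpow_add_one (by positivity)]; ring

theorem tsum_seriesTerm_le (ha : 1 < a) (hb : 1 < b) (hk : 0 ≤ k) {t : ℝ} (ht : 0 ≤ t) :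
    ∑' i : ℕ, seriesTerm a b k t (i + 1) ≤
      seriesTerm a b k t 1 + ∫ x in Ioi 1, seriesTerm a b k (b⁻¹ * t) x := by
  have hb0 : 0 ≤ b := by linarith
  have hint := integrableOn_seriesTerm ha hb0 hk (by positivity : 0 ≤ b⁻¹ * t)
  have hsum := summable_seriesTerm ha hb0 hk ht
  rw [hsum.tsum_eq_zero_add, Nat.cast_zero, zero_add]
  refine add_le_add_right (hasSum_le (fun i => ?_) ((summable_nat_add_iff 1).mpr hsum).hasSum
    (hasSum_integral_Ioc_add_nat hint)) _
  have hi : (0 : ℝ) ≤ i := i.cast_nonneg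
  refine le_setIntegral_Ioc_add_one (hint.mono_set fun x hx => ?_) fun x ⟨hx1, hx2⟩ => ?_
  · exact lt_of_le_of_lt (by linarith) hx.1
  refine seriesTerm_le_seriesTerm ha.le hk (by linarith) (by push_cast; linarith) ?_
  calc b ^ (-x) * (b⁻¹ * t) = b ^ (-x - 1) * t := by rw [rpow_sub_one (by positivity)]; ring
    _ ≤ b ^ (-(((i + 1 : ℕ) : ℝ) + 1)) * t := by
        gcongr
        · exact hb.le
        · push_cast; linarith

theorem tendsto_rpow_mul_log_rpow_mul_integral_seriesTerm {β : ℝ} (ha : 1 < a) (hb : 1 < b)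
    (hk : 0 ≤ k) (hβ : 0 < β) :
    Tendsto (fun t => t ^ logb b a * log t ^ k * ∫ x in Ioi 1, seriesTerm a b k (β * t) x)
      atTop (𝓝 (β ^ (-logb b a) * log b ^ (k - 1) * Gamma (logb b a))) := by
  set c := logb b a
  have hb0 : 0 < b := zero_lt_one.trans hb
  have hL := log_pos hb
  have hc : 0 < c := div_pos (log_pos ha) hL
  refine ((tendsto_integral_log_div_log_rpow_mul_GammaIntegrand hb hβ hc hk).const_mul
    (β ^ (-c) * log b ^ (k - 1))).congr' ?_
  filter_upwards [eventually_gt_atTop 1] with t ht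
  have hT : 0 < β * t := by positivity
  rw [← integral_const_mul, ← integral_const_mul, div_eq_mul_inv (β * t) b, ← rpow_neg_one b,
    ← integral_Ioi_comp_mul_rpow_neg hb hT 1]
  refine setIntegral_congr_fun measurableSet_Ioi fun x (hx : 1 < x) => ?_
  have hx0 : 0 < x := by linarith
  have hbx : 0 < b ^ (-x) := by positivity
  have hlog : log (β * t / (β * t * b ^ (-x))) = x * log b := by
    rw [div_mul_cancel_left₀ hT.ne', ← rpow_neg hb0.le, neg_neg, log_rpow hb0]
  have hpow : (β * t * b ^ (-x)) ^ (c - 1) = β ^ c * t ^ c * a ^ (-x) / (β * t * b ^ (-x)) := by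
    rw [rpow_sub_one (by positivity), mul_rpow hT.le hbx.le, mul_rpow hβ.le (by linarith),
      ← rpow_mul hb0.le, mul_comm (-x), rpow_mul hb0.le, rpow_logb hb0 hb.ne' (by linarith)]
  rw [smul_eq_mul, hlog, hpow, div_rpow (log_nonneg ht.le) (by positivity),
    mul_rpow hx0.le hL.le, rpow_sub_one hL.ne', rpow_neg hβ.le, seriesTerm, rpow_neg hx0.le]
  field_simp

theorem tendsto_rpow_mul_log_rpow_mul_seriesTerm_one (ha : 0 ≤ a) (hb : 0 < b) (hk : 0 ≤ k)
    (c : ℝ) : Tendsto (fun t => t ^ c * log t ^ k * seriesTerm a b k t 1) atTop (𝓝 0) := by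
  have hlim := (tendsto_rpow_mul_exp_neg_mul_atTop_nhds_zero (c + k) (b ^ (-1 : ℝ))
    (by positivity)).const_mul (a ^ (-1 : ℝ))
  rw [mul_zero] at hlim
  refine squeeze_zero' ?_ ?_ hlim
  · filter_upwards [eventually_ge_atTop 1] with t ht
    have := log_nonneg ht
    have := seriesTerm_nonneg (b := b) (k := k) ha t zero_le_one
    positivity
  · filter_upwards [eventually_ge_atTop 1] with t ht
    have hlog : log t ^ k ≤ t ^ k :=
      rpow_le_rpow (log_nonneg ht) ((log_le_sub_one_of_pos (by linarith)).trans (by linarith)) hk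
    have := seriesTerm_nonneg (b := b) (k := k) ha t zero_le_one
    calc t ^ c * log t ^ k * seriesTerm a b k t 1
        ≤ t ^ c * t ^ k * seriesTerm a b k t 1 := by gcongr
      _ = a ^ (-1 : ℝ) * (t ^ (c + k) * exp (-b ^ (-1 : ℝ) * t)) := by
          rw [seriesTerm, one_rpow, rpow_add (by linarith)]; ring

end SeriesTerm

/-- asymptotics of `S₁(t) = Σ_{i=1}^∞ i^{-k} a^{-i} exp(-b^{-i}t)` as
`t → ∞`: with `c = ln a / ln b`,
`a⁻¹ (ln b)^{k-1} Γ(c) ≤ liminf S₁(t) t^c (ln t)^k` and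
`limsup S₁(t) t^c (ln t)^k ≤ a (ln b)^{k-1} Γ(c)`. -/
theorem series_powerlaw_asymptotics
    (a b k c : ℝ) (ha : 1 < a) (hb : 1 < b) (hk : 0 ≤ k)
    (hc : c = Real.log a / Real.log b)
    (S : ℝ → ℝ)
    (hS : ∀ t : ℝ, 0 ≤ t → S t =
      ∑' i : ℕ, ((i : ℝ) + 1) ^ (-k) * a ^ (-((i : ℝ) + 1)) *
        Real.exp (-b ^ (-((i : ℝ) + 1)) * t)) :
    (∀ t : ℝ, 0 ≤ t → Summable (fun i : ℕ =>
      ((i : ℝ) + 1) ^ (-k) * a ^ (-((i : ℝ) + 1)) *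
        Real.exp (-b ^ (-((i : ℝ) + 1)) * t))) ∧
    a⁻¹ * Real.log b ^ (k - 1) * Real.Gamma c ≤
      liminf (fun t : ℝ => S t * t ^ c * Real.log t ^ k) atTop ∧
    limsup (fun t : ℝ => S t * t ^ c * Real.log t ^ k) atTop ≤
      a * Real.log b ^ (k - 1) * Real.Gamma c := by
  have hb0 : 0 < b := zero_lt_one.trans hb
  have hc' : logb b a = c := hc.symm
  have hbc : b ^ c = a := hc' ▸ rpow_logb hb0 hb.ne' (zero_lt_one.trans ha)
  have hlower := tendsto_rpow_mul_log_rpow_mul_integral_seriesTerm ha hb hk hb0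
  have hupper := (tendsto_rpow_mul_log_rpow_mul_seriesTerm_one (zero_le_one.trans ha.le) hb0 hk
    c).add (tendsto_rpow_mul_log_rpow_mul_integral_seriesTerm ha hb hk (inv_pos.2 hb0))
  rw [hc', rpow_neg hb0.le, hbc] at hlower
  rw [hc', zero_add, inv_rpow hb0.le, rpow_neg hb0.le, inv_inv, hbc] at hupper
  refine ⟨fun t ht => summable_seriesTerm ha hb0.le hk ht,
    le_liminf_and_limsup_le_of_squeeze hlower hupper ?_ ?_⟩
  all_goals
    filter_upwards [eventually_ge_atTop 1] with t ht
    have hw : 0 ≤ t ^ c * log t ^ k := by have := log_nonneg ht; positivity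
    have ht0 : 0 ≤ t := by linarith
    rw [show S t * t ^ c * log t ^ k = t ^ c * log t ^ k * S t by ring, hS t ht0]
  · exact mul_le_mul_of_nonneg_left (integral_seriesTerm_le_tsum ha hb hk ht0) hw
  · rw [← mul_add]
    exact mul_le_mul_of_nonneg_left (tsum_seriesTerm_le ha hb hk ht0) hw
end
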